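/- arXiv:2209.05958 — 13 statements merged into one kernel-verified Lean document; each statement's English description precedes it below -/
import Mathlib

section
/- Let n ≥ 3, let L_1,…,L_n be pairwise distinct complex lines through the origin of ℂ², and let a_1,…,a_n be nonzero real numbers (of arbitrary signs). If there exists a Dunkl inner product adapted to (L_i, a_i), then |a_j| < Σ_{i≠j} |a_i| for every j (strict inequality). -/
open Matrix Finset
open scoped ComplexOrder

/-- `H` is a Dunkl inner product adapted to the lines `L i` (1-dimensional complex
subspaces of `ℂ²`) with weights `a i`: `H` is positive definite (Hermitian) and there
are matrices `P i` which are the `H`-orthogonal projections onto the `H`-orthogonal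
complements of the `L i` (idempotent, kernel `L i`, `H`-self-adjoint) with
`∑ i, a i • P i` a scalar multiple of the identity. -/
def IsDunklInnerProduct {n : ℕ} (L : Fin n → Submodule ℂ (Fin 2 → ℂ))
    (a : Fin n → ℝ) (H : Matrix (Fin 2) (Fin 2) ℂ) : Prop :=
  H.PosDef ∧
  ∃ P : Fin n → Matrix (Fin 2) (Fin 2) ℂ, ∃ c : ℂ,
    (∀ i, P i * P i = P i) ∧
    (∀ i, LinearMap.ker (Matrix.toLin' (P i)) = L i) ∧
    (∀ i, H * P i = (P i)ᴴ * H) ∧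
    (∑ i, (a i : ℂ) • P i) = c • (1 : Matrix (Fin 2) (Fin 2) ℂ)

/-!
Conjugating by a square root `B` of `H` (`H = Bᴴ B`) turns the `P i` into orthogonal
projections `M i` of rank one, so the `2 M i - 1` are traceless Hermitian involutions of `ℂ²`.
Such an involution is a unit vector `v i` of `ℝ³` (its coordinates in the Pauli basis), distinct
lines give distinct vectors, and taking traces turns the Dunkl condition into
`∑ a i • v i = 0`. Pairing with `v j` and using Cauchy–Schwarz gives `|a j| ≤ ∑_{i ≠ j} |a i|`;
equality would force `v i = -v j` for all `i ≠ j`, impossible for the two distinct `v i` that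
exist when `n ≥ 3`.
-/

section UnitVectors

open scoped RealInnerProductSpace

variable {E : Type*} [NormedAddCommGroup E] [InnerProductSpace ℝ E]

theorem abs_real_inner_le_one_of_norm_eq_one {x y : E} (hx : ‖x‖ = 1) (hy : ‖y‖ = 1) :
    |⟪x, y⟫| ≤ 1 := by
  simpa [hx, hy] using abs_real_inner_le_norm x y

theorem eq_or_eq_neg_of_abs_real_inner_eq_one {x y : E} (hx : ‖x‖ = 1) (hy : ‖y‖ = 1)
    (h : |⟪x, y⟫| = 1) : x = y ∨ x = -y := by
  rcases (abs_eq zero_le_one).mp h with h1 | h1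
  · exact .inl ((inner_eq_one_iff_of_norm_eq_one hx hy).mp h1)
  · exact .inr ((inner_eq_neg_one_iff_of_norm_eq_one hx hy).mp h1)

variable {ι : Type*} [Fintype ι] [DecidableEq ι] {v : ι → E}

theorem exists_abs_inner_lt_one_of_injective (hv : Function.Injective v)
    (hnorm : ∀ i, ‖v i‖ = 1) (hcard : 3 ≤ Fintype.card ι) (j : ι) :
    ∃ i ∈ univ.erase j, |⟪v i, v j⟫| < 1 := by
  by_contra! h
  have hneg : ∀ i ∈ univ.erase j, v i = -v j := fun i hi =>
    (eq_or_eq_neg_of_abs_real_inner_eq_one (hnorm i) (hnorm j)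
      ((abs_real_inner_le_one_of_norm_eq_one (hnorm i) (hnorm j)).antisymm (h i hi))).resolve_left
      (hv.ne (ne_of_mem_erase hi))
  have hcard' : 1 < #(univ.erase j) := by
    rw [card_erase_of_mem (mem_univ j), card_univ]
    omega
  obtain ⟨i₁, hi₁, i₂, hi₂, hne⟩ := one_lt_card.mp hcard'
  exact hne (hv ((hneg i₁ hi₁).trans (hneg i₂ hi₂).symm))

theorem abs_lt_sum_abs_of_sum_smul_eq_zero (hv : Function.Injective v)
    (hnorm : ∀ i, ‖v i‖ = 1) (hcard : 3 ≤ Fintype.card ι) {a : ι → ℝ} (ha : ∀ i, a i ≠ 0)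
    (hsum : ∑ i, a i • v i = 0) (j : ι) : |a j| < ∑ i ∈ univ.erase j, |a i| := by
  have hpair : a j = -∑ i ∈ univ.erase j, a i * ⟪v i, v j⟫ := by
    have h0 := congrArg (⟪·, v j⟫) hsum
    simp only [sum_inner, real_inner_smul_left, inner_zero_left] at h0
    rw [← add_sum_erase _ _ (mem_univ j), real_inner_self_eq_norm_sq, hnorm j] at h0
    linarith
  obtain ⟨k, hk, hk_lt⟩ := exists_abs_inner_lt_one_of_injective hv hnorm hcard j
  calc |a j| ≤ ∑ i ∈ univ.erase j, |a i| * |⟪v i, v j⟫| := by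
        rw [hpair, abs_neg]
        simpa only [abs_mul] using abs_sum_le_sum_abs (fun i => a i * ⟪v i, v j⟫) _
    _ < ∑ i ∈ univ.erase j, |a i| := by
        refine sum_lt_sum (fun i _ => mul_le_of_le_one_right (abs_nonneg _)
          (abs_real_inner_le_one_of_norm_eq_one (hnorm i) (hnorm j))) ⟨k, hk, ?_⟩
        exact mul_lt_of_lt_one_right (abs_pos.mpr (ha k)) hk_lt

end UnitVectors

section Projections

variable {m : Type*} [Fintype m] [DecidableEq m]

theorem Matrix.PosDef.exists_isUnit_eq_conjTranspose_mul_self {𝕜 : Type*} [RCLike 𝕜]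
    {H : Matrix m m 𝕜} (hH : H.PosDef) : ∃ B, IsUnit B ∧ H = Bᴴ * B := by
  open scoped MatrixOrder in
  exact CStarAlgebra.isStrictlyPositive_iff_eq_star_mul_self.mp hH.isStrictlyPositive

theorem Matrix.trace_add_finrank_ker_of_isIdempotentElem {K : Type*} [Field K]
    {P : Matrix m m K} (hP : IsIdempotentElem P) :
    P.trace + Module.finrank K (LinearMap.ker P.toLin') = Fintype.card m := by
  have hP' : IsIdempotentElem P.toLin' := hP.map Matrix.toLinAlgEquiv'
  rw [← trace_toLin'_eq, (LinearMap.IsIdempotentElem.isProj_range _ hP').trace, ← Nat.cast_add,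
    LinearMap.finrank_range_add_finrank_ker, Module.finrank_fintype_fun_eq_card]

variable {R : Type*} [CommRing R] {B P : Matrix m m R}

theorem Matrix.isIdempotentElem_mul_mul_inv (hB : IsUnit B) (hP : IsIdempotentElem P) :
    IsIdempotentElem (B * P * B⁻¹) := by
  have hBd : IsUnit B.det := (isUnit_iff_isUnit_det B).mp hB
  simp only [IsIdempotentElem, mul_assoc, nonsing_inv_mul_cancel_left _ _ hBd]
  rw [← mul_assoc P P, hP.eq]

theorem Matrix.isHermitian_mul_mul_inv_of_mul_eq_conjTranspose_mul [StarRing R] (hB : IsUnit B)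
    (h : Bᴴ * B * P = Pᴴ * (Bᴴ * B)) : (B * P * B⁻¹).IsHermitian := by
  have hBd : IsUnit B.det := (isUnit_iff_isUnit_det B).mp hB
  have hBd' : IsUnit Bᴴ.det := (isUnit_iff_isUnit_det _).mp hB.star
  calc (B * P * B⁻¹)ᴴ = (Bᴴ)⁻¹ * (Pᴴ * (Bᴴ * B)) * B⁻¹ := by
        simp only [conjTranspose_mul, conjTranspose_nonsing_inv, mul_assoc,
          mul_nonsing_inv _ hBd, mul_one]
    _ = B * P * B⁻¹ := by
        rw [← h, mul_assoc Bᴴ, ← mul_assoc (Bᴴ)⁻¹, nonsing_inv_mul _ hBd', one_mul]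

end Projections

theorem IsStarProjection.isSelfAdjoint_two_mul_sub_one {R : Type*} [Ring R] [StarRing R]
    {p : R} (hp : IsStarProjection p) : IsSelfAdjoint (2 * p - 1) := by
  rw [two_mul]
  exact (hp.isSelfAdjoint.add hp.isSelfAdjoint).sub (.one R)

theorem IsStarProjection.two_mul_sub_one_mul_self {R : Type*} [Ring R] [StarRing R] {p : R}
    (hp : IsStarProjection p) : (2 * p - 1) * (2 * p - 1) = 1 := by
  simpa only [hp.isSelfAdjoint_two_mul_sub_one.star_eq] using
    (Unitary.mem_iff.mp hp.two_mul_sub_one_mem_unitary).1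

theorem Matrix.trace_two_mul_sub_one_of_trace_eq_one {M : Matrix (Fin 2) (Fin 2) ℂ}
    (h : M.trace = 1) : (2 * M - 1).trace = 0 := by
  rw [two_mul, trace_sub, trace_add, h, trace_one, Fintype.card_fin]
  norm_num

theorem Matrix.sum_smul_two_mul_sub_one_eq_zero {ι : Type*} [Fintype ι]
    {M : ι → Matrix (Fin 2) (Fin 2) ℂ} {a : ι → ℝ} {c : ℂ} (htr : ∀ i, (M i).trace = 1)
    (hsum : ∑ i, (a i : ℂ) • M i = c • 1) : ∑ i, a i • (2 * M i - 1) = 0 := by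
  have hscalar : ∑ i, a i • (2 * M i - 1) = (2 * c - ∑ i, (a i : ℂ)) • 1 := by
    simp only [← Complex.coe_smul, two_mul, smul_add, smul_sub, sum_add_distrib,
      sum_sub_distrib, hsum, ← sum_smul]
    module
  have htrace : (∑ i, a i • (2 * M i - 1)).trace = 0 := by
    simp [trace_sum, trace_two_mul_sub_one_of_trace_eq_one (htr _)]
  rw [hscalar, trace_smul, trace_one, Fintype.card_fin, smul_eq_mul, mul_eq_zero] at htrace
  rw [hscalar, htrace.resolve_right two_ne_zero, zero_smul]

theorem Matrix.IsHermitian.im_apply_self {n : Type*} {A : Matrix n n ℂ} (hA : A.IsHermitian)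
    (i : n) : (A i i).im = 0 :=
  Complex.conj_eq_iff_im.mp (hA.apply i i)

/-- Sends `x • σ_z + y • σ_x + z • σ_y` (Pauli matrices) to `(x, y, -z)`; a traceless Hermitian
`A` satisfies `A * A = ‖pauliCoords A‖ ^ 2 • 1`. -/
def pauliCoords : Matrix (Fin 2) (Fin 2) ℂ →ₗ[ℝ] EuclideanSpace ℝ (Fin 3) where
  toFun A := !₂[(A 0 0).re, (A 0 1).re, (A 0 1).im]
  map_add' A B := by ext i; fin_cases i <;> simp
  map_smul' r A := by ext i; fin_cases i <;> simp

theorem norm_pauliCoords_of_mul_self_eq_one {A : Matrix (Fin 2) (Fin 2) ℂ} (hA : A.IsHermitian)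
    (hsq : A * A = 1) : ‖pauliCoords A‖ = 1 := by
  have h00 := congrArg Complex.re (congrFun (congrFun hsq 0) 0)
  simp only [mul_apply, Fin.sum_univ_two, ← hA.apply 1 0, Complex.add_re, Complex.mul_re,
    hA.im_apply_self, Complex.star_def, Complex.conj_re, Complex.conj_im, one_apply_eq,
    Complex.one_re] at h00
  rw [← pow_eq_one_iff_of_nonneg (norm_nonneg _) two_ne_zero, EuclideanSpace.real_norm_sq_eq]
  simp [pauliCoords, Fin.sum_univ_three]
  linear_combination h00

theorem pauliCoords_injOn : Set.InjOn pauliCoords {A | A.IsHermitian ∧ A.trace = 0} := by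
  rintro A ⟨hA, hAtr⟩ B ⟨hB, hBtr⟩ h
  have h0 : ∀ k, pauliCoords A k = pauliCoords B k := fun k => by rw [h]
  have e00 : A 0 0 = B 0 0 := Complex.ext (h0 0) (by rw [hA.im_apply_self, hB.im_apply_self])
  have e01 : A 0 1 = B 0 1 := Complex.ext (h0 1) (h0 2)
  have e10 : A 1 0 = B 1 0 := by rw [← hA.apply 1 0, ← hB.apply 1 0, e01]
  have e11 : A 1 1 = B 1 1 := by
    rw [trace_fin_two] at hAtr hBtr
    linear_combination hAtr - hBtr - e00
  rw [eta_fin_two A, eta_fin_two B, e00, e01, e10, e11]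

theorem IsDunklInnerProduct.exists_isStarProjection {n : ℕ}
    {L : Fin n → Submodule ℂ (Fin 2 → ℂ)} {a : Fin n → ℝ} {H : Matrix (Fin 2) (Fin 2) ℂ}
    (hH : IsDunklInnerProduct L a H) (hL1 : ∀ i, Module.finrank ℂ (L i) = 1)
    (hLd : Function.Injective L) :
    ∃ (M : Fin n → Matrix (Fin 2) (Fin 2) ℂ) (c : ℂ), Function.Injective M ∧
      (∀ i, IsStarProjection (M i)) ∧ (∀ i, (M i).trace = 1) ∧
      ∑ i, (a i : ℂ) • M i = c • 1 := by
  obtain ⟨hPD, P, c, hidem, hker, hsa, hsum⟩ := hH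
  obtain ⟨B, hB, rfl⟩ := hPD.exists_isUnit_eq_conjTranspose_mul_self
  have hBd : IsUnit B.det := (isUnit_iff_isUnit_det B).mp hB
  have hBinv : IsUnit B⁻¹ := isUnit_nonsing_inv_iff.mpr hB
  refine ⟨fun i => B * P i * B⁻¹, c, fun i k h => hLd ?_, fun i => ⟨?_, ?_⟩, fun i => ?_, ?_⟩
  · rw [← hker i, ← hker k, hB.mul_left_cancel (hBinv.mul_right_cancel h)]
  · exact isIdempotentElem_mul_mul_inv hB (hidem i)
  · exact isHermitian_mul_mul_inv_of_mul_eq_conjTranspose_mul hB (hsa i)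
  · have h := trace_add_finrank_ker_of_isIdempotentElem (hidem i)
    rw [hker i, hL1 i, Fintype.card_fin] at h
    rw [trace_conj hB]
    linear_combination h
  · calc ∑ i, (a i : ℂ) • (B * P i * B⁻¹) = B * (∑ i, (a i : ℂ) • P i) * B⁻¹ := by
          simp only [Finset.mul_sum, Finset.sum_mul, Matrix.mul_smul, Matrix.smul_mul]
      _ = c • 1 := by rw [hsum, Matrix.mul_smul, mul_one, Matrix.smul_mul, mul_nonsing_inv _ hBd]

/-- If a Dunkl inner product adapted to `n ≥ 3` pairwise distinct complex lines
through the origin of `ℂ²` with nonzero real weights `a i` (of arbitrary signs)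
exists, then `|a j| < ∑_{i ≠ j} |a i|` for every `j`. -/
theorem dunkl_inner_product_implies_strict_triangle {n : ℕ} (hn : 3 ≤ n)
    (L : Fin n → Submodule ℂ (Fin 2 → ℂ))
    (hL1 : ∀ i, Module.finrank ℂ (L i) = 1) (hLd : Function.Injective L)
    (a : Fin n → ℝ) (ha : ∀ i, a i ≠ 0)
    (H : Matrix (Fin 2) (Fin 2) ℂ) (hH : IsDunklInnerProduct L a H) :
    ∀ j, |a j| < ∑ i ∈ Finset.univ.erase j, |a i| := by
  obtain ⟨M, c, hM_inj, hM, hM_tr, hM_sum⟩ := hH.exists_isStarProjection hL1 hLd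
  have hR_herm : ∀ i, (2 * M i - 1).IsHermitian := fun i =>
    (hM i).isSelfAdjoint_two_mul_sub_one
  have hR_tr : ∀ i, (2 * M i - 1).trace = 0 := fun i =>
    trace_two_mul_sub_one_of_trace_eq_one (hM_tr i)
  refine abs_lt_sum_abs_of_sum_smul_eq_zero (v := fun i => pauliCoords (2 * M i - 1))
    (fun i k h => hM_inj ?_)
    (fun i => norm_pauliCoords_of_mul_self_eq_one (hR_herm i) (hM i).two_mul_sub_one_mul_self)
    (by simpa using hn) ha ?_
  · have hR := pauliCoords_injOn ⟨hR_herm i, hR_tr i⟩ ⟨hR_herm k, hR_tr k⟩ h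
    rw [sub_left_inj, two_mul, two_mul, ← two_smul ℂ (M i), ← two_smul ℂ (M k)] at hR
    exact smul_right_injective _ two_ne_zero hR
  · simpa only [map_sum, map_smul, map_zero] using
      congrArg pauliCoords (sum_smul_two_mul_sub_one_eq_zero hM_tr hM_sum)
end

section
/- Let n ≥ 3 and let L_1,…,L_n be pairwise distinct complex lines through the origin of ℂ². Let W ⊆ (M_2(ℂ))ⁿ be the set of n-tuples (A_1,…,A_n) of 2×2 complex matrices such that L_i ⊆ ker A_i for every i and Σ_i A_i is a complex scalar multiple of the identity. Then W is a complex linear subspace of complex dimension 2n−3, and the complex-linear map W → ℂⁿ sending (A_1,…,A_n) to (tr A_1,…,tr A_n) is surjective. Consequently, for every (a_1,…,a_n) ∈ ℂⁿ the set of tuples in W with tr A_i = a_i for all i is a nonempty affine subspace of complex dimension n−3. -/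
/-!
Pick `v i` spanning `L i` and let `ℓ i = perpForm (v i)`, the linear form with kernel `L i`.
The matrices killing `L i` are exactly the `vecMulVec w (ℓ i)`, so the tuples with
`L i ⊆ ker A i` are parametrised injectively by `w ∈ (ℂ²)ⁿ`. For three distinct lines the
traceless matrices `vecMulVec (v i) (ℓ i)` span `sl₂`: in coordinates their determinant is,
up to sign, the product of the pairwise determinants of the `v i`. Together with one residue of
trace one this makes the sum map onto `M₂(ℂ)` surjective, so `W`, the preimage of the scalars,
has dimension `2n - 4 + 1`. To prescribe the traces, take any `w i` with `ℓ i (w i) = a i` and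
correct by multiples of `v i`, which do not change the traces, until the sum is the scalar
`(∑ a i / 2) • 1`. The fibres of the trace map are then translates of its kernel in `W`, of
dimension `(2n - 3) - n`.
-/

open Matrix Finset

variable {K : Type*} [Field K]

/-- The form `ℓ` of `dℓ/ℓ` for the line `K ∙ v`. -/
def perpForm (v : Fin 2 → K) : Fin 2 → K := ![v 1, -v 0]

lemma perpForm_dotProduct (v u : Fin 2 → K) : perpForm v ⬝ᵥ u = v 1 * u 0 - v 0 * u 1 := by
  simp [perpForm, dotProduct, Fin.sum_univ_two]
  ring

lemma perpForm_dotProduct_self (v : Fin 2 → K) : perpForm v ⬝ᵥ v = 0 := by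
  rw [perpForm_dotProduct]
  ring

lemma perpForm_perpForm (v : Fin 2 → K) : perpForm (perpForm v) = -v := by
  ext i
  fin_cases i <;> simp [perpForm]

lemma perpForm_eq_zero_iff {v : Fin 2 → K} : perpForm v = 0 ↔ v = 0 := by
  simp [perpForm, funext_iff, Fin.forall_fin_two, and_comm]

lemma mem_span_singleton_iff_perpForm_dotProduct_eq_zero {v u : Fin 2 → K} (hv : v ≠ 0) :
    u ∈ K ∙ v ↔ perpForm v ⬝ᵥ u = 0 := by
  rw [perpForm_dotProduct, Submodule.mem_span_singleton]
  constructor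
  · rintro ⟨c, rfl⟩
    simp only [Pi.smul_apply, smul_eq_mul]
    ring
  · intro h
    by_cases h0 : v 0 = 0
    · have h1 : v 1 ≠ 0 := fun h1 => hv (by ext i; fin_cases i <;> simp [h0, h1])
      refine ⟨u 1 / v 1, ?_⟩
      ext i
      fin_cases i <;> simp [div_mul_eq_mul_div, div_eq_iff h1]
      linear_combination -h
    · refine ⟨u 0 / v 0, ?_⟩
      ext i
      fin_cases i <;> simp [div_mul_eq_mul_div, div_eq_iff h0]
      linear_combination h

lemma perpForm_dotProduct_ne_zero {v u : Fin 2 → K} (hv : v ≠ 0) (hu : u ≠ 0)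
    (h : K ∙ v ≠ K ∙ u) : perpForm v ⬝ᵥ u ≠ 0 := fun h0 => h <| by
  have hle : K ∙ u ≤ K ∙ v := (Submodule.span_singleton_le_iff_mem _ _).mpr
    ((mem_span_singleton_iff_perpForm_dotProduct_eq_zero hv).mpr h0)
  exact (Submodule.eq_of_le_of_finrank_eq hle
    (by rw [finrank_span_singleton hu, finrank_span_singleton hv])).symm

lemma exists_vecMulVec_perpForm_eq {v : Fin 2 → K} (hv : v ≠ 0) {A : Matrix (Fin 2) (Fin 2) K}
    (hA : A *ᵥ v = 0) : ∃ w, vecMulVec w (perpForm v) = A := by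
  -- each row `r` of `A` satisfies `r ⬝ᵥ v = 0`, i.e. lies on the line `K ∙ perpForm v`
  have hrow : ∀ p, ∃ c : K, c • perpForm v = A p := fun p => by
    rw [← Submodule.mem_span_singleton, mem_span_singleton_iff_perpForm_dotProduct_eq_zero
      (perpForm_eq_zero_iff.not.mpr hv), perpForm_perpForm, neg_dotProduct, dotProduct_comm,
      neg_eq_zero]
    exact congrFun hA p
  choose w hw using hrow
  exact ⟨w, by ext p q; simp [vecMulVec_apply, ← hw p]⟩

lemma trace_eq_zero_mem_span_vecMulVec_perpForm {v : Fin 3 → Fin 2 → K}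
    (hv : Pairwise fun i j => perpForm (v i) ⬝ᵥ v j ≠ 0) {M : Matrix (Fin 2) (Fin 2) K}
    (hM : M.trace = 0) :
    M ∈ Submodule.span K (Set.range fun j => vecMulVec (v j) (perpForm (v j))) := by
  -- a traceless matrix is determined by these three entries
  let coords (N : Matrix (Fin 2) (Fin 2) K) : Fin 3 → K := ![N 0 0, N 0 1, N 1 0]
  let Q : Matrix (Fin 3) (Fin 3) K := of fun r j => coords (vecMulVec (v j) (perpForm (v j))) r
  have hQ : IsUnit Q.det := by
    have hdet : Q.det = -((perpForm (v 0) ⬝ᵥ v 1) * (perpForm (v 0) ⬝ᵥ v 2) *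
        (perpForm (v 1) ⬝ᵥ v 2)) := by
      simp only [perpForm_dotProduct]
      simp [det_fin_three, Q, coords, perpForm]
      ring
    rw [hdet, isUnit_iff_ne_zero, neg_ne_zero]
    exact mul_ne_zero (mul_ne_zero (hv (by decide)) (hv (by decide))) (hv (by decide))
  set t := Q⁻¹ *ᵥ coords M
  have hQt : Q *ᵥ t = coords M := by simp [t, mulVec_mulVec, mul_nonsing_inv _ hQ]
  rw [Submodule.mem_span_range_iff_exists_fun]
  refine ⟨t, ?_⟩
  have h0 := congrFun hQt 0
  have h1 := congrFun hQt 1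
  have h2 := congrFun hQt 2
  simp [Q, coords, mulVec, dotProduct, Fin.sum_univ_three, perpForm] at h0 h1 h2
  rw [trace_fin_two] at hM
  ext p q
  fin_cases p <;> fin_cases q <;> simp [Fin.sum_univ_three, perpForm]
  · linear_combination h0
  · linear_combination h1
  · linear_combination h2
  · linear_combination -h0 - hM

lemma exists_dotProduct_eq_one {ι : Type*} [Fintype ι] {ℓ : ι → K} (hℓ : ℓ ≠ 0) :
    ∃ u, ℓ ⬝ᵥ u = 1 := by
  classical
  obtain ⟨i, hi⟩ := Function.ne_iff.mp hℓ
  exact ⟨Pi.single i (ℓ i)⁻¹, by simpa using mul_inv_cancel₀ hi⟩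

lemma Submodule.exists_ne_zero_eq_span_singleton {V : Type*} [AddCommGroup V] [Module K V]
    {L : Submodule K V} (h : Module.finrank K L = 1) : ∃ v ≠ 0, L = K ∙ v := by
  obtain ⟨⟨v, hvL⟩, hv, hspan⟩ := finrank_eq_one_iff'.mp h
  refine ⟨v, by simpa using hv,
    le_antisymm (fun w hw => ?_) ((span_singleton_le_iff_mem _ _).mpr hvL)⟩
  obtain ⟨c, hc⟩ := hspan ⟨w, hw⟩
  exact mem_span_singleton.mpr ⟨c, congrArg Subtype.val hc⟩

section Fiber

variable {M N : Type*} [AddCommGroup M] [Module K M] [AddCommGroup N] [Module K N]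

lemma Submodule.finrank_inf_ker_add_finrank [FiniteDimensional K M] (W : Submodule K M)
    {f : M →ₗ[K] N} (hf : ∀ y, ∃ x ∈ W, f x = y) :
    Module.finrank K ↥(W ⊓ LinearMap.ker f) + Module.finrank K N = Module.finrank K W := by
  have hsurj : LinearMap.range (f.domRestrict W) = ⊤ :=
    LinearMap.range_eq_top.mpr fun y => by
      obtain ⟨x, hx, rfl⟩ := hf y
      exact ⟨⟨x, hx⟩, rfl⟩
  have := LinearMap.finrank_range_add_finrank_ker (f.domRestrict W)
  rwa [hsurj, finrank_top, LinearMap.ker_domRestrict, ← Submodule.finrank_map_subtype_eq,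
    Submodule.map_comap_subtype, add_comm] at this

lemma Submodule.fiber_eq_add_inf_ker {W : Submodule K M} (f : M →ₗ[K] N) {x₀ : M}
    (hx₀ : x₀ ∈ W) :
    {x | x ∈ W ∧ f x = f x₀} = {x | ∃ y ∈ W ⊓ LinearMap.ker f, x = x₀ + y} := by
  ext x
  constructor
  · rintro ⟨hx, hfx⟩
    exact ⟨x - x₀, ⟨W.sub_mem hx hx₀, by simp [hfx]⟩, by abel⟩
  · rintro ⟨y, ⟨hy, hfy⟩, rfl⟩
    exact ⟨W.add_mem hx₀ hy, by simpa using hfy⟩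

end Fiber

section Residues

variable {ι : Type*}

def residueMap (v : ι → Fin 2 → K) :
    (ι → Fin 2 → K) →ₗ[K] (ι → Matrix (Fin 2) (Fin 2) K) where
  toFun w i := vecMulVec (w i) (perpForm (v i))
  map_add' w w' := funext fun i => add_vecMulVec (w i) (w' i) _
  map_smul' c w := funext fun i => smul_vecMulVec c (w i) _

@[simp]
lemma residueMap_apply (v w : ι → Fin 2 → K) (i : ι) :
    residueMap v w i = vecMulVec (w i) (perpForm (v i)) := rfl

lemma residueMap_injective {v : ι → Fin 2 → K} (hv : ∀ i, v i ≠ 0) :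
    Function.Injective (residueMap v) := by
  rw [← LinearMap.ker_eq_bot, LinearMap.ker_eq_bot']
  intro w hw
  funext i
  simpa [perpForm_eq_zero_iff, hv i] using congrFun hw i

lemma mem_range_residueMap_iff {v : ι → Fin 2 → K} (hv : ∀ i, v i ≠ 0)
    {A : ι → Matrix (Fin 2) (Fin 2) K} :
    A ∈ LinearMap.range (residueMap v) ↔ ∀ i, A i *ᵥ v i = 0 := by
  constructor
  · rintro ⟨w, rfl⟩ i
    rw [residueMap_apply, vecMulVec_mulVec, perpForm_dotProduct_self, MulOpposite.op_zero,
      zero_smul]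
  · intro hA
    choose w hw using fun i => exists_vecMulVec_perpForm_eq (hv i) (hA i)
    exact ⟨w, funext hw⟩

variable [Fintype ι]

def residueSum (v : ι → Fin 2 → K) : (ι → Fin 2 → K) →ₗ[K] Matrix (Fin 2) (Fin 2) K :=
  (∑ i, LinearMap.proj i) ∘ₗ residueMap v

@[simp]
lemma residueSum_apply (v w : ι → Fin 2 → K) :
    residueSum v w = ∑ i, vecMulVec (w i) (perpForm (v i)) := by
  simp [residueSum]

lemma residueSum_single [DecidableEq ι] (v : ι → Fin 2 → K) (i : ι) (u : Fin 2 → K) :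
    residueSum v (Pi.single i u) = vecMulVec u (perpForm (v i)) := by
  rw [residueSum_apply, Finset.sum_eq_single i (fun j _ hj => by simp [hj]) (by simp)]
  simp

lemma exists_residueSum_eq_of_trace_eq_zero {v : ι → Fin 2 → K}
    (hd : Pairwise fun i j => perpForm (v i) ⬝ᵥ v j ≠ 0) (hι : 3 ≤ Fintype.card ι)
    {M : Matrix (Fin 2) (Fin 2) K} (hM : M.trace = 0) :
    ∃ t : ι → K, residueSum v (fun i => t i • v i) = M := by
  obtain ⟨e⟩ : Nonempty (Fin 3 ↪ ι) :=
    Function.Embedding.nonempty_of_card_le (by rwa [Fintype.card_fin])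
  have hM₃ : M ∈ Submodule.span K (Set.range fun j => vecMulVec (v (e j)) (perpForm (v (e j)))) :=
    trace_eq_zero_mem_span_vecMulVec_perpForm (hd.comp_of_injective e.injective) hM
  have hM' : M ∈ Submodule.span K (Set.range fun i => vecMulVec (v i) (perpForm (v i))) :=
    Submodule.span_mono (by rintro _ ⟨j, rfl⟩; exact ⟨e j, rfl⟩) hM₃
  obtain ⟨t, ht⟩ := (Submodule.mem_span_range_iff_exists_fun K).mp hM'
  exact ⟨t, by simpa using ht⟩

lemma residueSum_surjective {v : ι → Fin 2 → K} (hv : ∀ i, v i ≠ 0)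
    (hd : Pairwise fun i j => perpForm (v i) ⬝ᵥ v j ≠ 0) (hι : 3 ≤ Fintype.card ι) :
    Function.Surjective (residueSum v) := by
  classical
  intro M
  obtain ⟨i₀⟩ : Nonempty ι := Fintype.card_pos_iff.mp (by omega)
  obtain ⟨u, hu⟩ := exists_dotProduct_eq_one (perpForm_eq_zero_iff.not.mpr (hv i₀))
  have hX : (residueSum v (Pi.single i₀ u)).trace = 1 := by
    rw [residueSum_single, trace_vecMulVec, dotProduct_comm, hu]
  obtain ⟨t, ht⟩ := exists_residueSum_eq_of_trace_eq_zero hd hι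
    (M := M - M.trace • residueSum v (Pi.single i₀ u))
    (by rw [trace_sub, trace_smul, hX, smul_eq_mul, mul_one, sub_self])
  exact ⟨(fun i => t i • v i) + M.trace • (Pi.single i₀ u : ι → Fin 2 → K),
    by rw [map_add, map_smul, ht, sub_add_cancel]⟩

/-- The space `W` of the theorem, for the lines `K ∙ v i`. -/
def standardResidues (v : ι → Fin 2 → K) : Submodule K (ι → Matrix (Fin 2) (Fin 2) K) :=
  LinearMap.range (residueMap v) ⊓ (K ∙ 1).comap (∑ i, LinearMap.proj i)

lemma mem_standardResidues_iff {v : ι → Fin 2 → K} (hv : ∀ i, v i ≠ 0)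
    {A : ι → Matrix (Fin 2) (Fin 2) K} :
    A ∈ standardResidues v ↔ (∀ i, A i *ᵥ v i = 0) ∧ ∃ c : K, ∑ i, A i = c • 1 := by
  rw [standardResidues, Submodule.mem_inf, mem_range_residueMap_iff hv, Submodule.mem_comap,
    Submodule.mem_span_singleton]
  simp [eq_comm]

lemma standardResidues_eq_map (v : ι → Fin 2 → K) :
    standardResidues v = ((K ∙ 1).comap (residueSum v)).map (residueMap v) := by
  rw [residueSum, Submodule.comap_comp, Submodule.map_comap_eq, standardResidues]

lemma finrank_comap_residueSum {v : ι → Fin 2 → K} (hv : ∀ i, v i ≠ 0)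
    (hd : Pairwise fun i j => perpForm (v i) ⬝ᵥ v j ≠ 0) (hι : 3 ≤ Fintype.card ι) :
    Module.finrank K ((K ∙ 1).comap (residueSum v)) = 2 * Fintype.card ι - 3 := by
  have hsurj : Function.Surjective ((K ∙ 1).mkQ ∘ₗ residueSum v) :=
    (Submodule.mkQ_surjective _).comp (residueSum_surjective hv hd hι)
  have hrank := LinearMap.finrank_range_add_finrank_ker ((K ∙ 1).mkQ ∘ₗ residueSum v)
  rw [LinearMap.range_eq_top.mpr hsurj, finrank_top, LinearMap.ker_comp, Submodule.ker_mkQ]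
    at hrank
  have hquot := (K ∙ (1 : Matrix (Fin 2) (Fin 2) K)).finrank_quotient_add_finrank
  rw [finrank_span_singleton one_ne_zero] at hquot
  simp only [Module.finrank_matrix, Module.finrank_pi_fintype, Module.finrank_self,
    Fintype.card_fin, Finset.sum_const, Finset.card_univ, smul_eq_mul] at hrank hquot
  omega

lemma finrank_standardResidues {v : ι → Fin 2 → K} (hv : ∀ i, v i ≠ 0)
    (hd : Pairwise fun i j => perpForm (v i) ⬝ᵥ v j ≠ 0) (hι : 3 ≤ Fintype.card ι) :
    Module.finrank K (standardResidues v) = 2 * Fintype.card ι - 3 := by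
  rw [standardResidues_eq_map, ← LinearEquiv.finrank_eq
    (Submodule.equivMapOfInjective _ (residueMap_injective hv) _),
    finrank_comap_residueSum hv hd hι]

lemma exists_mem_standardResidues_trace_eq [NeZero (2 : K)] {v : ι → Fin 2 → K}
    (hv : ∀ i, v i ≠ 0) (hd : Pairwise fun i j => perpForm (v i) ⬝ᵥ v j ≠ 0)
    (hι : 3 ≤ Fintype.card ι) (a : ι → K) :
    ∃ A ∈ standardResidues v, ∀ i, (A i).trace = a i := by
  choose u hu using fun i => exists_dotProduct_eq_one (perpForm_eq_zero_iff.not.mpr (hv i))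
  set w : ι → Fin 2 → K := fun i => a i • u i
  set c := (residueSum v w).trace / 2
  -- adding multiples of `v i` keeps the traces `a i` and moves the sum to `c • 1`
  obtain ⟨t, ht⟩ := exists_residueSum_eq_of_trace_eq_zero hd hι
    (M := c • 1 - residueSum v w) (by
      rw [trace_sub, trace_smul, trace_one, Fintype.card_fin, smul_eq_mul, Nat.cast_ofNat,
        div_mul_cancel₀ _ two_ne_zero, sub_self])
  refine ⟨residueMap v (w + fun i => t i • v i), Submodule.mem_inf.mpr ⟨⟨_, rfl⟩, ?_⟩,
    fun i => ?_⟩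
  · rw [Submodule.mem_comap, ← LinearMap.comp_apply, ← residueSum, map_add, ht, add_sub_cancel]
    exact Submodule.smul_mem _ _ (Submodule.mem_span_singleton_self _)
  · rw [residueMap_apply, trace_vecMulVec, dotProduct_comm]
    simp only [w, Pi.add_apply, dotProduct_add, dotProduct_smul, hu i, perpForm_dotProduct_self,
      smul_eq_mul, mul_one, mul_zero, add_zero]

end Residues

/-- For `n ≥ 3` pairwise distinct complex lines `L i` through the origin of `ℂ²`,
the set `W` of tuples `(A 1, …, A n)` of `2×2` complex matrices with `L i ⊆ ker (A i)`
and `∑ i, A i` a scalar multiple of the identity is a complex subspace of dimension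
`2n − 3`; the trace map `W → ℂⁿ` is surjective; and each fiber of the trace map is a
nonempty affine subspace of complex dimension `n − 3`. -/
theorem standard_connection_space_dimension {n : ℕ} (hn : 3 ≤ n)
    (L : Fin n → Submodule ℂ (Fin 2 → ℂ))
    (hL1 : ∀ i, Module.finrank ℂ (L i) = 1) (hLd : Function.Injective L) :
    ∃ W : Submodule ℂ (Fin n → Matrix (Fin 2) (Fin 2) ℂ),
      (↑W : Set (Fin n → Matrix (Fin 2) (Fin 2) ℂ)) =
        {A | (∀ i, L i ≤ LinearMap.ker (Matrix.toLin' (A i))) ∧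
          ∃ c : ℂ, ∑ i, A i = c • (1 : Matrix (Fin 2) (Fin 2) ℂ)} ∧
      Module.finrank ℂ W = 2 * n - 3 ∧
      (∀ a : Fin n → ℂ, ∃ A ∈ W, ∀ i, (A i).trace = a i) ∧
      (∀ a : Fin n → ℂ, ∃ A₀ ∈ W, (∀ i, (A₀ i).trace = a i) ∧
        ∃ W₀ : Submodule ℂ (Fin n → Matrix (Fin 2) (Fin 2) ℂ),
          Module.finrank ℂ W₀ = n - 3 ∧
          {A | A ∈ W ∧ ∀ i, (A i).trace = a i} = {A | ∃ B ∈ W₀, A = A₀ + B}) := by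
  choose v hv hLv using fun i => Submodule.exists_ne_zero_eq_span_singleton (hL1 i)
  have hd : Pairwise fun i j => perpForm (v i) ⬝ᵥ v j ≠ 0 := fun i j hij =>
    perpForm_dotProduct_ne_zero (hv i) (hv j) (by rw [← hLv i, ← hLv j]; exact hLd.ne hij)
  have hcard : 3 ≤ Fintype.card (Fin n) := by rwa [Fintype.card_fin]
  have hrank := finrank_standardResidues hv hd hcard
  rw [Fintype.card_fin] at hrank
  have htrace := exists_mem_standardResidues_trace_eq hv hd hcard
  let traces : (Fin n → Matrix (Fin 2) (Fin 2) ℂ) →ₗ[ℂ] Fin n → ℂ :=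
    LinearMap.pi fun i => traceLinearMap _ ℂ ℂ ∘ₗ LinearMap.proj i
  have htraces (A : Fin n → Matrix (Fin 2) (Fin 2) ℂ) (a : Fin n → ℂ) :
      traces A = a ↔ ∀ i, (A i).trace = a i := funext_iff
  refine ⟨standardResidues v, ?_, hrank, htrace, fun a => ?_⟩
  · ext A
    simp [mem_standardResidues_iff hv, hLv, Submodule.span_singleton_le_iff_mem]
  · obtain ⟨A₀, hA₀, hA₀a⟩ := htrace a
    have hfibre := Submodule.finrank_inf_ker_add_finrank (standardResidues v) (f := traces)
      fun a => by simpa only [htraces] using htrace a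
    rw [hrank, Module.finrank_fin_fun] at hfibre
    refine ⟨A₀, hA₀, hA₀a, standardResidues v ⊓ LinearMap.ker traces, by omega, ?_⟩
    rw [← Submodule.fiber_eq_add_inf_ker traces hA₀, (htraces A₀ a).mpr hA₀a]
    simp only [htraces]
end

section
/- Let n ≥ 1 and a_1,…,a_n ∈ ℂ with a_i ∉ ℤ for all i, and set c = (a_1 + ⋯ + a_n)/2. Let M_1,…,M_n be 2×2 complex matrices such that for each i there exist linearly independent vectors u_i, v_i ∈ ℂ² with M_i u_i = u_i and M_i v_i = exp(2πi·a_i)·v_i (so M_i is diagonalizable with eigenvalues 1 and exp(2πi·a_i)), and such that M_1·M_2·⋯·M_n = exp(2πi·c)·Id. If for every subset I ⊆ {1,…,n} the number Σ_{i∈I} a_i − Σ_{i∉I} a_i is not an even integer, then there is no 1-dimensional complex subspace L ⊆ ℂ² with M_i(L) ⊆ L for all i; in particular the matrices M_1,…,M_n have no common eigenvector. -/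
/-!
A common invariant line is spanned by a common eigenvector `v`. Since `M i` is diagonalizable
with eigenvalues `1` and `exp(2πi a i)`, it acts on `v` by one of these, say by `exp(2πi a i)`
exactly for `i ∈ I`. Applying the product to `v` gives `exp(2πi ∑_{i∈I} a i) = exp(πi ∑ a i)`,
i.e. `∑_{i∈I} a i - ∑_{i∉I} a i ∈ 2ℤ`.
-/

open Matrix Finset Polynomial

namespace Module.End

variable {K V : Type*} [Field K] [AddCommGroup V] [Module K V]

theorem aeval_apply_of_apply_eq_smul (f : End K V) (p : K[X]) {x : V} {μ : K}
    (hx : f x = μ • x) : aeval f p x = p.eval μ • x := by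
  rcases eq_or_ne x 0 with rfl | hx0
  · simp
  · exact aeval_apply_of_hasEigenvector ⟨mem_eigenspace_iff.mpr hx, hx0⟩

theorem exists_eq_of_span_eigenvectors_eq_top {ι : Type*} [Fintype ι] (f : End K V)
    {b : ι → V} (hb : Submodule.span K (Set.range b) = ⊤) {α : ι → K}
    (hf : ∀ i, f (b i) = α i • b i) {μ : K} {v : V} (hv0 : v ≠ 0) (hv : f v = μ • v) :
    ∃ i, μ = α i := by
  -- `p` kills the spanning eigenvectors, hence all of `V`, so `p.eval μ = 0`.
  set p : K[X] := ∏ i, (X - C (α i))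
  have hp : aeval f p = 0 := by
    refine LinearMap.ext_on_range hb fun i => ?_
    rw [aeval_apply_of_apply_eq_smul f p (hf i), LinearMap.zero_apply,
      eval_prod, prod_eq_zero (mem_univ i) (by simp), zero_smul]
  have hpμ : p.eval μ • v = 0 := by
    rw [← aeval_apply_of_apply_eq_smul f p hv, hp, LinearMap.zero_apply]
  have hroot : ∏ i, (μ - α i) = 0 := by
    simpa [p, eval_prod] using (smul_eq_zero.mp hpμ).resolve_right hv0
  obtain ⟨i, -, hi⟩ := prod_eq_zero_iff.mp hroot
  exact ⟨i, by simpa [sub_eq_zero] using hi⟩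

end Module.End

theorem Matrix.eigenvalue_eq_or_eq_of_linearIndependent {K : Type*} [Field K]
    (A : Matrix (Fin 2) (Fin 2) K) {u w : Fin 2 → K} (huw : LinearIndependent K ![u, w])
    {α β : K} (hu : A *ᵥ u = α • u) (hw : A *ᵥ w = β • w)
    {μ : K} {v : Fin 2 → K} (hv0 : v ≠ 0) (hv : A *ᵥ v = μ • v) : μ = α ∨ μ = β := by
  have hspan := huw.span_eq_top_of_card_eq_finrank' (by simp)
  obtain ⟨i, hi⟩ := Module.End.exists_eq_of_span_eigenvectors_eq_top (toLin' A) hspan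
    (α := ![α, β]) (fun i => by fin_cases i; exacts [hu, hw]) hv0 hv
  fin_cases i
  · exact .inl hi
  · exact .inr hi

theorem Matrix.prod_ofFn_mulVec_eq_prod_smul {R m : Type*} [CommSemiring R] [Fintype m]
    [DecidableEq m] {n : ℕ} (A : Fin n → Matrix m m R) {μ : Fin n → R} {v : m → R}
    (hA : ∀ i, A i *ᵥ v = μ i • v) : (List.ofFn A).prod *ᵥ v = (∏ i, μ i) • v := by
  induction n with
  | zero => simp
  | succ n ih =>
    rw [List.ofFn_succ, List.prod_cons, ← mulVec_mulVec,
      ih (fun i => A i.succ) (fun i => hA i.succ), mulVec_smul, hA,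
      smul_smul, Fin.prod_univ_succ, mul_comm]

theorem Submodule.exists_common_eigenvector_of_finrank_eq_one {K V ι : Type*} [Field K]
    [AddCommGroup V] [Module K V] (f : ι → Module.End K V) {L : Submodule K V}
    (hL : Module.finrank K L = 1) (hf : ∀ i, ∀ x ∈ L, f i x ∈ L) :
    ∃ v : V, v ≠ 0 ∧ ∀ i, ∃ μ : K, f i v = μ • v := by
  obtain ⟨v, hv0, hv⟩ := finrank_eq_one_iff'.mp hL
  refine ⟨v, by simpa using hv0, fun i => ?_⟩
  obtain ⟨μ, hμ⟩ := hv ⟨f i v, hf i v v.2⟩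
  exact ⟨μ, (congrArg Subtype.val hμ).symm⟩

open Complex in
theorem prod_eq_exp_sum_filter_ne_one {ι : Type*} [Fintype ι] {a μ : ι → ℂ}
    (hμ : ∀ i, μ i = 1 ∨ μ i = exp (2 * Real.pi * I * a i)) :
    ∏ i, μ i = exp (2 * Real.pi * I * ∑ i ∈ univ.filter (μ · ≠ 1), a i) := by
  rw [← prod_filter_mul_prod_filter_not univ (μ · ≠ 1), mul_sum, exp_sum,
    prod_eq_one (s := univ.filter (¬ μ · ≠ 1)) (fun i hi => not_not.mp (mem_filter.mp hi).2),
    mul_one]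
  exact prod_congr rfl fun i hi => (hμ i).resolve_left (mem_filter.mp hi).2

open Complex in
theorem exists_int_sum_sub_sum_compl_eq_of_exp_eq {ι : Type*} [Fintype ι] [DecidableEq ι]
    (a : ι → ℂ) (s : Finset ι)
    (h : exp (2 * Real.pi * I * ∑ i ∈ s, a i) = exp (2 * Real.pi * I * ((∑ i, a i) / 2))) :
    ∃ k : ℤ, ∑ i ∈ s, a i - ∑ i ∈ sᶜ, a i = 2 * k := by
  obtain ⟨k, hk⟩ := exp_eq_exp_iff_exists_int.mp h
  have h2πI : 2 * Real.pi * I ≠ 0 := by simp [Real.pi_ne_zero, I_ne_zero]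
  have hsum : ∑ i ∈ s, a i = (∑ i, a i) / 2 + k :=
    mul_left_cancel₀ h2πI (by rw [hk]; ring)
  exact ⟨k, by linear_combination 2 * hsum - sum_compl_add_sum s a⟩

theorem no_common_invariant_line_general {n : ℕ} (a : Fin n → ℂ)
    (c : ℂ) (hc : c = (∑ i, a i) / 2)
    (M : Fin n → Matrix (Fin 2) (Fin 2) ℂ)
    (hM : ∀ i, ∃ u v : Fin 2 → ℂ, LinearIndependent ℂ ![u, v] ∧
      M i *ᵥ u = u ∧
      M i *ᵥ v = Complex.exp (2 * Real.pi * Complex.I * a i) • v)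
    (hprod : (List.ofFn M).prod =
      Complex.exp (2 * Real.pi * Complex.I * c) • (1 : Matrix (Fin 2) (Fin 2) ℂ))
    (hodd : ∀ I : Finset (Fin n), ∀ k : ℤ,
      (∑ i ∈ I, a i) - (∑ i ∈ Iᶜ, a i) ≠ 2 * (k : ℂ)) :
    (¬ ∃ L : Submodule ℂ (Fin 2 → ℂ), Module.finrank ℂ L = 1 ∧
        ∀ i, ∀ x ∈ L, M i *ᵥ x ∈ L) ∧
    (¬ ∃ v : Fin 2 → ℂ, v ≠ 0 ∧ ∀ i, ∃ μ : ℂ, M i *ᵥ v = μ • v) := by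
  have no_eigenvector : ¬ ∃ v : Fin 2 → ℂ, v ≠ 0 ∧ ∀ i, ∃ μ : ℂ, M i *ᵥ v = μ • v := by
    rintro ⟨v, hv0, hv⟩
    choose μ hμ using hv
    have hμ_cases : ∀ i, μ i = 1 ∨ μ i = Complex.exp (2 * Real.pi * Complex.I * a i) := by
      intro i
      obtain ⟨u, w, huw, hu, hw⟩ := hM i
      exact (M i).eigenvalue_eq_or_eq_of_linearIndependent huw (by rwa [one_smul]) hw hv0 (hμ i)
    have hprod_μ : ∏ i, μ i = Complex.exp (2 * Real.pi * Complex.I * c) := by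
      refine smul_left_injective ℂ hv0 ?_
      simp only [← prod_ofFn_mulVec_eq_prod_smul M hμ, hprod, smul_mulVec, one_mulVec]
    rw [prod_eq_exp_sum_filter_ne_one hμ_cases, hc] at hprod_μ
    obtain ⟨k, hk⟩ := exists_int_sum_sub_sum_compl_eq_of_exp_eq a _ hprod_μ
    exact hodd _ k hk
  refine ⟨fun ⟨L, hL, hML⟩ => no_eigenvector ?_, no_eigenvector⟩
  exact L.exists_common_eigenvector_of_finrank_eq_one (fun i => toLin' (M i)) hL hML

/-- Irreducibility of the holonomy: if `M 1, …, M n` are `2×2` complex matrices, each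
diagonalizable with eigenvalues `1` and `exp(2πi a i)` where `a i ∉ ℤ`, whose product is
`exp(2πi c)·Id` with `c = (∑ a i)/2`, and if for every subset `I` of the indices
`∑_{i∈I} a i − ∑_{i∉I} a i` is not an even integer, then no complex line of `ℂ²` is
invariant under all the `M i`; in particular they have no common eigenvector. -/
theorem no_common_invariant_line {n : ℕ} (hn : 1 ≤ n) (a : Fin n → ℂ)
    (ha : ∀ i, ∀ k : ℤ, a i ≠ (k : ℂ))
    (c : ℂ) (hc : c = (∑ i, a i) / 2)
    (M : Fin n → Matrix (Fin 2) (Fin 2) ℂ)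
    (hM : ∀ i, ∃ u v : Fin 2 → ℂ, LinearIndependent ℂ ![u, v] ∧
      M i *ᵥ u = u ∧
      M i *ᵥ v = Complex.exp (2 * Real.pi * Complex.I * a i) • v)
    (hprod : (List.ofFn M).prod =
      Complex.exp (2 * Real.pi * Complex.I * c) • (1 : Matrix (Fin 2) (Fin 2) ℂ))
    (hodd : ∀ I : Finset (Fin n), ∀ k : ℤ,
      (∑ i ∈ I, a i) - (∑ i ∈ Iᶜ, a i) ≠ 2 * (k : ℂ)) :
    (¬ ∃ L : Submodule ℂ (Fin 2 → ℂ), Module.finrank ℂ L = 1 ∧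
        ∀ i, ∀ x ∈ L, M i *ᵥ x ∈ L) ∧
    (¬ ∃ v : Fin 2 → ℂ, v ≠ 0 ∧ ∀ i, ∃ μ : ℂ, M i *ᵥ v = μ • v) :=
  no_common_invariant_line_general a c hc M hM hprod hodd
end

section
/- Let n ≥ 3 and let A_1,…,A_n be nonzero 2×2 complex matrices whose kernels ker A_i are 1-dimensional and pairwise distinct; write a_i = tr A_i, and suppose Σ_i A_i = c·Id for some c ∈ ℂ. Let X ∈ ℂ² be a nonzero vector such that for every i either A_i X = 0 or A_i X = a_i·X. Then there exists an index j such that a_j = Σ_{i≠j} a_i or −a_j = Σ_{i≠j} a_i. -/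
open Matrix Finset

/-
Apply `∑ i, A i = c • 1` to `X`. Since the kernels are distinct lines, at most one `A j`
annihilates `X`, and every other `A i` scales it by `a i`; hence `c` is the sum of the `a i`
over the indices with `A i *ᵥ X ≠ 0`. Taking traces gives `∑ i, a i = 2 * c`. If some `A j`
annihilates `X`, then `a j = c = ∑_{i ≠ j} a i`; otherwise `∑ i, a i = c = 2 * c` vanishes.
-/

section

variable {K m ι : Type*} [Field K] [Fintype m] [DecidableEq m]

theorem Matrix.eq_of_mulVec_eq_zero_of_pairwise_ker_ne {A : ι → Matrix m m K}
    (hker : ∀ i, Module.finrank K (LinearMap.ker (toLin' (A i))) = 1)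
    (hdist : Pairwise fun i j => LinearMap.ker (toLin' (A i)) ≠ LinearMap.ker (toLin' (A j)))
    {X : m → K} (hX : X ≠ 0) {i j : ι} (hi : A i *ᵥ X = 0) (hj : A j *ᵥ X = 0) : i = j := by
  have ker_eq {k : ι} (hk : A k *ᵥ X = 0) : LinearMap.ker (toLin' (A k)) = K ∙ X :=
    eq_span_singleton_of_mem_of_finrank_eq_one (hker k)
      (by rwa [LinearMap.mem_ker, toLin'_apply]) hX
  by_contra hij
  exact hdist hij ((ker_eq hi).trans (ker_eq hj).symm)

theorem Matrix.sum_trace_eq_of_sum_eq_smul_one {s : Finset ι} {A : ι → Matrix m m K} {c : K}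
    (hsum : ∑ i ∈ s, A i = c • 1) : ∑ i ∈ s, (A i).trace = Fintype.card m * c := by
  rw [← trace_sum, hsum, trace_smul, trace_one, smul_eq_mul, mul_comm]

theorem Matrix.sum_eigenvalues_eq_of_sum_eq_smul_one [Fintype ι] {A : ι → Matrix m m K}
    {a : ι → K} {c : K} (hsum : ∑ i, A i = c • 1) {X : m → K} (hX : X ≠ 0) (s : Finset ι)
    (heigen : ∀ i ∈ s, A i *ᵥ X = a i • X) (hkill : ∀ i ∉ s, A i *ᵥ X = 0) :
    ∑ i ∈ s, a i = c := by
  refine smul_left_injective K hX ?_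
  calc (∑ i ∈ s, a i) • X = ∑ i ∈ s, A i *ᵥ X := by
        rw [sum_smul]; exact (sum_congr rfl heigen).symm
    _ = ∑ i, A i *ᵥ X := sum_subset (subset_univ s) fun i _ hi => hkill i hi
    _ = c • X := by rw [← sum_mulVec, hsum, smul_mulVec, one_mulVec]

end

theorem constant_invariant_vector_residue_relation_general {n : ℕ} (hn : 3 ≤ n)
    (A : Fin n → Matrix (Fin 2) (Fin 2) ℂ)
    (hker : ∀ i, Module.finrank ℂ (LinearMap.ker (Matrix.toLin' (A i))) = 1)
    (hdist : ∀ i j, i ≠ j →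
      LinearMap.ker (Matrix.toLin' (A i)) ≠ LinearMap.ker (Matrix.toLin' (A j)))
    (a : Fin n → ℂ) (ha : ∀ i, a i = (A i).trace)
    (c : ℂ) (hsum : ∑ i, A i = c • (1 : Matrix (Fin 2) (Fin 2) ℂ))
    (X : Fin 2 → ℂ) (hX : X ≠ 0)
    (hXi : ∀ i, A i *ᵥ X = 0 ∨ A i *ᵥ X = a i • X) :
    ∃ j, a j = ∑ i ∈ Finset.univ.erase j, a i ∨
         -a j = ∑ i ∈ Finset.univ.erase j, a i := by
  have htrace : ∑ i, a i = 2 * c := by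
    simpa [ha] using sum_trace_eq_of_sum_eq_smul_one hsum
  by_cases hall : ∀ i, A i *ᵥ X = a i • X
  · have hc : ∑ i, a i = c :=
      sum_eigenvalues_eq_of_sum_eq_smul_one hsum hX univ (fun i _ => hall i) (by simp)
    let j : Fin n := ⟨0, by omega⟩
    refine ⟨j, Or.inr ?_⟩
    linear_combination -add_sum_erase univ a (mem_univ j) - 2 * hc + htrace
  · push Not at hall
    obtain ⟨j, hj⟩ := hall
    have hj0 : A j *ᵥ X = 0 := (hXi j).resolve_right hj
    have hc : ∑ i ∈ univ.erase j, a i = c := by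
      refine sum_eigenvalues_eq_of_sum_eq_smul_one hsum hX _ (fun i hi => ?_) fun i hi => ?_
      · exact (hXi i).resolve_left fun hi0 =>
          ne_of_mem_erase hi (eq_of_mulVec_eq_zero_of_pairwise_ker_ne hker hdist hX hi0 hj0)
      · rwa [show i = j by simpa using hi]
    refine ⟨j, Or.inl ?_⟩
    linear_combination add_sum_erase univ a (mem_univ j) - 2 * hc + htrace

/-- If `A 1, …, A n` (`n ≥ 3`) are nonzero `2×2` complex matrices with pairwise distinct
1-dimensional kernels, traces `a i`, and `∑ i, A i = c·Id`, and if a nonzero vector `X`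
satisfies `A i X = 0` or `A i X = a i • X` for every `i`, then `a j = ∑_{i≠j} a i` or
`−a j = ∑_{i≠j} a i` for some index `j`. -/
theorem constant_invariant_vector_residue_relation {n : ℕ} (hn : 3 ≤ n)
    (A : Fin n → Matrix (Fin 2) (Fin 2) ℂ)
    (hA0 : ∀ i, A i ≠ 0)
    (hker : ∀ i, Module.finrank ℂ (LinearMap.ker (Matrix.toLin' (A i))) = 1)
    (hdist : ∀ i j, i ≠ j →
      LinearMap.ker (Matrix.toLin' (A i)) ≠ LinearMap.ker (Matrix.toLin' (A j)))
    (a : Fin n → ℂ) (ha : ∀ i, a i = (A i).trace)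
    (c : ℂ) (hsum : ∑ i, A i = c • (1 : Matrix (Fin 2) (Fin 2) ℂ))
    (X : Fin 2 → ℂ) (hX : X ≠ 0)
    (hXi : ∀ i, A i *ᵥ X = 0 ∨ A i *ᵥ X = a i • X) :
    ∃ j, a j = ∑ i ∈ Finset.univ.erase j, a i ∨
         -a j = ∑ i ∈ Finset.univ.erase j, a i :=
  constant_invariant_vector_residue_relation_general hn A hker hdist a ha c hsum X hX hXi
end

section
/- Let R and S be 2×2 complex matrices such that R is diagonalizable with eigenvalues r₁, r₂ and S is diagonalizable with eigenvalues s₁, s₂, where r₁, r₂, s₁, s₂ all have modulus 1, r₁ ≠ r₂, s₁ ≠ s₂, and {r₁,r₂} ∩ {s₁,s₂} = ∅. Suppose moreover that 1 is an eigenvalue of R·S⁻¹. Then the four eigenlines (the eigenspace of R for r₁, of R for r₂, of S for s₁, of S for s₂) are pairwise distinct 1-dimensional subspaces, and there exists an invertible 2×2 complex matrix P such that P⁻¹RP = [[0, −r₁r₂],[1, r₁+r₂]] and P⁻¹SP = [[0, −s₁s₂],[1, s₁+s₂]]; in this common basis the four eigenlines are spanned by (−r₂,1), (−r₁,1), (−s₂,1),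 (−s₁,1), whose first coordinates −r₂, −r₁, −s₂, −s₁ lie on the unit circle — hence the four eigenlines, viewed as points of ℂP¹, lie on a common circle. -/
open Matrix Finset

/-!
Since `R S⁻¹` fixes some `x ≠ 0`, the vector `w := S⁻¹ x` satisfies `R w = S w = x`. The vector
`w` is not an eigenvector of `R` (its eigenvalue would also be an eigenvalue of `S`, and the
spectra are disjoint), so `(w, x)` is a basis. Each of `R`, `S` satisfies the Cayley–Hamilton
relation `M² = (a + b) M - a b` of its eigenvalues `a, b`, so in the basis `(w, x)` both are the
companion matrices of their characteristic polynomials, and the `a`-eigenline of `M` is spanned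
by `(M - b) w = x - b w`, whose coordinates are `(-b, 1)`.
-/

namespace Module.End

variable {K V : Type*} [Field K] [AddCommGroup V] [Module K V]

theorem apply_apply_eq_of_hasEigenvector (hV : finrank K V = 2) {f : End K V} {a b : K}
    {u₁ u₂ : V} (h₁ : f.HasEigenvector a u₁) (h₂ : f.HasEigenvector b u₂) (hab : a ≠ b)
    (v : V) : f (f v) = (a + b) • f v - (a * b) • v := by
  have hli : LinearIndependent K ![u₁, u₂] :=
    f.eigenvectors_linearIndependent' ![a, b]
      (by simp [Function.Injective, Fin.forall_fin_two, hab, hab.symm]) _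
      (Fin.forall_fin_two.2 ⟨h₁, h₂⟩)
  have hspan : Submodule.span K (Set.range ![u₁, u₂]) = ⊤ :=
    hli.span_eq_top_of_card_eq_finrank (by simp [hV])
  suffices f * f = (a + b) • f - (a * b) • 1 from congr($this v)
  refine LinearMap.ext_on_range hspan (Fin.forall_fin_two.2 ⟨?_, ?_⟩) <;>
    simp only [Fin.isValue, cons_val_zero, cons_val_one, cons_val_fin_one, mul_apply,
      h₁.apply_eq_smul, h₂.apply_eq_smul, map_smul, LinearMap.sub_apply, LinearMap.smul_apply,
      one_apply] <;> module

theorem eq_or_eq_of_hasEigenvector {f : End K V} {a b c : K} {w : V}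
    (hf : ∀ v, f (f v) = (a + b) • f v - (a * b) • v) (hw : f.HasEigenvector c w) :
    c = a ∨ c = b := by
  have h := hf w
  rw [hw.apply_eq_smul, map_smul, hw.apply_eq_smul] at h
  have h' : ((c - a) * (c - b)) • w = 0 := by linear_combination (norm := module) h
  simpa [sub_eq_zero, hw.2] using h'

theorem linearIndependent_pair_apply_of_apply_eq {f g : End K V} {a b c d : K} {w : V}
    (hf : ∀ v, f (f v) = (a + b) • f v - (a * b) • v)
    (hg : ∀ v, g (g v) = (c + d) • g v - (c * d) • v)
    (hdisj : a ≠ c ∧ a ≠ d ∧ b ≠ c ∧ b ≠ d) (hw : w ≠ 0) (hfg : f w = g w) :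
    LinearIndependent K ![w, f w] := by
  refine (LinearIndependent.pair_iff' hw).2 fun e he ↦ ?_
  have hfe := eq_or_eq_of_hasEigenvector hf ⟨mem_eigenspace_iff.2 he.symm, hw⟩
  have hge := eq_or_eq_of_hasEigenvector hg ⟨mem_eigenspace_iff.2 (hfg ▸ he.symm), hw⟩
  rcases hfe with rfl | rfl <;> rcases hge with rfl | rfl <;> simp at hdisj

theorem sub_smul_ne_zero_of_linearIndependent {w x : V} (hw : LinearIndependent K ![w, x])
    (c : K) : x - c • w ≠ 0 :=
  sub_ne_zero.2 ((LinearIndependent.pair_iff' (hw.ne_zero 0)).1 hw c).symm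

theorem eigenspace_eq_span_sub_smul (hV : finrank K V = 2) {f : End K V} {a b : K} {w x : V}
    (hf : ∀ v, f (f v) = (a + b) • f v - (a * b) • v) (hfw : f w = x)
    (hw : LinearIndependent K ![w, x]) :
    f.eigenspace a = K ∙ (x - b • w) := by
  have := Module.finite_of_finrank_eq_succ hV
  have hmem : x - b • w ∈ f.eigenspace a := by
    rw [mem_eigenspace_iff, map_sub, map_smul, ← hfw, hf]
    module
  have hle : finrank K (f.eigenspace a) ≤ 1 := by
    by_contra! h
    have htop : f.eigenspace a = ⊤ :=
      Submodule.eq_top_of_finrank_eq (le_antisymm (Submodule.finrank_le _) (by omega))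
    have hwa : f w = a • w := mem_eigenspace_iff.1 (htop ▸ Submodule.mem_top)
    exact sub_smul_ne_zero_of_linearIndependent hw a (by rw [← hfw, hwa, sub_self])
  refine (Submodule.eq_of_le_of_finrank_le
    ((Submodule.span_singleton_le_iff_mem _ _).2 hmem) ?_).symm
  rwa [finrank_span_singleton (sub_smul_ne_zero_of_linearIndependent hw b)]

theorem span_sub_smul_injective {w x : V} (hw : LinearIndependent K ![w, x]) :
    Function.Injective fun c : K ↦ K ∙ (x - c • w) := by
  intro c d h
  obtain ⟨u, hu⟩ := Submodule.span_singleton_eq_span_singleton.1 h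
  rw [Units.smul_def] at hu
  have h0 : (d - u * c) • w + ((u : K) - 1) • x = 0 := by
    linear_combination (norm := module) hu
  obtain ⟨hdc, hu1⟩ := LinearIndependent.pair_iff.1 hw _ _ h0
  linear_combination -hdc - c * hu1

end Module.End

namespace Matrix

variable {K : Type*} [Field K]

theorem toLin'_apply_apply_eq {M : Matrix (Fin 2) (Fin 2) K} {a b : K} {u₁ u₂ : Fin 2 → K}
    (hu₁ : u₁ ≠ 0) (hu₂ : u₂ ≠ 0) (hMu₁ : M *ᵥ u₁ = a • u₁) (hMu₂ : M *ᵥ u₂ = b • u₂)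
    (hab : a ≠ b) (v : Fin 2 → K) :
    toLin' M (toLin' M v) = (a + b) • toLin' M v - (a * b) • v :=
  Module.End.apply_apply_eq_of_hasEigenvector (Module.finrank_fin_fun K)
    ⟨Module.End.mem_eigenspace_iff.2 hMu₁, hu₁⟩ ⟨Module.End.mem_eigenspace_iff.2 hMu₂, hu₂⟩ hab v

theorem transpose_of_pair_mulVec (w x y : Fin 2 → K) :
    (of ![w, x])ᵀ *ᵥ y = y 0 • w + y 1 • x := by
  rw [mulVec_transpose, vecMul_eq_sum, Fin.sum_univ_two]
  rfl

theorem isUnit_det_transpose_of_pair {w x : Fin 2 → K} (h : LinearIndependent K ![w, x]) :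
    IsUnit (of ![w, x])ᵀ.det := by
  rw [det_transpose, ← isUnit_iff_isUnit_det]
  exact linearIndependent_rows_iff_isUnit.1 h

theorem inv_mul_mul_eq_companion {M : Matrix (Fin 2) (Fin 2) K} {a b : K} {w x : Fin 2 → K}
    (hM : ∀ v, toLin' M (toLin' M v) = (a + b) • toLin' M v - (a * b) • v)
    (hMw : toLin' M w = x) (hw : LinearIndependent K ![w, x]) :
    (of ![w, x])ᵀ⁻¹ * M * (of ![w, x])ᵀ = !![0, -(a * b); 1, a + b] := by
  have hMx : M *ᵥ x = (a + b) • x - (a * b) • w := by simpa [hMw] using hM w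
  rw [toLin'_apply] at hMw
  have hMP : M * (of ![w, x])ᵀ = (of ![w, x])ᵀ * !![0, -(a * b); 1, a + b] := by
    refine ext_iff_mulVec.2 fun y ↦ ?_
    simp only [← mulVec_mulVec, transpose_of_pair_mulVec, mulVec_add, mulVec_smul, hMw, hMx]
    simp only [cons_mulVec, cons_dotProduct, dotProduct_of_isEmpty, empty_mulVec, vecHead,
      vecTail, Function.comp_apply, Fin.succ_zero_eq_one, cons_val_zero, cons_val_one,
      cons_val_fin_one]
    module
  rw [mul_assoc, hMP, ← mul_assoc, nonsing_inv_mul _ (isUnit_det_transpose_of_pair hw), one_mul]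

end Matrix

open Module.End

theorem eigenlines_on_common_circle_general (R S : Matrix (Fin 2) (Fin 2) ℂ)
    (r₁ r₂ s₁ s₂ : ℂ)
    (hr12 : r₁ ≠ r₂) (hs12 : s₁ ≠ s₂)
    (hdisj : r₁ ≠ s₁ ∧ r₁ ≠ s₂ ∧ r₂ ≠ s₁ ∧ r₂ ≠ s₂)
    (u₁ u₂ v₁ v₂ : Fin 2 → ℂ)
    (hu₁ : u₁ ≠ 0) (hu₂ : u₂ ≠ 0) (hv₁ : v₁ ≠ 0) (hv₂ : v₂ ≠ 0)
    (hRu₁ : R *ᵥ u₁ = r₁ • u₁) (hRu₂ : R *ᵥ u₂ = r₂ • u₂)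
    (hSv₁ : S *ᵥ v₁ = s₁ • v₁) (hSv₂ : S *ᵥ v₂ = s₂ • v₂)
    (heig : ∃ x : Fin 2 → ℂ, x ≠ 0 ∧ (R * S⁻¹) *ᵥ x = x) :
    (Module.finrank ℂ (Module.End.eigenspace (Matrix.toLin' R) r₁) = 1 ∧
     Module.finrank ℂ (Module.End.eigenspace (Matrix.toLin' R) r₂) = 1 ∧
     Module.finrank ℂ (Module.End.eigenspace (Matrix.toLin' S) s₁) = 1 ∧
     Module.finrank ℂ (Module.End.eigenspace (Matrix.toLin' S) s₂) = 1) ∧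
    (List.Pairwise (· ≠ ·)
      [Module.End.eigenspace (Matrix.toLin' R) r₁,
       Module.End.eigenspace (Matrix.toLin' R) r₂,
       Module.End.eigenspace (Matrix.toLin' S) s₁,
       Module.End.eigenspace (Matrix.toLin' S) s₂]) ∧
    ∃ P : Matrix (Fin 2) (Fin 2) ℂ, IsUnit P.det ∧
      P⁻¹ * R * P = !![0, -(r₁ * r₂); 1, r₁ + r₂] ∧
      P⁻¹ * S * P = !![0, -(s₁ * s₂); 1, s₁ + s₂] ∧
      Module.End.eigenspace (Matrix.toLin' R) r₁ = (ℂ ∙ (P *ᵥ ![-r₂, 1])) ∧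
      Module.End.eigenspace (Matrix.toLin' R) r₂ = (ℂ ∙ (P *ᵥ ![-r₁, 1])) ∧
      Module.End.eigenspace (Matrix.toLin' S) s₁ = (ℂ ∙ (P *ᵥ ![-s₂, 1])) ∧
      Module.End.eigenspace (Matrix.toLin' S) s₂ = (ℂ ∙ (P *ᵥ ![-s₁, 1])) := by
  obtain ⟨x, hx0, hx⟩ := heig
  -- `S⁻¹ = 0` for singular `S`, which `heig` rules out.
  have hSdet : IsUnit S.det := by
    by_contra h
    rw [nonsing_inv_apply_not_isUnit S h, mul_zero, zero_mulVec] at hx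
    exact hx0 hx.symm
  set w := S⁻¹ *ᵥ x
  have hSw : toLin' S w = x := by
    rw [toLin'_apply, mulVec_mulVec, mul_nonsing_inv S hSdet, one_mulVec]
  have hRw : toLin' R w = x := by rw [toLin'_apply, mulVec_mulVec, hx]
  have hw0 : w ≠ 0 := by rintro hw; rw [hw, map_zero] at hSw; exact hx0 hSw.symm
  have hR₁₂ := toLin'_apply_apply_eq hu₁ hu₂ hRu₁ hRu₂ hr12
  have hR₂₁ := toLin'_apply_apply_eq hu₂ hu₁ hRu₂ hRu₁ hr12.symm
  have hS₁₂ := toLin'_apply_apply_eq hv₁ hv₂ hSv₁ hSv₂ hs12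
  have hS₂₁ := toLin'_apply_apply_eq hv₂ hv₁ hSv₂ hSv₁ hs12.symm
  have hli : LinearIndependent ℂ ![w, x] :=
    hRw ▸ linearIndependent_pair_apply_of_apply_eq hR₁₂ hS₁₂ hdisj hw0 (hRw.trans hSw.symm)
  have hPv (c : ℂ) : (of ![w, x])ᵀ *ᵥ ![-c, 1] = x - c • w := by
    rw [transpose_of_pair_mulVec]; simp only [cons_val_zero, cons_val_one, cons_val_fin_one]; module
  have hV : Module.finrank ℂ (Fin 2 → ℂ) = 2 := Module.finrank_fin_fun ℂ
  rw [eigenspace_eq_span_sub_smul hV hR₁₂ hRw hli, eigenspace_eq_span_sub_smul hV hR₂₁ hRw hli,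
    eigenspace_eq_span_sub_smul hV hS₁₂ hSw hli, eigenspace_eq_span_sub_smul hV hS₂₁ hSw hli]
  simp only [finrank_span_singleton (sub_smul_ne_zero_of_linearIndependent hli _), true_and]
  refine ⟨.map (l := [r₂, r₁, s₂, s₁]) (fun c ↦ ℂ ∙ (x - c • w))
      (fun _ _ ↦ (span_sub_smul_injective hli).ne) (by simp [hr12.symm, hs12.symm, hdisj]),
    (of ![w, x])ᵀ, isUnit_det_transpose_of_pair hli, inv_mul_mul_eq_companion hR₁₂ hRw hli,
    inv_mul_mul_eq_companion hS₁₂ hSw hli, by simp only [hPv, and_self]⟩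

/-- Two diagonalizable `2×2` matrices `R`, `S` with distinct unit eigenvalues
`r₁ ≠ r₂`, `s₁ ≠ s₂`, `{r₁,r₂} ∩ {s₁,s₂} = ∅`, such that `R·S⁻¹` has eigenvalue `1`,
have four pairwise distinct eigenlines, and can be simultaneously conjugated to the
companion matrices `[[0,−r₁r₂],[1,r₁+r₂]]` and `[[0,−s₁s₂],[1,s₁+s₂]]`; in this common
basis the four eigenlines are spanned by `(−r₂,1)`, `(−r₁,1)`, `(−s₂,1)`, `(−s₁,1)`,
so (their first coordinates being on the unit circle) they lie on a common circle
in `ℂP¹`. -/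
theorem eigenlines_on_common_circle (R S : Matrix (Fin 2) (Fin 2) ℂ)
    (r₁ r₂ s₁ s₂ : ℂ)
    (hr₁ : ‖r₁‖ = 1) (hr₂ : ‖r₂‖ = 1)
    (hs₁ : ‖s₁‖ = 1) (hs₂ : ‖s₂‖ = 1)
    (hr12 : r₁ ≠ r₂) (hs12 : s₁ ≠ s₂)
    (hdisj : r₁ ≠ s₁ ∧ r₁ ≠ s₂ ∧ r₂ ≠ s₁ ∧ r₂ ≠ s₂)
    (u₁ u₂ v₁ v₂ : Fin 2 → ℂ)
    (hu₁ : u₁ ≠ 0) (hu₂ : u₂ ≠ 0) (hv₁ : v₁ ≠ 0) (hv₂ : v₂ ≠ 0)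
    (hRu₁ : R *ᵥ u₁ = r₁ • u₁) (hRu₂ : R *ᵥ u₂ = r₂ • u₂)
    (hSv₁ : S *ᵥ v₁ = s₁ • v₁) (hSv₂ : S *ᵥ v₂ = s₂ • v₂)
    (heig : ∃ x : Fin 2 → ℂ, x ≠ 0 ∧ (R * S⁻¹) *ᵥ x = x) :
    (Module.finrank ℂ (Module.End.eigenspace (Matrix.toLin' R) r₁) = 1 ∧
     Module.finrank ℂ (Module.End.eigenspace (Matrix.toLin' R) r₂) = 1 ∧
     Module.finrank ℂ (Module.End.eigenspace (Matrix.toLin' S) s₁) = 1 ∧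
     Module.finrank ℂ (Module.End.eigenspace (Matrix.toLin' S) s₂) = 1) ∧
    (List.Pairwise (· ≠ ·)
      [Module.End.eigenspace (Matrix.toLin' R) r₁,
       Module.End.eigenspace (Matrix.toLin' R) r₂,
       Module.End.eigenspace (Matrix.toLin' S) s₁,
       Module.End.eigenspace (Matrix.toLin' S) s₂]) ∧
    ∃ P : Matrix (Fin 2) (Fin 2) ℂ, IsUnit P.det ∧
      P⁻¹ * R * P = !![0, -(r₁ * r₂); 1, r₁ + r₂] ∧
      P⁻¹ * S * P = !![0, -(s₁ * s₂); 1, s₁ + s₂] ∧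
      Module.End.eigenspace (Matrix.toLin' R) r₁ = (ℂ ∙ (P *ᵥ ![-r₂, 1])) ∧
      Module.End.eigenspace (Matrix.toLin' R) r₂ = (ℂ ∙ (P *ᵥ ![-r₁, 1])) ∧
      Module.End.eigenspace (Matrix.toLin' S) s₁ = (ℂ ∙ (P *ᵥ ![-s₂, 1])) ∧
      Module.End.eigenspace (Matrix.toLin' S) s₂ = (ℂ ∙ (P *ᵥ ![-s₁, 1])) :=
  eigenlines_on_common_circle_general R S r₁ r₂ s₁ s₂ hr12 hs12 hdisj u₁ u₂ v₁ v₂ hu₁ hu₂ hv₁ hv₂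
    hRu₁ hRu₂ hSv₁ hSv₂ heig
end

section
/- Let R and S be 2×2 complex matrices, diagonalizable with eigenvalues r₁ ≠ r₂ and s₁ ≠ s₂ respectively, all four eigenvalues of modulus 1, with {r₁,r₂} ∩ {s₁,s₂} = ∅, and such that 1 is an eigenvalue of R·S⁻¹. Then there exists a Hermitian 2×2 matrix H with det H ≠ 0, R*·H·R = H and S*·H·S = H; and H is unique up to real scalar: any Hermitian matrix H' satisfying R*·H'·R = H' and S*·H'·S = H' is equal to t·H for some real number t. -/
/-!
In an eigenbasis of `R`, the `R`-invariant Hermitian forms are exactly the real diagonal ones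
`diag(α, β)`: for eigenvalues on the unit circle, `r̄ᵢ rⱼ = 1` only when `rᵢ = rⱼ`. Invariance
under `S` then says that the eigenvectors `v₁, v₂` of `S` are orthogonal, one complex linear
condition `α a + β b = 0` on `(α, β) ∈ ℝ²` whose coefficients come from the coordinates of
`v₁, v₂` in the eigenbasis of `R`. A vector `y ≠ 0` with `R y = S y` forces `a / b` to be a
positive multiple of the cross-ratio of `r₁, r₂, s₁, s₂`, which is real because the four points
lie on a circle. Hence the solutions form a real line, and the disjointness of the spectra makes
every nonzero solution nondegenerate.
-/

open Matrix

namespace Matrix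

section Eigenbasis

variable {n K : Type*} [Fintype n] [DecidableEq n] [Field K] {A : Matrix n n K} {μ : n → K}
  {v : n → n → K}

theorem mul_eq_mul_diagonal_of_mulVec_eq_smul (hAv : ∀ i, A *ᵥ v i = μ i • v i) :
    A * (of v)ᵀ = (of v)ᵀ * diagonal μ := by
  ext i j
  rw [mul_diagonal, mul_comm]
  simpa [mul_apply, mulVec, dotProduct] using congrFun (hAv j) i

theorem isUnit_of_mulVec_eq_smul (hμ : Function.Injective μ) (hv : ∀ i, v i ≠ 0)
    (hAv : ∀ i, A *ᵥ v i = μ i • v i) : IsUnit (of v)ᵀ :=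
  linearIndependent_cols_iff_isUnit.1 <|
    Module.End.eigenvectors_linearIndependent' (toLin' A) μ hμ v fun i =>
      Module.End.hasEigenvector_iff.2
        ⟨Module.End.mem_eigenspace_iff.2 (by simpa using hAv i), hv i⟩

end Eigenbasis

section Congruence

variable {n α : Type*} [Fintype n] [DecidableEq n] [CommRing α] [StarRing α]

theorem conjTranspose_mul_mul_eq_self_iff {R P D : Matrix n n α} (hP : IsUnit P)
    (hRP : R * P = P * D) (H : Matrix n n α) :
    Rᴴ * H * R = H ↔ Dᴴ * (Pᴴ * H * P) * D = Pᴴ * H * P := by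
  have hcongr : Dᴴ * (Pᴴ * H * P) * D = Pᴴ * (Rᴴ * H * R) * P := calc
    Dᴴ * (Pᴴ * H * P) * D = (P * D)ᴴ * H * (P * D) := by
      simp only [conjTranspose_mul, Matrix.mul_assoc]
    _ = (R * P)ᴴ * H * (R * P) := by rw [hRP]
    _ = Pᴴ * (Rᴴ * H * R) * P := by simp only [conjTranspose_mul, Matrix.mul_assoc]
  rw [hcongr]
  exact ⟨fun h => by rw [h], fun h => hP.star.mul_left_cancel (hP.mul_right_cancel h)⟩

theorem conjTranspose_nonsing_inv_mul_mul_nonsing_inv_cancel {P : Matrix n n α}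
    (hP : IsUnit P.det) (H : Matrix n n α) : (P⁻¹)ᴴ * (Pᴴ * H * P) * P⁻¹ = H := by
  simp only [← Matrix.mul_assoc, ← conjTranspose_mul, mul_nonsing_inv P hP, conjTranspose_one,
    Matrix.one_mul]
  simp only [Matrix.mul_assoc, mul_nonsing_inv P hP, Matrix.mul_one]

end Congruence

theorem diagonal_conjTranspose_mul_mul_diagonal_eq_self_iff {n : Type*} [Fintype n]
    [DecidableEq n] {r : n → ℂ} (hr : ∀ i, ‖r i‖ = 1) (hinj : Function.Injective r)
    (K : Matrix n n ℂ) :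
    (diagonal r)ᴴ * K * diagonal r = K ↔ K.IsDiag := by
  have hr0 : ∀ i, r i ≠ 0 := fun i h => by simpa [h] using hr i
  have entry : ∀ i j, ((diagonal r)ᴴ * K * diagonal r) i j = (r i)⁻¹ * r j * K i j := by
    intro i j
    simp only [diagonal_conjTranspose, mul_diagonal, diagonal_mul, Pi.star_apply,
      RCLike.star_def, Complex.inv_eq_conj (hr i)]
    ring
  constructor
  · intro h i j hij
    have hne : (r i)⁻¹ * r j ≠ 1 := by
      rw [Ne, inv_mul_eq_one₀ (hr0 i)]
      exact fun h => hij (hinj h)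
    exact eq_zero_of_mul_eq_self_left hne ((entry i j).symm.trans (congrFun (congrFun h i) j))
  · intro h
    ext i j
    rw [entry]
    rcases eq_or_ne i j with rfl | hij
    · simp [hr0]
    · simp [h hij]

theorem conjTranspose_mul_mul_eq_self_iff_isDiag {n : Type*} [Fintype n] [DecidableEq n]
    {R P : Matrix n n ℂ} {r : n → ℂ} (hP : IsUnit P) (hRP : R * P = P * diagonal r)
    (hr : ∀ i, ‖r i‖ = 1) (hinj : Function.Injective r) (H : Matrix n n ℂ) :
    Rᴴ * H * R = H ↔ (Pᴴ * H * P).IsDiag :=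
  (conjTranspose_mul_mul_eq_self_iff hP hRP H).trans
    (diagonal_conjTranspose_mul_mul_diagonal_eq_self_iff hr hinj _)

theorem exists_mulVec_eq_mulVec_of_mul_inv {n α : Type*} [Fintype n] [DecidableEq n]
    [CommRing α] {R S : Matrix n n α} (h : ∃ x : n → α, x ≠ 0 ∧ (R * S⁻¹) *ᵥ x = x) :
    ∃ y : n → α, y ≠ 0 ∧ R *ᵥ y = S *ᵥ y := by
  obtain ⟨x, hx, hRSx⟩ := h
  -- A singular `S` has `S⁻¹ = 0`, which rules out the fixed vector `x`.
  by_cases hS : IsUnit S.det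
  · rw [← mulVec_mulVec] at hRSx
    refine ⟨S⁻¹ *ᵥ x, fun h0 => hx ?_, ?_⟩
    · rw [← hRSx, h0, mulVec_zero]
    · rw [hRSx, mulVec_mulVec, mul_nonsing_inv S hS, one_mulVec]
  · rw [nonsing_inv_apply_not_isUnit S hS, Matrix.mul_zero, zero_mulVec] at hRSx
    exact absurd hRSx.symm hx

theorem exists_diagonal_mul_mulVec_eq {n K : Type*} [Fintype n] [DecidableEq n]
    [Field K] {R S P Q M : Matrix n n K} {r s : n → K} {y : n → K} (hP : IsUnit P)
    (hQ : IsUnit Q) (hRP : R * P = P * diagonal r) (hSQ : S * Q = Q * diagonal s)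
    (hPM : P * M = Q) (hy : y ≠ 0) (hRSy : R *ᵥ y = S *ᵥ y) :
    ∃ w : n → K, w ≠ 0 ∧ (diagonal r * M) *ᵥ w = (M * diagonal s) *ᵥ w := by
  obtain ⟨w, rfl⟩ := (mulVec_surjective_iff_isUnit.2 hQ) y
  refine ⟨w, fun h0 => hy (by rw [h0, mulVec_zero]), (mulVec_injective_iff_isUnit.2 hP) ?_⟩
  calc P *ᵥ ((diagonal r * M) *ᵥ w) = R *ᵥ (Q *ᵥ w) := by
        rw [mulVec_mulVec, mulVec_mulVec, ← Matrix.mul_assoc, ← hRP, Matrix.mul_assoc, hPM]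
    _ = S *ᵥ (Q *ᵥ w) := hRSy
    _ = P *ᵥ ((M * diagonal s) *ᵥ w) := by
        rw [mulVec_mulVec, mulVec_mulVec, ← Matrix.mul_assoc, hPM, hSQ]

theorem isHermitian_diagonal_ofReal {n : Type*} [DecidableEq n] (d : n → ℝ) :
    (diagonal fun i => (d i : ℂ)).IsHermitian :=
  isHermitian_diagonal_iff.2 fun _ =>
    (Complex.im_eq_zero_iff_isSelfAdjoint _).1 (Complex.ofReal_im _)

theorem IsHermitian.eq_diagonal_re {n : Type*} [DecidableEq n] {A : Matrix n n ℂ}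
    (hA : A.IsHermitian) (hd : A.IsDiag) : A = diagonal fun i => ((A i i).re : ℂ) := by
  conv_lhs => rw [← hd.diagonal_diag, ← hA.coe_re_diag]
  rfl

theorem IsHermitian.isDiag_iff_apply_zero_one {α : Type*} [AddMonoid α] [StarAddMonoid α]
    {A : Matrix (Fin 2) (Fin 2) α} (hA : A.IsHermitian) : A.IsDiag ↔ A 0 1 = 0 := by
  refine ⟨fun h => h (by decide), fun h i j hij => ?_⟩
  fin_cases i <;> fin_cases j
  all_goals first | exact absurd rfl hij | exact h | rw [← hA.apply]; simp [h]

theorem isDiag_conjTranspose_mul_diagonal_mul_iff (M : Matrix (Fin 2) (Fin 2) ℂ)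
    (d : Fin 2 → ℝ) :
    (Mᴴ * diagonal (fun i => (d i : ℂ)) * M).IsDiag ↔
      d 0 * (star (M 0 0) * M 0 1) + d 1 * (star (M 1 0) * M 1 1) = 0 := by
  rw [(isHermitian_conjTranspose_mul_mul M
    (isHermitian_diagonal_ofReal d)).isDiag_iff_apply_zero_one, mul_apply]
  simp only [mul_diagonal, conjTranspose_apply, Fin.sum_univ_two]
  ring_nf

end Matrix

theorem Complex.conj_crossRatio_of_norm_eq_one {a b c d : ℂ} (ha : ‖a‖ = 1) (hb : ‖b‖ = 1)
    (hc : ‖c‖ = 1) (hd : ‖d‖ = 1) :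
    (starRingEnd ℂ) ((a - c) * (b - d) / ((a - d) * (b - c))) =
      (a - c) * (b - d) / ((a - d) * (b - c)) := by
  have h0 : ∀ z : ℂ, ‖z‖ = 1 → z ≠ 0 := fun z hz h => by simp [h] at hz
  simp only [map_div₀, map_mul, map_sub, ← Complex.inv_eq_conj, ha, hb, hc, hd]
  rw [inv_sub_inv (h0 a ha) (h0 c hc), inv_sub_inv (h0 b hb) (h0 d hd),
    inv_sub_inv (h0 a ha) (h0 d hd), inv_sub_inv (h0 b hb) (h0 c hc)]
  have hN : a * c * (b * d) ≠ 0 := by simp [h0 a ha, h0 b hb, h0 c hc, h0 d hd]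
  rw [div_mul_div_comm, div_mul_div_comm, div_div_div_eq,
    show a * d * (b * c) = a * c * (b * d) by ring, mul_comm (a * c * (b * d)),
    mul_div_mul_right _ _ hN]
  ring

section Intertwining

variable {M : Matrix (Fin 2) (Fin 2) ℂ} {r s w : Fin 2 → ℂ}

theorem row_sum_eq_zero_of_intertwine (hMw : (diagonal r * M) *ᵥ w = (M * diagonal s) *ᵥ w)
    (i : Fin 2) : M i 0 * (r i - s 0) * w 0 + M i 1 * (r i - s 1) * w 1 = 0 := by
  have := congrFun hMw i
  simp only [mulVec, dotProduct, diagonal_mul, mul_diagonal, Fin.sum_univ_two] at this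
  linear_combination this

theorem mul_eq_zero_iff_of_intertwine (hMw : (diagonal r * M) *ᵥ w = (M * diagonal s) *ᵥ w)
    (hrs : ∀ i j, r i ≠ s j) (i : Fin 2) : M i 0 * w 0 = 0 ↔ M i 1 * w 1 = 0 := by
  have hrow := row_sum_eq_zero_of_intertwine hMw i
  have h0 := sub_ne_zero.2 (hrs i 0)
  have h1 := sub_ne_zero.2 (hrs i 1)
  constructor <;> intro h
  · have : (r i - s 1) * (M i 1 * w 1) = 0 := by linear_combination hrow - (r i - s 0) * h
    simpa [h1] using this
  · have : (r i - s 0) * (M i 0 * w 0) = 0 := by linear_combination hrow - (r i - s 1) * h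
    simpa [h0] using this

theorem apply_ne_zero_of_intertwine (hMw : (diagonal r * M) *ᵥ w = (M * diagonal s) *ᵥ w)
    (hrs : ∀ i j, r i ≠ s j) (hM : M.det ≠ 0) (hw : w ≠ 0) : ∀ j, w j ≠ 0 := by
  have hrow := mul_eq_zero_iff_of_intertwine hMw hrs
  refine Fin.forall_fin_two.2 ⟨fun h0 => ?_, fun h1 => ?_⟩
  · have h1 : w 1 ≠ 0 := fun h1 => hw (funext (Fin.forall_fin_two.2 ⟨h0, h1⟩))
    exact hM (det_eq_zero_of_column_eq_zero 1 fun i => by simpa [h0, h1] using hrow i)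
  · have h0 : w 0 ≠ 0 := fun h0 => hw (funext (Fin.forall_fin_two.2 ⟨h0, h1⟩))
    exact hM (det_eq_zero_of_column_eq_zero 0 fun i => by simpa [h0, h1] using hrow i)

theorem entry_ne_zero_of_intertwine (hMw : (diagonal r * M) *ᵥ w = (M * diagonal s) *ᵥ w)
    (hrs : ∀ i j, r i ≠ s j) (hM : M.det ≠ 0) (hw : ∀ j, w j ≠ 0) (i j : Fin 2) :
    M i j ≠ 0 := by
  have hrow : M i 0 = 0 ↔ M i 1 = 0 := by
    simpa [hw] using mul_eq_zero_iff_of_intertwine hMw hrs i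
  intro hij
  refine hM (det_eq_zero_of_row_eq_zero i (Fin.forall_fin_two.2 ?_))
  fin_cases j
  · exact ⟨hij, hrow.1 hij⟩
  · exact ⟨hrow.2 hij, hij⟩

theorem crossRatio_relation_of_intertwine (hMw : (diagonal r * M) *ᵥ w = (M * diagonal s) *ᵥ w)
    (hw : w 1 ≠ 0) (h01 : r 0 ≠ s 1) (h10 : r 1 ≠ s 0) :
    star (M 1 0) * M 1 0 * (star (M 0 0) * M 0 1) =
      star (M 0 0) * M 0 0 * ((r 0 - s 0) * (r 1 - s 1) / ((r 0 - s 1) * (r 1 - s 0))) *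
        (star (M 1 0) * M 1 1) := by
  have h0 := row_sum_eq_zero_of_intertwine hMw 0
  have h1 := row_sum_eq_zero_of_intertwine hMw 1
  have h01 := sub_ne_zero.2 h01
  have h10 := sub_ne_zero.2 h10
  rw [mul_div_assoc', div_mul_eq_mul_div, eq_div_iff (mul_ne_zero h01 h10)]
  refine mul_left_cancel₀ hw ?_
  linear_combination (star (M 1 0) * M 1 0 * (r 1 - s 0) * star (M 0 0)) * h0
    - (star (M 0 0) * M 0 0 * (r 0 - s 0) * star (M 1 0)) * h1

theorem exists_real_relation_of_intertwine
    (hMw : (diagonal r * M) *ᵥ w = (M * diagonal s) *ᵥ w) (hr : ∀ i, ‖r i‖ = 1)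
    (hs : ∀ j, ‖s j‖ = 1) (hrs : ∀ i j, r i ≠ s j) (hM : M.det ≠ 0) (hw : w ≠ 0) :
    star (M 1 0) * M 1 1 ≠ 0 ∧ ∃ α β : ℝ, α ≠ 0 ∧ β ≠ 0 ∧
      α * (star (M 0 0) * M 0 1) = β * (star (M 1 0) * M 1 1) := by
  have hw' := apply_ne_zero_of_intertwine hMw hrs hM hw
  have hM' := entry_ne_zero_of_intertwine hMw hrs hM hw'
  set κ := (r 0 - s 0) * (r 1 - s 1) / ((r 0 - s 1) * (r 1 - s 0))
  have hκ : (κ.re : ℂ) = κ := Complex.conj_eq_iff_re.1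
    (Complex.conj_crossRatio_of_norm_eq_one (hr 0) (hr 1) (hs 0) (hs 1))
  have hκ0 : κ.re ≠ 0 := fun h => by
    have : κ ≠ 0 := by simp [κ, sub_eq_zero, hrs]
    exact this (by rw [← hκ, h, Complex.ofReal_zero])
  refine ⟨by simp [hM'], Complex.normSq (M 1 0), Complex.normSq (M 0 0) * κ.re, by simp [hM'],
    by simp [hM', hκ0], ?_⟩
  push_cast
  rw [hκ, Complex.normSq_eq_conj_mul_self, Complex.normSq_eq_conj_mul_self]
  exact crossRatio_relation_of_intertwine hMw (hw' 1) (hrs 0 1) (hrs 1 0)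

end Intertwining

theorem exists_unique_hermitian_isDiag {P Q M : Matrix (Fin 2) (Fin 2) ℂ} (hP : IsUnit P)
    (hPM : P * M = Q) {α β : ℝ} (hα : α ≠ 0) (hβ : β ≠ 0) (hb : star (M 1 0) * M 1 1 ≠ 0)
    (hab : α * (star (M 0 0) * M 0 1) = β * (star (M 1 0) * M 1 1)) :
    ∃ H : Matrix (Fin 2) (Fin 2) ℂ, H.IsHermitian ∧ H.det ≠ 0 ∧
      (Pᴴ * H * P).IsDiag ∧ (Qᴴ * H * Q).IsDiag ∧
      ∀ H' : Matrix (Fin 2) (Fin 2) ℂ, H'.IsHermitian → (Pᴴ * H' * P).IsDiag →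
        (Qᴴ * H' * Q).IsDiag → ∃ t : ℝ, H' = t • H := by
  have hPdet : IsUnit P.det := (isUnit_iff_isUnit_det P).1 hP
  have hPK : ∀ K, Pᴴ * ((P⁻¹)ᴴ * K * P⁻¹) * P = K := fun K => by
    simpa [nonsing_inv_nonsing_inv P hPdet] using
      conjTranspose_nonsing_inv_mul_mul_nonsing_inv_cancel (isUnit_nonsing_inv_det P hPdet) K
  have hQ : ∀ H, Qᴴ * H * Q = Mᴴ * (Pᴴ * H * P) * M := fun H => by
    simp only [← hPM, conjTranspose_mul, Matrix.mul_assoc]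
  set d : Fin 2 → ℝ := ![α, -β]
  set D := diagonal fun i => (d i : ℂ)
  refine ⟨(P⁻¹)ᴴ * D * P⁻¹, isHermitian_conjTranspose_mul_mul _ (isHermitian_diagonal_ofReal d),
    ?_, ?_, ?_, ?_⟩
  · simp [D, d, det_mul, det_conjTranspose, det_diagonal, hPdet.ne_zero, hα, hβ]
  · rw [hPK]
    exact isDiag_diagonal _
  · rw [hQ, hPK, isDiag_conjTranspose_mul_diagonal_mul_iff]
    simp only [d, cons_val_zero, cons_val_one, Complex.ofReal_neg]
    linear_combination hab
  · intro H' hH' hPH' hQH'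
    have hK := (isHermitian_conjTranspose_mul_mul P hH').eq_diagonal_re hPH'
    rw [hQ, hK, isDiag_conjTranspose_mul_diagonal_mul_iff] at hQH'
    set K := Pᴴ * H' * P
    have hy : (K 1 1).re = (K 0 0).re / α * -β := by
      have h : ((α * (K 1 1).re : ℝ) : ℂ) = (-((K 0 0).re * β) : ℝ) := by
        push_cast
        refine mul_right_cancel₀ hb ?_
        linear_combination α * hQH' - (K 0 0).re * hab
      field_simp
      linarith [Complex.ofReal_injective h]
    obtain ⟨t, ht⟩ : ∃ t : ℝ, K = t • D := ⟨(K 0 0).re / α, by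
      rw [hK]
      ext i j
      fin_cases i <;> fin_cases j <;> simp [D, d, hy, hα]⟩
    refine ⟨t, ?_⟩
    calc H' = (P⁻¹)ᴴ * K * P⁻¹ :=
          (conjTranspose_nonsing_inv_mul_mul_nonsing_inv_cancel hPdet H').symm
      _ = t • ((P⁻¹)ᴴ * D * P⁻¹) := by rw [ht, Matrix.mul_smul, Matrix.smul_mul]

/-- For diagonalizable `2×2` matrices `R`, `S` with distinct unit eigenvalues
`r₁ ≠ r₂`, `s₁ ≠ s₂`, `{r₁,r₂} ∩ {s₁,s₂} = ∅`, such that `R·S⁻¹` has eigenvalue `1`,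
there is a non-degenerate Hermitian matrix `H` invariant under both `R` and `S`
(`R*·H·R = H` and `S*·H·S = H`), unique up to a real scalar. -/
theorem exists_unique_invariant_hermitian_form (R S : Matrix (Fin 2) (Fin 2) ℂ)
    (r₁ r₂ s₁ s₂ : ℂ)
    (hr₁ : ‖r₁‖ = 1) (hr₂ : ‖r₂‖ = 1)
    (hs₁ : ‖s₁‖ = 1) (hs₂ : ‖s₂‖ = 1)
    (hr12 : r₁ ≠ r₂) (hs12 : s₁ ≠ s₂)
    (hdisj : r₁ ≠ s₁ ∧ r₁ ≠ s₂ ∧ r₂ ≠ s₁ ∧ r₂ ≠ s₂)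
    (u₁ u₂ v₁ v₂ : Fin 2 → ℂ)
    (hu₁ : u₁ ≠ 0) (hu₂ : u₂ ≠ 0) (hv₁ : v₁ ≠ 0) (hv₂ : v₂ ≠ 0)
    (hRu₁ : R *ᵥ u₁ = r₁ • u₁) (hRu₂ : R *ᵥ u₂ = r₂ • u₂)
    (hSv₁ : S *ᵥ v₁ = s₁ • v₁) (hSv₂ : S *ᵥ v₂ = s₂ • v₂)
    (heig : ∃ x : Fin 2 → ℂ, x ≠ 0 ∧ (R * S⁻¹) *ᵥ x = x) :
    ∃ H : Matrix (Fin 2) (Fin 2) ℂ, H.IsHermitian ∧ H.det ≠ 0 ∧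
      Rᴴ * H * R = H ∧ Sᴴ * H * S = H ∧
      ∀ H' : Matrix (Fin 2) (Fin 2) ℂ, H'.IsHermitian →
        Rᴴ * H' * R = H' → Sᴴ * H' * S = H' → ∃ t : ℝ, H' = t • H := by
  have hr : ∀ i : Fin 2, ‖![r₁, r₂] i‖ = 1 := Fin.forall_fin_two.2 ⟨hr₁, hr₂⟩
  have hs : ∀ j : Fin 2, ‖![s₁, s₂] j‖ = 1 := Fin.forall_fin_two.2 ⟨hs₁, hs₂⟩
  have hrs : ∀ i j : Fin 2, ![r₁, r₂] i ≠ ![s₁, s₂] j := by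
    simpa [Fin.forall_fin_two, and_assoc] using hdisj
  have hRu : ∀ i : Fin 2, R *ᵥ ![u₁, u₂] i = ![r₁, r₂] i • ![u₁, u₂] i :=
    Fin.forall_fin_two.2 ⟨hRu₁, hRu₂⟩
  have hSv : ∀ j : Fin 2, S *ᵥ ![v₁, v₂] j = ![s₁, s₂] j • ![v₁, v₂] j :=
    Fin.forall_fin_two.2 ⟨hSv₁, hSv₂⟩
  set P : Matrix (Fin 2) (Fin 2) ℂ := (of ![u₁, u₂])ᵀ
  set Q : Matrix (Fin 2) (Fin 2) ℂ := (of ![v₁, v₂])ᵀ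
  have hP : IsUnit P := isUnit_of_mulVec_eq_smul (injective_pair_iff_ne.2 hr12)
    (Fin.forall_fin_two.2 ⟨hu₁, hu₂⟩) hRu
  have hQ : IsUnit Q := isUnit_of_mulVec_eq_smul (injective_pair_iff_ne.2 hs12)
    (Fin.forall_fin_two.2 ⟨hv₁, hv₂⟩) hSv
  have hRP := mul_eq_mul_diagonal_of_mulVec_eq_smul hRu
  have hSQ := mul_eq_mul_diagonal_of_mulVec_eq_smul hSv
  simp_rw [conjTranspose_mul_mul_eq_self_iff_isDiag hP hRP hr (injective_pair_iff_ne.2 hr12),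
    conjTranspose_mul_mul_eq_self_iff_isDiag hQ hSQ hs (injective_pair_iff_ne.2 hs12)]
  have hPdet := (isUnit_iff_isUnit_det P).1 hP
  have hPM : P * (P⁻¹ * Q) = Q := mul_nonsing_inv_cancel_left P Q hPdet
  have hM : (P⁻¹ * Q).det ≠ 0 := by
    rw [det_mul]
    exact ((isUnit_nonsing_inv_det P hPdet).mul ((isUnit_iff_isUnit_det Q).1 hQ)).ne_zero
  obtain ⟨y, hy, hRSy⟩ := exists_mulVec_eq_mulVec_of_mul_inv heig
  obtain ⟨w, hw, hMw⟩ := exists_diagonal_mul_mulVec_eq hP hQ hRP hSQ hPM hy hRSy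
  obtain ⟨hb, α, β, hα, hβ, hab⟩ := exists_real_relation_of_intertwine hMw hr hs hrs hM hw
  exact exists_unique_hermitian_isDiag hP hPM hα hβ hb hab
end

section
/- Let a₁, a₂, a₃ be real numbers with a_i ∉ ℤ, set b_i = (a_j + a_k − a_i)/2 for (i,j,k) running over cyclic permutations of (1,2,3), and assume b_i ∉ ℤ for all i and b₁+b₂+b₃ ∉ ℤ. Let c = (a₁+a₂+a₃)/2, r₁ = exp(−2πi·c), r₂ = exp(2πi·(a₁−c)), s₁ = 1, s₂ = exp(−2πi·a₂), and define R = [[0, −r₁r₂],[1, r₁+r₂]] and S = [[0, −s₁s₂],[1, s₁+s₂]]. Then there exists a Hermitian 2×2 matrix H with R*·H·R = H, S*·H·S = H and det H ≠ 0, such that H has exactly p positive eigenvalues and 2−p negative eigenvalues, where p = ⌊{b₁}+{b₂}+{b₃}⌋ and {·} denotes the fractional part (so {x} ∈ (0,1) for x ∉ ℤ). -/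
/-!
`R` and `S` are the companion matrices of `X² - (r₁ + r₂) X + r₁ r₂` and
`X² - (s₁ + s₂) X + s₁ s₂`, whose roots lie on the unit circle. For such a companion matrix with
data `(p, q)`, the Hermitian matrix `!![α, β; β̄, α]` is invariant as soon as `β + q β̄ = p α`.
Imposing this for both generators gives, up to a real factor, `α = |v|²` and `β = ū v` with
`u = (s₁ + s₂) - (r₁ + r₂)` and `v = s₁ s₂ - r₁ r₂`. This form has trace `2 |v|² > 0`
(`v ≠ 0` because `a₃ ∉ ℤ`) and determinant `|v|² (|v|² - |u|²)`, and in half-angles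
`|v|² - |u|² = 16 sin πb₁ sin πb₂ sin πb₃ sin π(b₁ + b₂ + b₃)`. Since
`sin πx = (-1)^⌊x⌋ sin π{x}` and `⌊b₁ + b₂ + b₃⌋ ≡ ⌊b₁⌋ + ⌊b₂⌋ + ⌊b₃⌋ + p (mod 2)`, this product
has sign `(-1)^p`: the form is indefinite for `p = 1` and definite otherwise, and its negative
is taken when `p = 0`.
-/

open Matrix Finset

section Sign

open Real

lemma sin_pi_mul_eq_neg_one_zpow_floor_mul (x : ℝ) :
    sin (π * x) = (-1) ^ ⌊x⌋ * sin (π * Int.fract x) := by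
  rw [← sin_add_int_mul_pi, Int.fract]
  ring_nf

lemma sin_pi_mul_fract_pos {x : ℝ} (hx : ∀ k : ℤ, x ≠ k) : 0 < sin (π * Int.fract x) :=
  sin_pos_of_pos_of_lt_pi (mul_pos pi_pos (Int.fract_pos.2 (hx _)))
    (mul_lt_of_lt_one_right pi_pos (Int.fract_lt_one x))

lemma floor_fract_add_fract_add_fract_le_two (b₁ b₂ b₃ : ℝ) :
    ⌊Int.fract b₁ + Int.fract b₂ + Int.fract b₃⌋ ≤ 2 :=
  Int.lt_add_one_iff.1 <| Int.floor_lt.2 <| by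
    push_cast
    linarith [Int.fract_lt_one b₁, Int.fract_lt_one b₂, Int.fract_lt_one b₃]

lemma neg_one_zpow_floor_fract_mul_sin_pos {b₁ b₂ b₃ : ℝ} (h₁ : ∀ k : ℤ, b₁ ≠ k)
    (h₂ : ∀ k : ℤ, b₂ ≠ k) (h₃ : ∀ k : ℤ, b₃ ≠ k) (h : ∀ k : ℤ, b₁ + b₂ + b₃ ≠ k) :
    0 < (-1) ^ ⌊Int.fract b₁ + Int.fract b₂ + Int.fract b₃⌋ *
      (sin (π * b₁) * sin (π * b₂) * sin (π * b₃) * sin (π * (b₁ + b₂ + b₃))) := by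
  set P := ⌊Int.fract b₁ + Int.fract b₂ + Int.fract b₃⌋
  have hfloor : ⌊b₁ + b₂ + b₃⌋ = ⌊b₁⌋ + ⌊b₂⌋ + ⌊b₃⌋ + P := by
    rw [← Int.floor_intCast_add]
    congr 1
    push_cast
    simp only [Int.fract]
    ring
  have hsign : (-1 : ℝ) ^ P * ((-1) ^ ⌊b₁⌋ * (-1) ^ ⌊b₂⌋ * (-1) ^ ⌊b₃⌋ * (-1) ^ ⌊b₁ + b₂ + b₃⌋)
      = 1 := by
    simp only [← zpow_add₀ (by norm_num : (-1 : ℝ) ≠ 0), hfloor]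
    exact Even.neg_one_zpow ⟨⌊b₁⌋ + ⌊b₂⌋ + ⌊b₃⌋ + P, by ring⟩
  have hpos : 0 < sin (π * Int.fract b₁) * sin (π * Int.fract b₂) * sin (π * Int.fract b₃) *
      sin (π * Int.fract (b₁ + b₂ + b₃)) := by
    have := sin_pi_mul_fract_pos h₁; have := sin_pi_mul_fract_pos h₂
    have := sin_pi_mul_fract_pos h₃; have := sin_pi_mul_fract_pos h
    positivity
  simp only [sin_pi_mul_eq_neg_one_zpow_floor_mul b₁, sin_pi_mul_eq_neg_one_zpow_floor_mul b₂,
    sin_pi_mul_eq_neg_one_zpow_floor_mul b₃, sin_pi_mul_eq_neg_one_zpow_floor_mul (b₁ + b₂ + b₃)]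
  linear_combination hpos - sin (π * Int.fract b₁) * sin (π * Int.fract b₂) *
    sin (π * Int.fract b₃) * sin (π * Int.fract (b₁ + b₂ + b₃)) * hsign

end Sign

section Exp

open Complex ComplexConjugate
open scoped Real

lemma normSq_sq_mul_sq_sub_normSq_sq_add_sq {a b c d : ℂ} (ha : ‖a‖ = 1) (hb : ‖b‖ = 1)
    (hc : ‖c‖ = 1) (hd : ‖d‖ = 1) :
    ((normSq (a ^ 2 * b ^ 2 - c ^ 2 * d ^ 2) - normSq (a ^ 2 + b ^ 2 - (c ^ 2 + d ^ 2)) : ℝ) : ℂ)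
      = -((a / c - c / a) * (a / d - d / a) * (b / c - c / b) * (b / d - d / b)) := by
  have hne {z : ℂ} (hz : ‖z‖ = 1) : z ≠ 0 := norm_ne_zero_iff.1 (hz ▸ one_ne_zero)
  have := hne ha; have := hne hb; have := hne hc; have := hne hd
  push_cast
  simp only [← mul_conj, map_sub, map_add, map_mul, map_pow, ← inv_eq_conj ha,
    ← inv_eq_conj hb, ← inv_eq_conj hc, ← inv_eq_conj hd]
  field_simp
  ring

lemma exp_mul_I_div_sub_div (α β : ℝ) :
    exp (α * I) / exp (β * I) - exp (β * I) / exp (α * I) = 2 * Real.sin (α - β) * I := by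
  rw [← exp_sub, ← exp_sub, ← sub_mul, ← sub_mul, ← neg_sub (α : ℂ), ← ofReal_sub, ofReal_sin,
    two_sin]
  linear_combination (exp ((α - β : ℝ) * I) - exp (-(α - β : ℝ) * I)) * I_sq

lemma normSq_mul_sub_mul_sub_normSq_add_sub_add {s₁ s₂ r₁ r₂ : ℂ} {α₁ α₂ β₁ β₂ : ℝ}
    (hs₁ : s₁ = exp (↑(2 * α₁) * I)) (hs₂ : s₂ = exp (↑(2 * α₂) * I))
    (hr₁ : r₁ = exp (↑(2 * β₁) * I)) (hr₂ : r₂ = exp (↑(2 * β₂) * I)) :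
    normSq (s₁ * s₂ - r₁ * r₂) - normSq (s₁ + s₂ - (r₁ + r₂)) = -16 *
      (Real.sin (α₁ - β₁) * Real.sin (α₁ - β₂) * Real.sin (α₂ - β₁) * Real.sin (α₂ - β₂)) := by
  have hsq (t : ℝ) : exp (↑(2 * t) * I) = exp (t * I) ^ 2 := by
    rw [← exp_nat_mul]; push_cast; ring_nf
  apply ofReal_injective
  rw [hs₁, hs₂, hr₁, hr₂, hsq, hsq, hsq, hsq, normSq_sq_mul_sq_sub_normSq_sq_add_sq
    (norm_exp_ofReal_mul_I _) (norm_exp_ofReal_mul_I _) (norm_exp_ofReal_mul_I _)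
    (norm_exp_ofReal_mul_I _)]
  simp only [exp_mul_I_div_sub_div]
  push_cast [-ofReal_sin]
  linear_combination (-16 * Real.sin (α₁ - β₁) * Real.sin (α₁ - β₂) * Real.sin (α₂ - β₁) *
    Real.sin (α₂ - β₂) * (I ^ 2 - 1) : ℂ) * I_sq

lemma exp_ne_exp_of_eq_add_two_pi_I_mul {x y : ℂ} {a : ℝ} (h : x = y + 2 * π * I * a)
    (ha : ∀ k : ℤ, a ≠ k) : exp x ≠ exp y := by
  intro hxy
  obtain ⟨n, hn⟩ := exp_eq_exp_iff_exists_int.1 hxy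
  apply ha n
  have : 2 * π * I * (a - n) = 0 := by linear_combination hn - h
  exact_mod_cast sub_eq_zero.1 ((mul_eq_zero.1 this).resolve_left two_pi_I_ne_zero)

lemma normSq_sub_normSq_eq_sixteen_mul_sin {b₁ b₂ b₃ : ℝ} {r₁ r₂ s₁ s₂ : ℂ}
    (hr₁ : r₁ = exp (↑(-2 * π * (b₁ + b₂ + b₃)) * I)) (hr₂ : r₂ = exp (↑(-2 * π * b₁) * I))
    (hs₁ : s₁ = 1) (hs₂ : s₂ = exp (↑(-2 * π * (b₁ + b₃)) * I)) :
    normSq (s₁ * s₂ - r₁ * r₂) - normSq (s₁ + s₂ - (r₁ + r₂)) = 16 * (Real.sin (π * b₁) *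
      Real.sin (π * b₂) * Real.sin (π * b₃) * Real.sin (π * (b₁ + b₂ + b₃))) := by
  rw [normSq_mul_sub_mul_sub_normSq_add_sub_add (α₁ := 0) (α₂ := -(π * (b₁ + b₃)))
      (β₁ := -(π * (b₁ + b₂ + b₃))) (β₂ := -(π * b₁)) (by simp [hs₁]) (by rw [hs₂]; ring_nf)
      (by rw [hr₁]; ring_nf) (by rw [hr₂]; ring_nf),
    show (0 : ℝ) - -(π * (b₁ + b₂ + b₃)) = π * (b₁ + b₂ + b₃) by ring,
    show (0 : ℝ) - -(π * b₁) = π * b₁ by ring,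
    show -(π * (b₁ + b₃)) - -(π * (b₁ + b₂ + b₃)) = π * b₂ by ring,
    show -(π * (b₁ + b₃)) - -(π * b₁) = -(π * b₃) by ring, Real.sin_neg]
  ring

end Exp

section HermitianForm

open Complex ComplexConjugate

def balancedHermitian (α : ℝ) (β : ℂ) : Matrix (Fin 2) (Fin 2) ℂ :=
  !![(α : ℂ), β; conj β, α]

lemma isHermitian_balancedHermitian (α : ℝ) (β : ℂ) : (balancedHermitian α β).IsHermitian := by
  ext i j
  fin_cases i <;> fin_cases j <;> simp [balancedHermitian]

lemma det_balancedHermitian (α : ℝ) (β : ℂ) :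
    (balancedHermitian α β).det = ((α ^ 2 - normSq β : ℝ) : ℂ) := by
  rw [balancedHermitian, det_fin_two_of, mul_conj]
  push_cast; ring

lemma trace_balancedHermitian (α : ℝ) (β : ℂ) :
    (balancedHermitian α β).trace = ((2 * α : ℝ) : ℂ) := by
  rw [balancedHermitian, trace_fin_two_of]
  push_cast; ring

/-- `hq` and `hp` hold when both roots of `X² - p X + q` have modulus one. -/
lemma companion_conjTranspose_mul_balancedHermitian_mul {p q : ℂ} {α : ℝ} {β : ℂ}
    (hq : conj q * q = 1) (hp : conj p * q = p) (h : β + q * conj β = p * α) :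
    (!![0, -q; 1, p])ᴴ * balancedHermitian α β * !![0, -q; 1, p] = balancedHermitian α β := by
  have h' : conj β + conj q * β = conj p * α := by
    simpa [conj_ofReal] using congrArg conj h
  have hp' : p * conj q = conj p := by simpa using congrArg conj hp
  ext i j
  fin_cases i <;> fin_cases j <;>
    simp only [balancedHermitian, Fin.zero_eta, Fin.isValue, Fin.mk_one, Matrix.mul_apply,
      conjTranspose_apply, of_apply, cons_val', cons_val_zero, cons_val_one, cons_val_fin_one,
      RCLike.star_def, Fin.sum_univ_two, map_zero, map_one, map_neg, zero_mul, one_mul, zero_add,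
      mul_zero, mul_one, mul_neg, neg_mul]
  · linear_combination -h
  · linear_combination -h'
  · linear_combination (α : ℂ) * hq - β * hp' - conj p * h

/-- Solving `β + qᵢ β̄ = pᵢ α` for `i = 1, 2` gives `β / α = conj (p₂ - p₁) / conj (q₂ - q₁)`;
clearing the denominator gives this form. -/
def pairForm (p₁ q₁ p₂ q₂ : ℂ) : Matrix (Fin 2) (Fin 2) ℂ :=
  balancedHermitian (normSq (q₂ - q₁)) (conj (p₂ - p₁) * (q₂ - q₁))

lemma isHermitian_pairForm (p₁ q₁ p₂ q₂ : ℂ) : (pairForm p₁ q₁ p₂ q₂).IsHermitian :=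
  isHermitian_balancedHermitian _ _

lemma det_pairForm (p₁ q₁ p₂ q₂ : ℂ) : (pairForm p₁ q₁ p₂ q₂).det =
    ((normSq (q₂ - q₁) * (normSq (q₂ - q₁) - normSq (p₂ - p₁)) : ℝ) : ℂ) := by
  rw [pairForm, det_balancedHermitian, normSq_mul, normSq_conj]
  ring_nf

lemma trace_pairForm (p₁ q₁ p₂ q₂ : ℂ) :
    (pairForm p₁ q₁ p₂ q₂).trace = ((2 * normSq (q₂ - q₁) : ℝ) : ℂ) :=
  trace_balancedHermitian _ _

lemma pairForm_comm (p₁ q₁ p₂ q₂ : ℂ) : pairForm p₂ q₂ p₁ q₁ = pairForm p₁ q₁ p₂ q₂ := by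
  rw [pairForm, pairForm, ← neg_sub q₂, ← neg_sub p₂, normSq_neg, map_neg, neg_mul_neg]

lemma companion_conjTranspose_mul_pairForm_mul {p₁ q₁ p₂ q₂ : ℂ}
    (hq₁ : conj q₁ * q₁ = 1) (hp₁ : conj p₁ * q₁ = p₁)
    (hq₂ : conj q₂ * q₂ = 1) (hp₂ : conj p₂ * q₂ = p₂) :
    (!![0, -q₁; 1, p₁])ᴴ * pairForm p₁ q₁ p₂ q₂ * !![0, -q₁; 1, p₁] = pairForm p₁ q₁ p₂ q₂ := by
  refine companion_conjTranspose_mul_balancedHermitian_mul hq₁ hp₁ ?_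
  have hp₁' : p₁ * conj q₁ = conj p₁ := by simpa using congrArg conj hp₁
  have hp₂' : p₂ * conj q₂ = conj p₂ := by simpa using congrArg conj hp₂
  rw [← mul_conj]
  simp only [map_mul, map_sub, conj_conj]
  linear_combination (p₂ - p₁) * hq₂ - (p₂ - p₁) * hq₁ - (q₂ - q₁) * hp₂' + (q₂ - q₁) * hp₁'

lemma companions_conjTranspose_mul_pairForm_mul_of_norm_eq_one {r₁ r₂ s₁ s₂ : ℂ}
    (hr₁ : ‖r₁‖ = 1) (hr₂ : ‖r₂‖ = 1) (hs₁ : ‖s₁‖ = 1) (hs₂ : ‖s₂‖ = 1) :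
    let K := pairForm (r₁ + r₂) (r₁ * r₂) (s₁ + s₂) (s₁ * s₂)
    (!![0, -(r₁ * r₂); 1, r₁ + r₂])ᴴ * K * !![0, -(r₁ * r₂); 1, r₁ + r₂] = K ∧
      (!![0, -(s₁ * s₂); 1, s₁ + s₂])ᴴ * K * !![0, -(s₁ * s₂); 1, s₁ + s₂] = K := by
  have hq {z w : ℂ} (hz : ‖z‖ = 1) (hw : ‖w‖ = 1) : conj (z * w) * (z * w) = 1 := by
    rw [← normSq_eq_conj_mul_self, normSq_eq_norm_sq, norm_mul, hz, hw]; norm_num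
  have hp {z w : ℂ} (hz : ‖z‖ = 1) (hw : ‖w‖ = 1) : conj (z + w) * (z * w) = z + w := by
    have hz₀ : z ≠ 0 := norm_ne_zero_iff.1 (hz ▸ one_ne_zero)
    have hw₀ : w ≠ 0 := norm_ne_zero_iff.1 (hw ▸ one_ne_zero)
    rw [map_add, ← inv_eq_conj hz, ← inv_eq_conj hw]
    field_simp
    ring
  refine ⟨companion_conjTranspose_mul_pairForm_mul (hq hr₁ hr₂) (hp hr₁ hr₂) (hq hs₁ hs₂)
    (hp hs₁ hs₂), ?_⟩
  rw [← pairForm_comm]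
  exact companion_conjTranspose_mul_pairForm_mul (hq hs₁ hs₂) (hp hs₁ hs₂) (hq hr₁ hr₂) (hp hr₁ hr₂)

end HermitianForm

lemma card_filter_fin_two (p : Fin 2 → Prop) [DecidablePred p] :
    #{i | p i} = (if p 0 then 1 else 0) + (if p 1 then 1 else 0) := by
  rw [card_filter, Fin.sum_univ_two]

lemma card_pos_eq_two_of_mul_pos_of_add_pos {e : Fin 2 → ℝ} (hm : 0 < e 0 * e 1)
    (ha : 0 < e 0 + e 1) : #{i | 0 < e i} = 2 ∧ #{i | e i < 0} = 0 := by
  have h₀ : 0 < e 0 := by nlinarith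
  have h₁ : 0 < e 1 := by nlinarith
  simp [card_filter_fin_two, h₀, h₁, h₀.not_gt, h₁.not_gt]

lemma card_neg_eq_two_of_mul_pos_of_add_neg {e : Fin 2 → ℝ} (hm : 0 < e 0 * e 1)
    (ha : e 0 + e 1 < 0) : #{i | 0 < e i} = 0 ∧ #{i | e i < 0} = 2 := by
  have h₀ : e 0 < 0 := by nlinarith
  have h₁ : e 1 < 0 := by nlinarith
  simp [card_filter_fin_two, h₀, h₁, h₀.not_gt, h₁.not_gt]

lemma card_pos_eq_one_of_mul_neg {e : Fin 2 → ℝ} (hm : e 0 * e 1 < 0) :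
    #{i | 0 < e i} = 1 ∧ #{i | e i < 0} = 1 := by
  rcases mul_neg_iff.1 hm with ⟨h₀, h₁⟩ | ⟨h₀, h₁⟩ <;>
    simp [card_filter_fin_two, h₀, h₁, h₀.not_gt, h₁.not_gt]

namespace Matrix.IsHermitian

variable {H : Matrix (Fin 2) (Fin 2) ℂ} (hH : H.IsHermitian)

lemma eigenvalues_mul_fin_two : hH.eigenvalues 0 * hH.eigenvalues 1 = H.det.re := by
  simp [hH.det_eq_prod_eigenvalues, Fin.prod_univ_two]

lemma eigenvalues_add_fin_two : hH.eigenvalues 0 + hH.eigenvalues 1 = H.trace.re := by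
  simp [hH.trace_eq_sum_eigenvalues, Fin.sum_univ_two]

theorem exists_smul_signature {K : Matrix (Fin 2) (Fin 2) ℂ}
    (hK : K.IsHermitian) (htr : 0 < K.trace.re) {P : ℤ} (hP₀ : 0 ≤ P) (hP₂ : P ≤ 2)
    (hdet : 0 < (-1) ^ P * K.det.re) :
    ∃ ε : ℝ, ∃ hH : ((ε : ℂ) • K).IsHermitian, ((ε : ℂ) • K).det ≠ 0 ∧
      (#{i | 0 < hH.eigenvalues i} : ℤ) = P ∧ (#{i | hH.eigenvalues i < 0} : ℤ) = 2 - P := by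
  have scaled (ε : ℝ) : ∃ hH : ((ε : ℂ) • K).IsHermitian,
      hH.eigenvalues 0 * hH.eigenvalues 1 = ε ^ 2 * K.det.re ∧
      hH.eigenvalues 0 + hH.eigenvalues 1 = ε * K.trace.re := by
    have hH := hK.smul (Complex.conj_ofReal ε)
    refine ⟨hH, ?_, ?_⟩
    · rw [eigenvalues_mul_fin_two, det_smul, Fintype.card_fin, ← Complex.ofReal_pow,
        Complex.re_ofReal_mul]
    · rw [eigenvalues_add_fin_two, trace_smul]; simp
  suffices ∃ ε : ℝ, ∃ hH : ((ε : ℂ) • K).IsHermitian, hH.eigenvalues 0 * hH.eigenvalues 1 ≠ 0 ∧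
      (#{i | 0 < hH.eigenvalues i} : ℤ) = P ∧ (#{i | hH.eigenvalues i < 0} : ℤ) = 2 - P by
    obtain ⟨ε, hH, hne, hcard⟩ := this
    refine ⟨ε, hH, fun hdet₀ => hne ?_, hcard⟩
    rw [eigenvalues_mul_fin_two, hdet₀, Complex.zero_re]
  interval_cases P
  · obtain ⟨hH, hm, ha⟩ := scaled (-1)
    have hm' : 0 < hH.eigenvalues 0 * hH.eigenvalues 1 := by rw [hm]; simpa using hdet
    obtain ⟨hpos, hneg⟩ := card_neg_eq_two_of_mul_pos_of_add_neg hm' (by rw [ha]; linarith)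
    exact ⟨-1, hH, hm'.ne', by rw [hpos]; norm_num, by rw [hneg]; norm_num⟩
  · obtain ⟨hH, hm, -⟩ := scaled 1
    have hm' : hH.eigenvalues 0 * hH.eigenvalues 1 < 0 := by rw [hm]; linarith
    obtain ⟨hpos, hneg⟩ := card_pos_eq_one_of_mul_neg hm'
    exact ⟨1, hH, hm'.ne, by rw [hpos]; norm_num, by rw [hneg]; norm_num⟩
  · obtain ⟨hH, hm, ha⟩ := scaled 1
    have hm' : 0 < hH.eigenvalues 0 * hH.eigenvalues 1 := by rw [hm]; simpa using hdet
    obtain ⟨hpos, hneg⟩ := card_pos_eq_two_of_mul_pos_of_add_pos hm' (by rw [ha]; linarith)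
    exact ⟨1, hH, hm'.ne', by rw [hpos]; norm_num, by rw [hneg]; norm_num⟩

end Matrix.IsHermitian

open Complex
open scoped Real

theorem three_lines_invariant_hermitian_signature_general (a₁ a₂ a₃ : ℝ)
    (ha₃ : ∀ k : ℤ, a₃ ≠ k)
    (b₁ b₂ b₃ : ℝ)
    (hb₁ : b₁ = (a₂ + a₃ - a₁) / 2) (hb₂ : b₂ = (a₃ + a₁ - a₂) / 2)
    (hb₃ : b₃ = (a₁ + a₂ - a₃) / 2)
    (hbZ₁ : ∀ k : ℤ, b₁ ≠ k) (hbZ₂ : ∀ k : ℤ, b₂ ≠ k) (hbZ₃ : ∀ k : ℤ, b₃ ≠ k)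
    (hbsum : ∀ k : ℤ, b₁ + b₂ + b₃ ≠ k)
    (c : ℝ) (hc : c = (a₁ + a₂ + a₃) / 2)
    (r₁ r₂ s₁ s₂ : ℂ)
    (hr₁ : r₁ = Complex.exp (-(2 * Real.pi * Complex.I * (c : ℂ))))
    (hr₂ : r₂ = Complex.exp (2 * Real.pi * Complex.I * ((a₁ : ℂ) - (c : ℂ))))
    (hs₁ : s₁ = 1)
    (hs₂ : s₂ = Complex.exp (-(2 * Real.pi * Complex.I * (a₂ : ℂ))))
    (R S : Matrix (Fin 2) (Fin 2) ℂ)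
    (hR : R = !![0, -(r₁ * r₂); 1, r₁ + r₂])
    (hS : S = !![0, -(s₁ * s₂); 1, s₁ + s₂]) :
    ∃ H : Matrix (Fin 2) (Fin 2) ℂ, ∃ hH : H.IsHermitian,
      Rᴴ * H * R = H ∧ Sᴴ * H * S = H ∧ H.det ≠ 0 ∧
      ((Finset.univ.filter fun i => 0 < hH.eigenvalues i).card : ℤ) =
        ⌊Int.fract b₁ + Int.fract b₂ + Int.fract b₃⌋ ∧
      ((Finset.univ.filter fun i => hH.eigenvalues i < 0).card : ℤ) =
        2 - ⌊Int.fract b₁ + Int.fract b₂ + Int.fract b₃⌋ := by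
  have hr₁' : r₁ = exp (↑(-2 * π * (b₁ + b₂ + b₃)) * I) := by
    rw [hr₁, hc, hb₁, hb₂, hb₃]; congr 1; push_cast; ring
  have hr₂' : r₂ = exp (↑(-2 * π * b₁) * I) := by rw [hr₂, hb₁, hc]; congr 1; push_cast; ring
  have hs₂' : s₂ = exp (↑(-2 * π * (b₁ + b₃)) * I) := by
    rw [hs₂, hb₁, hb₃]; congr 1; push_cast; ring
  have hunit {z : ℂ} {t : ℝ} (hz : z = exp (t * I)) : ‖z‖ = 1 := hz ▸ norm_exp_ofReal_mul_I t
  obtain ⟨hRK, hSK⟩ := companions_conjTranspose_mul_pairForm_mul_of_norm_eq_one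
    (hunit hr₁') (hunit hr₂') (hs₁ ▸ norm_one) (hunit hs₂')
  have hv : s₁ * s₂ - r₁ * r₂ ≠ 0 := by
    rw [hs₁, hs₂, hr₁, hr₂, one_mul, ← exp_add, sub_ne_zero]
    exact exp_ne_exp_of_eq_add_two_pi_I_mul (a := a₃) (by rw [hc]; push_cast; ring) ha₃
  have hdet : 0 < (-1) ^ ⌊Int.fract b₁ + Int.fract b₂ + Int.fract b₃⌋ *
      (pairForm (r₁ + r₂) (r₁ * r₂) (s₁ + s₂) (s₁ * s₂)).det.re := by
    rw [det_pairForm, ofReal_re, normSq_sub_normSq_eq_sixteen_mul_sin hr₁' hr₂' hs₁ hs₂']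
    linear_combination 16 * mul_pos (normSq_pos.2 hv)
      (neg_one_zpow_floor_fract_mul_sin_pos hbZ₁ hbZ₂ hbZ₃ hbsum)
  have htr : 0 < (pairForm (r₁ + r₂) (r₁ * r₂) (s₁ + s₂) (s₁ * s₂)).trace.re := by
    rw [trace_pairForm, ofReal_re]
    exact mul_pos two_pos (normSq_pos.2 hv)
  obtain ⟨ε, hH, hdetH, hpos, hneg⟩ := (isHermitian_pairForm _ _ _ _).exists_smul_signature htr
    (Int.floor_nonneg.2 (by positivity)) (floor_fract_add_fract_add_fract_le_two b₁ b₂ b₃) hdet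
  refine ⟨_, hH, ?_, ?_, hdetH, hpos, hneg⟩
  · rw [Matrix.mul_smul, Matrix.smul_mul, hR, hRK]
  · rw [Matrix.mul_smul, Matrix.smul_mul, hS, hSK]

/-- The invariant Hermitian form for the three-line standard connection: with real
non-integer residue traces `a₁, a₂, a₃`, parameters `b i = (a j + a k − a i)/2` non-integer
and of non-integer sum, the holonomy generators `R`, `S` (companion matrices built from
`r₁ = exp(−2πi c)`, `r₂ = exp(2πi(a₁−c))`, `s₁ = 1`, `s₂ = exp(−2πi a₂)`, `c = (∑ a i)/2`)
preserve a non-degenerate Hermitian matrix `H` with exactly `p = ⌊{b₁}+{b₂}+{b₃}⌋`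
positive eigenvalues and `2 − p` negative eigenvalues. -/
theorem three_lines_invariant_hermitian_signature (a₁ a₂ a₃ : ℝ)
    (ha₁ : ∀ k : ℤ, a₁ ≠ k) (ha₂ : ∀ k : ℤ, a₂ ≠ k) (ha₃ : ∀ k : ℤ, a₃ ≠ k)
    (b₁ b₂ b₃ : ℝ)
    (hb₁ : b₁ = (a₂ + a₃ - a₁) / 2) (hb₂ : b₂ = (a₃ + a₁ - a₂) / 2)
    (hb₃ : b₃ = (a₁ + a₂ - a₃) / 2)
    (hbZ₁ : ∀ k : ℤ, b₁ ≠ k) (hbZ₂ : ∀ k : ℤ, b₂ ≠ k) (hbZ₃ : ∀ k : ℤ, b₃ ≠ k)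
    (hbsum : ∀ k : ℤ, b₁ + b₂ + b₃ ≠ k)
    (c : ℝ) (hc : c = (a₁ + a₂ + a₃) / 2)
    (r₁ r₂ s₁ s₂ : ℂ)
    (hr₁ : r₁ = Complex.exp (-(2 * Real.pi * Complex.I * (c : ℂ))))
    (hr₂ : r₂ = Complex.exp (2 * Real.pi * Complex.I * ((a₁ : ℂ) - (c : ℂ))))
    (hs₁ : s₁ = 1)
    (hs₂ : s₂ = Complex.exp (-(2 * Real.pi * Complex.I * (a₂ : ℂ))))
    (R S : Matrix (Fin 2) (Fin 2) ℂ)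
    (hR : R = !![0, -(r₁ * r₂); 1, r₁ + r₂])
    (hS : S = !![0, -(s₁ * s₂); 1, s₁ + s₂]) :
    ∃ H : Matrix (Fin 2) (Fin 2) ℂ, ∃ hH : H.IsHermitian,
      Rᴴ * H * R = H ∧ Sᴴ * H * S = H ∧ H.det ≠ 0 ∧
      ((Finset.univ.filter fun i => 0 < hH.eigenvalues i).card : ℤ) =
        ⌊Int.fract b₁ + Int.fract b₂ + Int.fract b₃⌋ ∧
      ((Finset.univ.filter fun i => hH.eigenvalues i < 0).card : ℤ) =
        2 - ⌊Int.fract b₁ + Int.fract b₂ + Int.fract b₃⌋ :=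
  three_lines_invariant_hermitian_signature_general a₁ a₂ a₃ ha₃ b₁ b₂ b₃ hb₁ hb₂ hb₃ hbZ₁ hbZ₂ hbZ₃
    hbsum c hc r₁ r₂ s₁ s₂ hr₁ hr₂ hs₁ hs₂ R S hR hS
end

section
/- Let a₁, a₂, a₃ be nonzero real numbers and define the 2×2 complex matrices A₁ = [[a₁, 0],[(a₁+a₃−a₂)/2, 0]], A₂ = [[0, (a₂+a₃−a₁)/2],[0, a₂]], and A₃ = [[(a₂+a₃−a₁)/2, (a₁−a₂−a₃)/2],[(a₂−a₁−a₃)/2, (a₁+a₃−a₂)/2]]. Then there exists a positive definite Hermitian 2×2 matrix H such that H·A_i = A_i*·H for i = 1, 2, 3 (i.e. each A_i is self-adjoint with respect to the inner product ⟨v,w⟩_H = ⟨Hv,w⟩) if and only if |a₁| < |a₂|+|a₃|, |a₂| < |a₁|+|a₃| and |a₃| < |a₁|+|a₂|. -/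
/-!
Since `A₁ + A₂ + A₃` is a real multiple of the identity, only `A₁` and `A₂` constrain `H`.
Self-adjointness of `A₁` forces `H` to be a real symmetric matrix `!![p, q; q, r]`, and then the
two conditions are the linear relations `a₁ q + α r = 0` and `β p + a₂ q = 0`, where
`α = (a₁ + a₃ - a₂) / 2` and `β = (a₂ + a₃ - a₁) / 2`. They give `q² / (p r) = α β / (a₁ a₂)`, so a
positive definite solution exists iff this ratio lies in `(0, 1)`, i.e. iff
`α β (a₁ a₂ - α β) > 0`. Finally `16 α β (a₁ a₂ - α β)` is Heron's product
`(a₁ + a₂ + a₃)(-a₁ + a₂ + a₃)(a₁ - a₂ + a₃)(a₁ + a₂ - a₃)`, which only depends on the `|aᵢ|` and is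
positive exactly under the strict triangle inequalities.
-/

open Matrix
open scoped ComplexOrder

def heron (a b c : ℝ) : ℝ := (a + b + c) * (-a + b + c) * (a - b + c) * (a + b - c)

lemma heron_eq_in_squares (a b c : ℝ) :
    heron a b c = 2 * (a ^ 2 * b ^ 2 + b ^ 2 * c ^ 2 + c ^ 2 * a ^ 2)
      - ((a ^ 2) ^ 2 + (b ^ 2) ^ 2 + (c ^ 2) ^ 2) := by
  unfold heron; ring

lemma heron_abs (a b c : ℝ) : heron |a| |b| |c| = heron a b c := by
  rw [heron_eq_in_squares, heron_eq_in_squares, sq_abs, sq_abs, sq_abs]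

lemma heron_pos_iff_of_nonneg {x y z : ℝ} (hx : 0 ≤ x) (hy : 0 ≤ y) (hz : 0 ≤ z) :
    0 < heron x y z ↔ x < y + z ∧ y < x + z ∧ z < x + y := by
  unfold heron
  constructor
  · intro h
    refine ⟨?_, ?_, ?_⟩ <;> by_contra! hc
    · nlinarith [mul_nonneg (mul_nonneg (by linarith : 0 ≤ x + y + z)
        (by linarith : 0 ≤ x - y + z)) (by linarith : 0 ≤ x + y - z)]
    · nlinarith [mul_nonneg (mul_nonneg (by linarith : 0 ≤ x + y + z)
        (by linarith : 0 ≤ -x + y + z)) (by linarith : 0 ≤ x + y - z)]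
    · nlinarith [mul_nonneg (mul_nonneg (by linarith : 0 ≤ x + y + z)
        (by linarith : 0 ≤ -x + y + z)) (by linarith : 0 ≤ x - y + z)]
  · rintro ⟨h₁, h₂, h₃⟩
    exact mul_pos (mul_pos (mul_pos (by linarith) (by linarith)) (by linarith)) (by linarith)

lemma heron_pos_iff (a b c : ℝ) :
    0 < heron a b c ↔ |a| < |b| + |c| ∧ |b| < |a| + |c| ∧ |c| < |a| + |b| := by
  rw [← heron_abs, heron_pos_iff_of_nonneg (abs_nonneg a) (abs_nonneg b) (abs_nonneg c)]

lemma heron_eq_sixteen_mul (a b c : ℝ) :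
    heron a b c = 16 * ((a + c - b) / 2 * ((b + c - a) / 2) *
      (a * b - (a + c - b) / 2 * ((b + c - a) / 2))) := by
  unfold heron; ring

lemma exists_pos_solution_iff {a₁ a₂ α β : ℝ} (h₁ : a₁ ≠ 0) (h₂ : a₂ ≠ 0) (hαβ : α + β ≠ 0) :
    (∃ p q r : ℝ, 0 < p ∧ q * q < p * r ∧ a₁ * q + α * r = 0 ∧ β * p + a₂ * q = 0) ↔
      0 < α * β * (a₁ * a₂ - α * β) := by
  constructor
  · rintro ⟨p, q, r, hp, hdet, e₁, e₂⟩
    have hpr : 0 < p * r := (mul_self_nonneg q).trans_lt hdet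
    have hq : q ≠ 0 := by
      rintro rfl
      have hr : 0 < r := pos_of_mul_pos_right hpr hp.le
      have hα : α = 0 := by simpa [hr.ne'] using e₁
      have hβ : β = 0 := by simpa [hp.ne'] using e₂
      exact hαβ (by rw [hα, hβ, add_zero])
    have key : (p * r) ^ 2 * (α * β * (a₁ * a₂ - α * β)) =
        (a₁ * a₂) ^ 2 * q ^ 2 * (p * r - q * q) := by
      linear_combination (-(a₂ * q) * e₁ + α * r * e₂) *
        (p * r * a₁ * a₂ - α * β * p * r - a₁ * a₂ * q ^ 2)
    have hpos : 0 < (a₁ * a₂) ^ 2 * q ^ 2 * (p * r - q * q) :=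
      mul_pos (by have := mul_ne_zero h₁ h₂; positivity) (sub_pos.mpr hdet)
    exact pos_of_mul_pos_right (key ▸ hpos) (by positivity)
  · intro h
    have hαβ0 : α * β ≠ 0 := by rintro h0; simp [h0] at h
    have hc : a₂ * α ≠ 0 := mul_ne_zero h₂ (left_ne_zero_of_mul hαβ0)
    -- `(p, q, r) = (a₂ α, -α β, a₁ β)` solves both relations; rescale by `a₂ α` to get `p > 0`
    refine ⟨(a₂ * α) ^ 2, -(a₂ * α) * (α * β), a₂ * α * (a₁ * β), by positivity, ?_, by ring,
      by ring⟩
    have hpos : 0 < (a₂ * α) ^ 2 * (α * β * (a₁ * a₂ - α * β)) := mul_pos (by positivity) h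
    linear_combination hpos

lemma posDef_ofReal_fin_two_iff (p q r : ℝ) :
    (!![(p : ℂ), q; q, r]).PosDef ↔ 0 < p ∧ q * q < p * r := by
  constructor
  · intro h
    have hp : (0 : ℂ) < p := by simpa using h.diag_pos (i := 0)
    have hdet : (0 : ℂ) < ((p * r - q * q : ℝ) : ℂ) := by
      simpa [det_fin_two_of] using h.det_pos
    exact ⟨Complex.zero_lt_real.mp hp, sub_pos.mp (Complex.zero_lt_real.mp hdet)⟩
  · rintro ⟨hp, hdet⟩
    -- the LDL factorisation `!![p, q; q, r] = Lᴴ D L` with `D = diag(p, (p r - q²) / p)`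
    have hD : (diagonal ![(p : ℂ), ((p * r - q * q) / p : ℝ)]).PosDef := by
      refine PosDef.diagonal fun i => ?_
      fin_cases i
      · simpa using hp
      · exact Complex.zero_lt_real.mpr (div_pos (sub_pos.mpr hdet) hp)
    have hL : Function.Injective (!![(1 : ℂ), (q / p : ℝ); 0, 1]).mulVec := by
      apply mulVec_injective_of_isUnit
      simp [isUnit_iff_isUnit_det, det_fin_two_of]
    convert hD.conjTranspose_mul_mul_same hL using 1
    ext i j
    fin_cases i <;> fin_cases j <;> simp [mul_apply, Fin.sum_univ_two, conjTranspose_apply] <;>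
      field_simp
    ring

lemma IsHermitian.exists_ofReal_fin_two {H : Matrix (Fin 2) (Fin 2) ℂ} (hH : H.IsHermitian)
    (hsymm : H 0 1 = H 1 0) : ∃ p q r : ℝ, H = !![(p : ℂ), q; q, r] := by
  have hq : (starRingEnd ℂ) (H 0 1) = H 0 1 :=
    (congrArg _ hsymm).trans (by simpa using congrFun₂ hH 0 1)
  obtain ⟨q, hq⟩ := Complex.conj_eq_iff_real.mp hq
  refine ⟨(H 0 0).re, q, (H 1 1).re, ?_⟩
  ext i j
  fin_cases i <;> fin_cases j
  · exact (hH.coe_re_apply_self 0).symm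
  · exact hq
  · exact hsymm ▸ hq
  · exact (hH.coe_re_apply_self 1).symm

lemma mul_eq_conjTranspose_mul_of_add_add_eq_smul_one {𝕜 n : Type*} [RCLike 𝕜] [Fintype n]
    [DecidableEq n] {H A B C : Matrix n n 𝕜} {s : ℝ} (hsum : A + B + C = s • 1)
    (hA : H * A = Aᴴ * H) (hB : H * B = Bᴴ * H) : H * C = Cᴴ * H := by
  rw [eq_sub_of_add_eq' hsum]
  simp [mul_sub, sub_mul, mul_add, add_mul, hA, hB]

section SelfAdjointFinTwo

variable {a b c d : ℝ}

lemma apply_zero_one_eq_of_mul_eq_conjTranspose_mul {H : Matrix (Fin 2) (Fin 2) ℂ} (ha : a ≠ 0)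
    (h : H * !![(a : ℂ), 0; (c : ℂ), 0] = (!![(a : ℂ), 0; (c : ℂ), 0])ᴴ * H) :
    H 0 1 = H 1 0 := by
  have e₀₁ := congrFun₂ h 0 1
  have e₁₀ := congrFun₂ h 1 0
  simp [mul_apply, conjTranspose_apply] at e₀₁ e₁₀
  have : (a : ℂ) * (H 0 1 - H 1 0) = 0 := by linear_combination -e₀₁ - e₁₀
  simpa [ha, sub_eq_zero] using this

lemma ofReal_fin_two_mul_eq_conjTranspose_mul_iff_left (p q r : ℝ) :
    !![(p : ℂ), q; q, r] * !![(a : ℂ), 0; (c : ℂ), 0] =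
        (!![(a : ℂ), 0; (c : ℂ), 0])ᴴ * !![(p : ℂ), q; q, r] ↔ a * q + c * r = 0 := by
  simp [← Matrix.ext_iff, Fin.forall_fin_two, mul_apply, conjTranspose_apply]
  norm_cast
  grind

lemma ofReal_fin_two_mul_eq_conjTranspose_mul_iff_right (p q r : ℝ) :
    !![(p : ℂ), q; q, r] * !![0, (b : ℂ); 0, (d : ℂ)] =
        (!![0, (b : ℂ); 0, (d : ℂ)])ᴴ * !![(p : ℂ), q; q, r] ↔ b * p + d * q = 0 := by
  simp [← Matrix.ext_iff, Fin.forall_fin_two, mul_apply, conjTranspose_apply]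
  norm_cast
  grind

lemma exists_posDef_mul_eq_conjTranspose_mul_iff (ha : a ≠ 0) :
    (∃ H : Matrix (Fin 2) (Fin 2) ℂ, H.PosDef ∧
        H * !![(a : ℂ), 0; (c : ℂ), 0] = (!![(a : ℂ), 0; (c : ℂ), 0])ᴴ * H ∧
        H * !![0, (b : ℂ); 0, (d : ℂ)] = (!![0, (b : ℂ); 0, (d : ℂ)])ᴴ * H) ↔
      ∃ p q r : ℝ, 0 < p ∧ q * q < p * r ∧ a * q + c * r = 0 ∧ b * p + d * q = 0 := by
  constructor
  · rintro ⟨H, hH, hA, hB⟩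
    obtain ⟨p, q, r, rfl⟩ := IsHermitian.exists_ofReal_fin_two hH.isHermitian
      (apply_zero_one_eq_of_mul_eq_conjTranspose_mul ha hA)
    rw [posDef_ofReal_fin_two_iff] at hH
    rw [ofReal_fin_two_mul_eq_conjTranspose_mul_iff_left] at hA
    rw [ofReal_fin_two_mul_eq_conjTranspose_mul_iff_right] at hB
    exact ⟨p, q, r, hH.1, hH.2, hA, hB⟩
  · rintro ⟨p, q, r, hp, hdet, hA, hB⟩
    exact ⟨_, (posDef_ofReal_fin_two_iff p q r).mpr ⟨hp, hdet⟩,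
      (ofReal_fin_two_mul_eq_conjTranspose_mul_iff_left p q r).mpr hA,
      (ofReal_fin_two_mul_eq_conjTranspose_mul_iff_right p q r).mpr hB⟩

end SelfAdjointFinTwo

/-- The three-line standard connection with nonzero real residue traces `a₁, a₂, a₃`
is Dunkl (its residue matrices `A₁, A₂, A₃` are simultaneously self-adjoint with
respect to some positive definite Hermitian inner product `H`) if and only if the
strict triangle inequalities `|a i| < |a j| + |a k|` hold. -/
theorem three_lines_dunkl_iff_triangle (a₁ a₂ a₃ : ℝ)
    (h₁ : a₁ ≠ 0) (h₂ : a₂ ≠ 0) (h₃ : a₃ ≠ 0)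
    (A₁ A₂ A₃ : Matrix (Fin 2) (Fin 2) ℂ)
    (hA₁ : A₁ = !![(a₁ : ℂ), 0; (((a₁ + a₃ - a₂) / 2 : ℝ) : ℂ), 0])
    (hA₂ : A₂ = !![0, (((a₂ + a₃ - a₁) / 2 : ℝ) : ℂ); 0, (a₂ : ℂ)])
    (hA₃ : A₃ = !![(((a₂ + a₃ - a₁) / 2 : ℝ) : ℂ), (((a₁ - a₂ - a₃) / 2 : ℝ) : ℂ);
                   (((a₂ - a₁ - a₃) / 2 : ℝ) : ℂ), (((a₁ + a₃ - a₂) / 2 : ℝ) : ℂ)]) :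
    (∃ H : Matrix (Fin 2) (Fin 2) ℂ, H.PosDef ∧
        H * A₁ = A₁ᴴ * H ∧ H * A₂ = A₂ᴴ * H ∧ H * A₃ = A₃ᴴ * H) ↔
      (|a₁| < |a₂| + |a₃| ∧ |a₂| < |a₁| + |a₃| ∧ |a₃| < |a₁| + |a₂|) := by
  have hsum : A₁ + A₂ + A₃ = ((a₁ + a₂ + a₃) / 2 : ℝ) • 1 := by
    subst hA₁ hA₂ hA₃
    ext i j
    fin_cases i <;> fin_cases j <;> simp <;> ring
  have hA₃_free : (∃ H : Matrix (Fin 2) (Fin 2) ℂ, H.PosDef ∧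
      H * A₁ = A₁ᴴ * H ∧ H * A₂ = A₂ᴴ * H ∧ H * A₃ = A₃ᴴ * H) ↔
      ∃ H : Matrix (Fin 2) (Fin 2) ℂ, H.PosDef ∧ H * A₁ = A₁ᴴ * H ∧ H * A₂ = A₂ᴴ * H :=
    exists_congr fun _ => ⟨fun ⟨hH, e₁, e₂, _⟩ => ⟨hH, e₁, e₂⟩, fun ⟨hH, e₁, e₂⟩ =>
      ⟨hH, e₁, e₂, mul_eq_conjTranspose_mul_of_add_add_eq_smul_one hsum e₁ e₂⟩⟩
  have hαβ : (a₁ + a₃ - a₂) / 2 + (a₂ + a₃ - a₁) / 2 ≠ 0 := by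
    convert h₃ using 1; ring
  rw [hA₃_free, hA₁, hA₂, exists_posDef_mul_eq_conjTranspose_mul_iff h₁,
    exists_pos_solution_iff h₁ h₂ hαβ, ← heron_pos_iff, heron_eq_sixteen_mul]
  exact (mul_pos_iff_of_pos_left (by norm_num)).symm
end

section
/- Let a be a real number with 2a ∉ ℤ. Set r₁ = exp(−πi(1+2a)), r₂ = exp(−πi·a), s₁ = 1, s₂ = exp(−πi(1+a)), and define R = [[0, −r₁r₂],[1, r₁+r₂]] and S = [[0, −s₁s₂],[1, s₁+s₂]]. Then there exists a positive definite Hermitian 2×2 matrix H with R*·H·R = H and S*·H·S = H if and only if there is an integer k with 2k < a < 2k + 1/2 or with 2k + 3/2 < a < 2k + 2. -/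
/-!
Write `E = exp (-π i a)`, so that `r₁ = -E²`, `r₂ = E`, `s₁ = 1`, `s₂ = -E`, `|E| = 1`, and
`E² ≠ 1` because `a ∉ ℤ`. Comparing the `(0,0)` and `(0,1)` entries of `Sᴴ H S = H` and
`Rᴴ H R = H` forces `H₁₁ = H₀₀` and `H₀₁ (1 + E) = H₀₀ E (1 - E)`, so an invariant form is
determined up to a scalar by `H₀₀`. Positivity of its determinant, `H₀₀² > |H₀₁|²`, then reads
`|1 - E| < |1 + E|`, i.e. `cos (π a) = Re E > 0`. Conversely, when `Re E > 0` the form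
`[[|1 + E|², 1 - E²], [1 - Ē², |1 + E|²]]` is invariant and has trace `2 |1 + E|²` and
determinant `4 |1 + E|² Re E`, both positive. Finally, `cos (π a) > 0` exactly when `a` lies
within `1/2` of an even integer.
-/

open Matrix ComplexConjugate
open scoped ComplexOrder

theorem Matrix.IsHermitian.posDef_iff_trace_pos_and_det_pos {𝕜 : Type*} [RCLike 𝕜]
    {A : Matrix (Fin 2) (Fin 2) 𝕜} (hA : A.IsHermitian) :
    A.PosDef ↔ 0 < A.trace ∧ 0 < A.det := by
  rw [hA.posDef_iff_eigenvalues_pos, hA.trace_eq_sum_eigenvalues, hA.det_eq_prod_eigenvalues,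
    Fin.sum_univ_two, Fin.prod_univ_two, ← RCLike.ofReal_add, ← RCLike.ofReal_mul,
    RCLike.ofReal_pos, RCLike.ofReal_pos, Fin.forall_fin_two]
  constructor
  · rintro ⟨h₀, h₁⟩
    exact ⟨add_pos h₀ h₁, mul_pos h₀ h₁⟩
  · rintro ⟨hsum, hprod⟩
    exact (pos_and_pos_or_neg_and_neg_of_mul_pos hprod).resolve_right fun h ↦ by
      linarith [h.1, h.2]

open Real in
theorem Real.cos_pi_mul_pos_iff (a : ℝ) :
    0 < cos (π * a) ↔ ∃ k : ℤ, |a - 2 * k| < 1 / 2 := by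
  have hperiodic (k : ℤ) : cos (π * a) = cos (π * |a - 2 * k|) := by
    rw [← abs_of_pos pi_pos, ← abs_mul, abs_of_pos pi_pos, cos_abs,
      show π * (a - 2 * k) = π * a - k * (2 * π) by ring, cos_sub_int_mul_two_pi]
  constructor
  · intro hcos
    refine ⟨round (a / 2), ?_⟩
    by_contra! hfar
    have hnear : |a - 2 * round (a / 2)| ≤ 1 := by
      have := abs_sub_round (a / 2)
      rw [show a - 2 * round (a / 2) = 2 * (a / 2 - round (a / 2)) by ring, abs_mul, abs_two]
      linarith
    rw [hperiodic (round (a / 2))] at hcos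
    have := cos_nonpos_of_pi_div_two_le_of_le (x := π * |a - 2 * round (a / 2)|)
      (by nlinarith [pi_pos]) (by nlinarith [pi_pos])
    linarith
  · rintro ⟨k, hk⟩
    rw [hperiodic k]
    apply cos_pos_of_mem_Ioo
    constructor <;> nlinarith [abs_nonneg (a - 2 * k), pi_pos]

theorem exists_abs_sub_two_mul_lt_half_iff {a : ℝ} (ha : ∀ k : ℤ, a ≠ 2 * k) :
    (∃ k : ℤ, |a - 2 * k| < 1 / 2) ↔
      ∃ k : ℤ, (2 * (k : ℝ) < a ∧ a < 2 * (k : ℝ) + 1 / 2) ∨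
               (2 * (k : ℝ) + 3 / 2 < a ∧ a < 2 * (k : ℝ) + 2) := by
  constructor
  · rintro ⟨k, hk⟩
    rw [abs_lt] at hk
    rcases (ha k).lt_or_gt with h | h
    · exact ⟨k - 1, .inr ⟨by push_cast; linarith, by push_cast; linarith⟩⟩
    · exact ⟨k, .inl ⟨h, by linarith⟩⟩
  · rintro ⟨k, ⟨h₁, h₂⟩ | ⟨h₁, h₂⟩⟩
    · exact ⟨k, abs_lt.2 ⟨by linarith, by linarith⟩⟩
    · exact ⟨k + 1, abs_lt.2 ⟨by push_cast; linarith, by push_cast; linarith⟩⟩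

namespace Complex

open Real

theorem normSq_one_add_sub_normSq_one_sub (z : ℂ) :
    normSq (1 + z) - normSq (1 - z) = 4 * z.re := by
  simp only [normSq_apply, add_re, add_im, sub_re, sub_im, one_re, one_im]
  ring

theorem exp_neg_pi_mul_I_one_add (z : ℂ) :
    exp (-(π * I * (1 + z))) = -exp (-(π * I * z)) := by
  rw [mul_one_add, neg_add, exp_add, exp_neg (π * I), exp_pi_mul_I]
  simp

theorem exp_neg_pi_mul_I_eq_exp_ofReal_mul_I (a : ℝ) :
    exp (-(π * I * a)) = exp ((-(π * a) : ℝ) * I) := by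
  push_cast
  ring_nf

theorem norm_exp_neg_pi_mul_I (a : ℝ) : ‖exp (-(π * I * a))‖ = 1 := by
  rw [exp_neg_pi_mul_I_eq_exp_ofReal_mul_I, norm_exp_ofReal_mul_I]

theorem re_exp_neg_pi_mul_I (a : ℝ) : (exp (-(π * I * a))).re = Real.cos (π * a) := by
  rw [exp_neg_pi_mul_I_eq_exp_ofReal_mul_I, exp_ofReal_mul_I_re, Real.cos_neg]

theorem exp_neg_pi_mul_I_sq_ne_one {a : ℝ} (ha : ∀ k : ℤ, a ≠ k) :
    exp (-(π * I * a)) ^ 2 ≠ 1 := by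
  rw [← exp_nat_mul, Ne, exp_eq_one_iff]
  rintro ⟨n, hn⟩
  have hπI : (π : ℂ) * I ≠ 0 := mul_ne_zero (ofReal_ne_zero.2 pi_ne_zero) I_ne_zero
  have : ((a : ℝ) : ℂ) = ((-n : ℤ) : ℂ) := by
    apply mul_left_cancel₀ hπI
    push_cast
    linear_combination -hn / 2
  exact ha (-n) (by exact_mod_cast this)

end Complex

namespace DihedralHolonomy

open Complex

def companion {α : Type*} [Ring α] (p q : α) : Matrix (Fin 2) (Fin 2) α :=
  !![0, -(p * q); 1, p + q]

variable {E : ℂ}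

abbrev R (E : ℂ) : Matrix (Fin 2) (Fin 2) ℂ := companion (-E ^ 2) E

abbrev S (E : ℂ) : Matrix (Fin 2) (Fin 2) ℂ := companion 1 (-E)

def invariantForm (E : ℂ) : Matrix (Fin 2) (Fin 2) ℂ :=
  !![(normSq (1 + E) : ℂ), 1 - E ^ 2; 1 - conj E ^ 2, (normSq (1 + E) : ℂ)]

theorem invariantForm_isHermitian (E : ℂ) : (invariantForm E).IsHermitian := by
  ext i j
  fin_cases i <;> fin_cases j <;> simp [invariantForm]

theorem trace_invariantForm (E : ℂ) : (invariantForm E).trace = 2 * normSq (1 + E) := by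
  simp only [invariantForm, trace_fin_two, Fin.isValue, of_apply, cons_val', cons_val_zero,
    cons_val_fin_one, cons_val_one]
  ring

theorem det_invariantForm (E : ℂ) : (invariantForm E).det = normSq (1 + E) * (4 * E.re) := by
  have hoff : (1 - E ^ 2) * (1 - conj E ^ 2) = normSq (1 + E) * normSq (1 - E) := by
    simp only [normSq_eq_conj_mul_self, map_add, map_sub, map_one]
    ring
  have hre := congrArg ((↑) : ℝ → ℂ) (normSq_one_add_sub_normSq_one_sub E)
  push_cast at hre
  rw [det_fin_two, invariantForm]
  simp only [of_apply, cons_val', cons_val_zero, cons_val_one, empty_val', cons_val_fin_one]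
  linear_combination (normSq (1 + E) : ℂ) * hre - hoff

theorem invariantForm_posDef (hE : 0 < E.re) : (invariantForm E).PosDef := by
  have hn : 0 < normSq (1 + E) := normSq_pos.2 fun h ↦ by
    have := congrArg re h
    simp only [add_re, one_re, zero_re] at this
    linarith
  rw [(invariantForm_isHermitian E).posDef_iff_trace_pos_and_det_pos, trace_invariantForm,
    det_invariantForm]
  exact ⟨by exact_mod_cast (by positivity : (0 : ℝ) < 2 * normSq (1 + E)),
    by exact_mod_cast (by positivity : (0 : ℝ) < normSq (1 + E) * (4 * E.re))⟩

theorem conjTranspose_R_mul_invariantForm_mul_R (hE : ‖E‖ = 1) :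
    (R E)ᴴ * invariantForm E * R E = invariantForm E := by
  have hE₀ : E ≠ 0 := norm_ne_zero_iff.1 (by rw [hE]; exact one_ne_zero)
  ext i j
  fin_cases i <;> fin_cases j <;>
    simp only [companion, invariantForm, mul_apply, Fin.sum_univ_two, conjTranspose_apply,
      of_apply, cons_val', cons_val_zero, cons_val_one, cons_val_fin_one, RCLike.star_def,
      normSq_eq_conj_mul_self, map_add, map_one, map_mul, map_pow, map_neg, map_zero,
      inv_pow, Fin.zero_eta, Fin.mk_one, Fin.isValue, ← inv_eq_conj hE] <;>
    field_simp <;> ring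

theorem conjTranspose_S_mul_invariantForm_mul_S (hE : ‖E‖ = 1) :
    (S E)ᴴ * invariantForm E * S E = invariantForm E := by
  have hE₀ : E ≠ 0 := norm_ne_zero_iff.1 (by rw [hE]; exact one_ne_zero)
  ext i j
  fin_cases i <;> fin_cases j <;>
    simp only [companion, invariantForm, mul_apply, Fin.sum_univ_two, conjTranspose_apply,
      of_apply, cons_val', cons_val_zero, cons_val_one, cons_val_fin_one, RCLike.star_def,
      normSq_eq_conj_mul_self, map_add, map_one, map_mul, map_neg, map_zero,
      inv_pow, Fin.zero_eta, Fin.mk_one, Fin.isValue, ← inv_eq_conj hE] <;>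
    field_simp <;> ring

theorem apply_one_one_eq_of_conjTranspose_S_mul_mul_S {H : Matrix (Fin 2) (Fin 2) ℂ}
    (hS : (S E)ᴴ * H * S E = H) : H 1 1 = H 0 0 := by
  simpa [companion, mul_apply, Fin.sum_univ_two] using congrFun (congrFun hS 0) 0

theorem apply_zero_one_mul_one_add_eq (hE : E ≠ 1) {H : Matrix (Fin 2) (Fin 2) ℂ}
    (hR : (R E)ᴴ * H * R E = H) (hS : (S E)ᴴ * H * S E = H) :
    H 0 1 * (1 + E) = H 0 0 * E * (1 - E) := by
  have hR₀₁ := congrFun (congrFun hR 0) 1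
  have hS₀₁ := congrFun (congrFun hS 0) 1
  simp only [companion, neg_mul, neg_neg, Fin.isValue, mul_apply, conjTranspose_apply, of_apply,
    cons_val', cons_val_zero, cons_val_fin_one, RCLike.star_def, Fin.sum_univ_two, map_zero,
    zero_mul, cons_val_one, map_one, one_mul, zero_add, mul_neg] at hR₀₁ hS₀₁
  rw [← apply_one_one_eq_of_conjTranspose_S_mul_mul_S hS]
  apply mul_right_cancel₀ (sub_ne_zero.2 hE.symm)
  linear_combination E ^ 2 * hS₀₁ - hR₀₁

theorem re_pos_of_posDef (hE : ‖E‖ = 1) (hE2 : E ^ 2 ≠ 1) {H : Matrix (Fin 2) (Fin 2) ℂ}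
    (hH : H.PosDef) (hR : (R E)ᴴ * H * R E = H) (hS : (S E)ᴴ * H * S E = H) : 0 < E.re := by
  have hE1 : E ≠ 1 := fun h ↦ hE2 (by simp [h])
  have hE_neg_one : 1 + E ≠ 0 := fun h ↦ hE2 (by rw [eq_neg_of_add_eq_zero_right h]; norm_num)
  obtain ⟨x, -, hx : (x : ℂ) = H 0 0⟩ := RCLike.pos_iff_exists_ofReal.1 (hH.diag_pos (i := 0))
  have hdet : normSq (H 0 1) < x ^ 2 := by
    have hdet_pos := hH.det_pos
    rw [det_fin_two, apply_one_one_eq_of_conjTranspose_S_mul_mul_S hS,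
      ← hH.isHermitian.apply 1 0, ← hx, RCLike.star_def, mul_conj] at hdet_pos
    have : 0 < x * x - normSq (H 0 1) := zero_lt_real.1 (by push_cast; exact hdet_pos)
    nlinarith
  have hrel := congrArg normSq (apply_zero_one_mul_one_add_eq hE1 hR hS)
  simp only [map_mul] at hrel
  rw [← hx] at hrel
  simp only [normSq_ofReal, normSq_eq_norm_sq E, hE] at hrel
  have hpos := normSq_pos.2 hE_neg_one
  nlinarith [normSq_one_add_sub_normSq_one_sub E, normSq_nonneg (H 0 1)]

theorem exists_posDef_invariant_iff (hE : ‖E‖ = 1) (hE2 : E ^ 2 ≠ 1) :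
    (∃ H : Matrix (Fin 2) (Fin 2) ℂ,
        H.PosDef ∧ (R E)ᴴ * H * R E = H ∧ (S E)ᴴ * H * S E = H) ↔ 0 < E.re :=
  ⟨fun ⟨_, hH, hR, hS⟩ ↦ re_pos_of_posDef hE hE2 hH hR hS, fun h ↦
    ⟨invariantForm E, invariantForm_posDef h, conjTranspose_R_mul_invariantForm_mul_R hE,
      conjTranspose_S_mul_invariantForm_mul_S hE⟩⟩

end DihedralHolonomy

/-- Unitarity for the `B₂`-arrangement Dunkl connection: for real `a` with `2a ∉ ℤ`,
the holonomy generators `R`, `S` (companion matrices built from `r₁ = exp(−πi(1+2a))`,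
`r₂ = exp(−πi a)`, `s₁ = 1`, `s₂ = exp(−πi(1+a))`) preserve a positive definite
Hermitian matrix if and only if `a ∈ (0,1/2) + 2ℤ` or `a ∈ (3/2,2) + 2ℤ`. -/
theorem dihedral_unitary_iff (a : ℝ) (ha : ∀ k : ℤ, 2 * a ≠ k)
    (r₁ r₂ s₁ s₂ : ℂ)
    (hr₁ : r₁ = Complex.exp (-(Real.pi * Complex.I * (1 + 2 * (a : ℂ)))))
    (hr₂ : r₂ = Complex.exp (-(Real.pi * Complex.I * (a : ℂ))))
    (hs₁ : s₁ = 1)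
    (hs₂ : s₂ = Complex.exp (-(Real.pi * Complex.I * (1 + (a : ℂ)))))
    (R S : Matrix (Fin 2) (Fin 2) ℂ)
    (hR : R = !![0, -(r₁ * r₂); 1, r₁ + r₂])
    (hS : S = !![0, -(s₁ * s₂); 1, s₁ + s₂]) :
    (∃ H : Matrix (Fin 2) (Fin 2) ℂ, H.PosDef ∧
        Rᴴ * H * R = H ∧ Sᴴ * H * S = H) ↔
      ∃ k : ℤ, (2 * (k : ℝ) < a ∧ a < 2 * (k : ℝ) + 1 / 2) ∨
               (2 * (k : ℝ) + 3 / 2 < a ∧ a < 2 * (k : ℝ) + 2) := by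
  have hr₁' : r₁ = -Complex.exp (-(Real.pi * Complex.I * a)) ^ 2 := by
    rw [hr₁, Complex.exp_neg_pi_mul_I_one_add, ← Complex.exp_nat_mul]
    ring_nf
  have hs₂' : s₂ = -Complex.exp (-(Real.pi * Complex.I * a)) := by
    rw [hs₂, Complex.exp_neg_pi_mul_I_one_add]
  have ha_int : ∀ k : ℤ, a ≠ k := fun k h ↦ ha (2 * k) (by rw [h]; push_cast; ring)
  have ha_even : ∀ k : ℤ, a ≠ 2 * k := fun k h ↦ ha (4 * k) (by rw [h]; push_cast; ring)
  subst hR hS hs₁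
  rw [hr₁', hr₂, hs₂', ← exists_abs_sub_two_mul_lt_half_iff ha_even,
    ← Real.cos_pi_mul_pos_iff, ← Complex.re_exp_neg_pi_mul_I]
  exact DihedralHolonomy.exists_posDef_invariant_iff (Complex.norm_exp_neg_pi_mul_I a)
    (Complex.exp_neg_pi_mul_I_sq_ne_one ha_int)
end

section
/- Let n, k ≥ 1 and for each i ∈ {1,…,k} let A_i : ℝ → M_n(ℝ) be a family of n×n real matrices whose entries are real-analytic functions of t on all of ℝ. If for every t ∈ (0,1) there exists a nonzero vector v ∈ ℝⁿ with A_i(t)·v = v for all i = 1,…,k, then for every t ∈ ℝ there exists a nonzero vector v ∈ ℝⁿ with A_i(t)·v = v for all i = 1,…,k. -/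
/-! The common fixed vectors of the `A i t` form the kernel of the matrix `C t` obtained by
stacking the blocks `A i t - 1`, which is also the kernel of `(C t)ᵀ * C t`. So a nonzero one
exists exactly when `det ((C t)ᵀ * C t) = 0`. This determinant is a real-analytic function of `t`
that vanishes on `(0, 1)`, hence everywhere by the identity theorem. -/

open Matrix

namespace Matrix

variable {ι m n R : Type*}

def stackRows (B : ι → Matrix m n R) : Matrix (ι × m) n R :=
  of (Function.uncurry B)

theorem stackRows_mulVec_eq_zero_iff [Fintype n] [NonUnitalNonAssocSemiring R]
    (B : ι → Matrix m n R) (v : n → R) :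
    stackRows B *ᵥ v = 0 ↔ ∀ i, B i *ᵥ v = 0 := by
  simp only [funext_iff, Prod.forall]
  rfl

theorem exists_mulVec_eq_zero_iff_det_conjTranspose_mul_self [Fintype m] [Fintype n]
    [DecidableEq n] [CommRing R] [IsDomain R] [PartialOrder R] [StarRing R] [StarOrderedRing R]
    (C : Matrix m n R) : (∃ v ≠ 0, C *ᵥ v = 0) ↔ (Cᴴ * C).det = 0 := by
  simp only [← exists_mulVec_eq_zero_iff, conjTranspose_mul_self_mulVec_eq_zero]

end Matrix

section Analytic

variable {𝕜 E : Type*} [NontriviallyNormedField 𝕜] [NormedAddCommGroup E] [NormedSpace 𝕜 E]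
  {l m n : Type*} {x : E}

theorem analyticAt_matrix_mul_apply [Fintype m] {f : E → Matrix l m 𝕜} {g : E → Matrix m n 𝕜}
    (hf : ∀ i j, AnalyticAt 𝕜 (fun x => f x i j) x)
    (hg : ∀ i j, AnalyticAt 𝕜 (fun x => g x i j) x) (i : l) (j : n) :
    AnalyticAt 𝕜 (fun x => (f x * g x) i j) x := by
  simp only [mul_apply]
  exact Finset.analyticAt_fun_sum _ fun r _ => (hf i r).fun_mul (hg r j)

theorem analyticAt_matrix_det [Fintype m] [DecidableEq m] {f : E → Matrix m m 𝕜}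
    (hf : ∀ i j, AnalyticAt 𝕜 (fun x => f x i j) x) :
    AnalyticAt 𝕜 (fun x => (f x).det) x := by
  simp only [det_apply, Units.smul_def, zsmul_eq_mul]
  exact Finset.analyticAt_fun_sum _ fun σ _ =>
    analyticAt_const.fun_mul (Finset.analyticAt_fun_prod _ fun i _ => hf (σ i) i)

end Analytic

theorem analytic_family_fixed_vector_persists_general {n k : ℕ}
    (A : Fin k → ℝ → Matrix (Fin n) (Fin n) ℝ)
    (hA : ∀ i p q, ∀ t : ℝ, AnalyticAt ℝ (fun s => A i s p q) t)
    (h : ∀ t ∈ Set.Ioo (0 : ℝ) 1, ∃ v : Fin n → ℝ, v ≠ 0 ∧ ∀ i, A i t *ᵥ v = v) :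
    ∀ t : ℝ, ∃ v : Fin n → ℝ, v ≠ 0 ∧ ∀ i, A i t *ᵥ v = v := by
  set C : ℝ → Matrix (Fin k × Fin n) (Fin n) ℝ := fun t => stackRows fun i => A i t - 1
  have hfixed (t : ℝ) :
      (∃ v : Fin n → ℝ, v ≠ 0 ∧ ∀ i, A i t *ᵥ v = v) ↔ ((C t)ᵀ * C t).det = 0 := by
    simp only [← conjTranspose_eq_transpose_of_trivial,
      ← exists_mulVec_eq_zero_iff_det_conjTranspose_mul_self, C, stackRows_mulVec_eq_zero_iff,
      sub_mulVec, one_mulVec, sub_eq_zero]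
  have hC (t : ℝ) (r : Fin k × Fin n) (q : Fin n) : AnalyticAt ℝ (fun s => C s r q) t :=
    (hA r.1 r.2 q t).fun_sub analyticAt_const
  have hdet : AnalyticOnNhd ℝ (fun t => ((C t)ᵀ * C t).det) Set.univ := fun t _ =>
    analyticAt_matrix_det (analyticAt_matrix_mul_apply (fun p r => hC t r p) (hC t))
  have hzero : (fun t => ((C t)ᵀ * C t).det) =ᶠ[nhds (1 / 2 : ℝ)] 0 := by
    filter_upwards [Ioo_mem_nhds (by norm_num : (0 : ℝ) < 1 / 2) (by norm_num : (1 / 2 : ℝ) < 1)]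
      with t ht
    exact (hfixed t).1 (h t ht)
  intro t
  exact (hfixed t).2 <| hdet.eqOn_zero_of_preconnected_of_eventuallyEq_zero isPreconnected_univ
    (Set.mem_univ _) hzero (Set.mem_univ t)

/-- Persistence of nonzero common fixed vectors for a real-analytic family of matrices:
if the entries of `A i : ℝ → Mₙ(ℝ)` are real-analytic on all of `ℝ` and for every
`t ∈ (0,1)` there is a nonzero vector fixed by all `A i t`, then such a nonzero fixed
vector exists for every `t ∈ ℝ`. -/
theorem analytic_family_fixed_vector_persists {n k : ℕ} (hn : 1 ≤ n) (hk : 1 ≤ k)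
    (A : Fin k → ℝ → Matrix (Fin n) (Fin n) ℝ)
    (hA : ∀ i p q, ∀ t : ℝ, AnalyticAt ℝ (fun s => A i s p q) t)
    (h : ∀ t ∈ Set.Ioo (0 : ℝ) 1, ∃ v : Fin n → ℝ, v ≠ 0 ∧ ∀ i, A i t *ᵥ v = v) :
    ∀ t : ℝ, ∃ v : Fin n → ℝ, v ≠ 0 ∧ ∀ i, A i t *ᵥ v = v :=
  analytic_family_fixed_vector_persists_general A hA h
end

section
/- Let k ≥ 1 and for each i ∈ {1,…,k} let M_i : ℝ → M_2(ℂ) be a family of 2×2 complex matrices whose entries are real-analytic functions of t on all of ℝ. Then the set Z = { t ∈ ℝ : there exists a nonzero Hermitian 2×2 matrix H with M_i(t)*·H·M_i(t) = H for all i = 1,…,k } is either equal to all of ℝ or is a discrete subset of ℝ. -/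
/-!
The conditions `Hᴴ = H` and `(M i t)ᴴ H (M i t) = H` are real-linear in `H`, so the parameters in
question are those `t` at which a real-analytic family of linear maps `L t` between fixed
finite-dimensional real vector spaces has a nontrivial kernel. In bases, `L t` is a matrix `A t`
with real-analytic entries, and `ker (A t) = ker ((A t)ᴴ A t)`, so these are the zeros of the
real-analytic function `t ↦ det ((A t)ᴴ A t)`. By the identity theorem on the connected line, the
zero set of such a function is everything or discrete.
-/

open Matrix Set

theorem AnalyticOnNhd.setOf_eq_zero_eq_univ_or_discreteTopology {𝕜 E : Type*}
    [NontriviallyNormedField 𝕜] [PreconnectedSpace 𝕜] [NormedAddCommGroup E] [NormedSpace 𝕜 E]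
    {f : 𝕜 → E} (hf : AnalyticOnNhd 𝕜 f univ) :
    {x | f x = 0} = univ ∨ DiscreteTopology {x | f x = 0} := by
  refine (hf.eqOn_zero_or_eventually_ne_zero_of_preconnected isPreconnected_univ).imp
    (fun h => eq_univ_of_forall fun x => h (mem_univ x)) fun h => ?_
  rw [← isDiscrete_iff_discreteTopology, ← inter_univ {x | f x = 0}]
  exact isDiscrete_of_codiscreteWithin h

theorem analyticAt_det {𝕜 E n : Type*} [NontriviallyNormedField 𝕜] [NormedAddCommGroup E]
    [NormedSpace 𝕜 E] [Fintype n] [DecidableEq n] {A : E → Matrix n n 𝕜} {x : E}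
    (hA : ∀ i j, AnalyticAt 𝕜 (fun y => A y i j) x) :
    AnalyticAt 𝕜 (fun y => (A y).det) x := by
  simp only [det_apply']
  fun_prop

theorem Matrix.exists_mulVec_eq_zero_iff_det_conjTranspose_mul_self_s15 {R m n : Type*} [Field R]
    [PartialOrder R] [StarRing R] [StarOrderedRing R] [Fintype m] [Fintype n] [DecidableEq n]
    (A : Matrix m n R) : (∃ v ≠ 0, A *ᵥ v = 0) ↔ (Aᴴ * A).det = 0 := by
  simp_rw [← exists_mulVec_eq_zero_iff, conjTranspose_mul_self_mulVec_eq_zero]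

theorem LinearMap.exists_ne_zero_apply_eq_zero_iff_toMatrix {R V W ι κ : Type*} [CommRing R]
    [AddCommGroup V] [Module R V] [AddCommGroup W] [Module R W] [Fintype ι] [Fintype κ]
    [DecidableEq ι] (b : Module.Basis ι R V) (c : Module.Basis κ R W) (f : V →ₗ[R] W) :
    (∃ v ≠ 0, f v = 0) ↔ ∃ x ≠ 0, toMatrix b c f *ᵥ x = 0 := by
  rw [b.equivFun.surjective.exists]
  simp only [Module.Basis.equivFun_apply, toMatrix_mulVec_repr, ne_eq,
    LinearEquiv.map_eq_zero_iff, Finsupp.coe_eq_zero]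

theorem setOf_exists_ne_zero_apply_eq_zero_eq_univ_or_discreteTopology {V W : Type*}
    [AddCommGroup V] [Module ℝ V] [FiniteDimensional ℝ V] [NormedAddCommGroup W]
    [NormedSpace ℝ W] [FiniteDimensional ℝ W] (L : ℝ → V →ₗ[ℝ] W)
    (hL : ∀ v t, AnalyticAt ℝ (fun s => L s v) t) :
    {t | ∃ v ≠ 0, L t v = 0} = univ ∨ DiscreteTopology {t | ∃ v ≠ 0, L t v = 0} := by
  let b := Module.finBasis ℝ V
  let c := Module.finBasis ℝ W
  let A : ℝ → Matrix _ _ ℝ := fun t => LinearMap.toMatrix b c (L t)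
  have hA : ∀ t, (∃ v ≠ 0, L t v = 0) ↔ ((A t)ᴴ * A t).det = 0 := fun t =>
    (LinearMap.exists_ne_zero_apply_eq_zero_iff_toMatrix b c (L t)).trans
      (exists_mulVec_eq_zero_iff_det_conjTranspose_mul_self_s15 (A t))
  have hA_analytic : ∀ i j t, AnalyticAt ℝ (fun s => A s i j) t := fun i j t => by
    simp only [A, LinearMap.toMatrix_apply, ← Module.Basis.coord_apply]
    exact ((c.coord i).toContinuousLinearMap.analyticAt _).comp (hL _ t)
  have hdet : AnalyticOnNhd ℝ (fun t => ((A t)ᴴ * A t).det) univ := fun t _ =>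
    analyticAt_det fun i j => by
      simp only [mul_apply, conjTranspose_apply, star_trivial]
      fun_prop
  rw [show {t | ∃ v ≠ 0, L t v = 0} = {t | ((A t)ᴴ * A t).det = 0} from ext hA]
  exact hdet.setOf_eq_zero_eq_univ_or_discreteTopology

section InvariantHermitian

variable {ι n : Type*} [Fintype n]

/-- The components are functions `n → n → ℂ` rather than matrices: `Matrix` carries no norm. -/
def invarianceDefect (N : ι → Matrix n n ℂ) :
    Matrix n n ℂ →ₗ[ℝ] (n → n → ℂ) × (ι → n → n → ℂ) where
  toFun H := (fun p q => (Hᴴ - H) p q, fun i p q => ((N i)ᴴ * H * N i - H) p q)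
  map_add' H K := by
    ext <;> simp only [Matrix.mul_add, Matrix.add_mul, conjTranspose_add, Matrix.sub_apply,
      Matrix.add_apply, Prod.fst_add, Prod.snd_add, Pi.add_apply] <;> ring
  map_smul' r H := by
    ext <;> simp [smul_sub]

theorem invarianceDefect_eq_zero_iff {N : ι → Matrix n n ℂ} {H : Matrix n n ℂ} :
    invarianceDefect N H = 0 ↔ H.IsHermitian ∧ ∀ i, (N i)ᴴ * H * N i = H := by
  simp only [invarianceDefect, LinearMap.coe_mk, AddHom.coe_mk, Prod.mk_eq_zero, funext_iff,
    Pi.zero_apply, Matrix.sub_apply, sub_eq_zero, IsHermitian, ← Matrix.ext_iff]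

theorem analyticAt_invarianceDefect [Fintype ι] {N : ι → ℝ → Matrix n n ℂ} {t : ℝ}
    (hN : ∀ i p q, AnalyticAt ℝ (fun s => N i s p q) t) (H : Matrix n n ℂ) :
    AnalyticAt ℝ (fun s => invarianceDefect (fun i => N i s) H) t := by
  have hconj : ∀ i p q, AnalyticAt ℝ (fun s => star (N i s p q)) t := fun i p q =>
    (Complex.conjCLE.toContinuousLinearMap.analyticAt _).comp (hN i p q)
  refine analyticAt_const.prod (analyticAt_pi_iff.2 fun i => analyticAt_pi_iff.2 fun p =>
    analyticAt_pi_iff.2 fun q => ?_)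
  simp only [Matrix.sub_apply, mul_apply, conjTranspose_apply]
  fun_prop

end InvariantHermitian

theorem invariant_hermitian_param_set_univ_or_discrete_general {k : ℕ}
    (M : Fin k → ℝ → Matrix (Fin 2) (Fin 2) ℂ)
    (hM : ∀ i p q, ∀ t : ℝ, AnalyticAt ℝ (fun s => M i s p q) t)
    (Z : Set ℝ)
    (hZ : Z = {t : ℝ | ∃ H : Matrix (Fin 2) (Fin 2) ℂ, H ≠ 0 ∧ H.IsHermitian ∧
        ∀ i, (M i t)ᴴ * H * (M i t) = H}) :
    Z = Set.univ ∨ DiscreteTopology Z := by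
  have hZ_ker : Z = {t | ∃ H ≠ 0, invarianceDefect (fun i => M i t) H = 0} := by
    simp only [hZ, invarianceDefect_eq_zero_iff]
  rw [hZ_ker]
  exact setOf_exists_ne_zero_apply_eq_zero_eq_univ_or_discreteTopology _
    fun H t => analyticAt_invarianceDefect (fun i p q => hM i p q t) H

/-- For a real-analytic family `M i : ℝ → M₂(ℂ)` of matrices, the set of parameters `t`
at which there is a nonzero Hermitian matrix `H` with `(M i t)* · H · (M i t) = H`
for all `i` is either all of `ℝ` or a discrete subset of `ℝ`. -/
theorem invariant_hermitian_param_set_univ_or_discrete {k : ℕ} (hk : 1 ≤ k)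
    (M : Fin k → ℝ → Matrix (Fin 2) (Fin 2) ℂ)
    (hM : ∀ i p q, ∀ t : ℝ, AnalyticAt ℝ (fun s => M i s p q) t)
    (Z : Set ℝ)
    (hZ : Z = {t : ℝ | ∃ H : Matrix (Fin 2) (Fin 2) ℂ, H ≠ 0 ∧ H.IsHermitian ∧
        ∀ i, (M i t)ᴴ * H * (M i t) = H}) :
    Z = Set.univ ∨ DiscreteTopology Z :=
  invariant_hermitian_param_set_univ_or_discrete_general M hM Z hZ
end

section
/- Let B be a topological space and let P : B → M_n(ℝ) assign to each λ ∈ B an n×n real matrix whose entries depend continuously on λ, such that for every λ ∈ B the kernel of P(λ) (as a linear map ℝⁿ → ℝⁿ) is exactly 1-dimensional. Then for every λ₀ ∈ B there exist an open neighbourhood U of λ₀ and a continuous map v : U → ℝⁿ such that v(λ) ≠ 0 and P(λ)·v(λ) = 0 for all λ ∈ U. -/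
/-!
Fix a nonzero `v₀` spanning `ker P(λ₀)` and a vector `x` outside the range of `P(λ₀)`
(which exists since `P(λ₀)` is singular). The rank-one perturbation `M(λ) = P(λ) + x v₀ᵀ`
is invertible at `λ₀`, hence on a neighbourhood `U`, and `v(λ) = M(λ)⁻¹ x` is continuous
there. For a nonzero `w ∈ ker P(λ)` one has `M(λ) w = (v₀ ⬝ᵥ w) x`, so `w = (v₀ ⬝ᵥ w) v(λ)`:
thus `v(λ)` is a nonzero multiple of `w`, and lies in the kernel.
-/

open Matrix

theorem LinearMap.exists_notMem_range_of_ker_ne_bot {K V : Type*} [Field K] [AddCommGroup V]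
    [Module K V] [FiniteDimensional K V] {f : V →ₗ[K] V} (hf : LinearMap.ker f ≠ ⊥) :
    ∃ x, x ∉ LinearMap.range f := by
  refine SetLike.exists_not_mem_of_ne_top _ fun h => hf ?_
  exact LinearMap.ker_eq_bot.mpr
    (LinearMap.injective_iff_surjective.mpr (LinearMap.range_eq_top.mp h))

namespace Matrix

theorem add_vecMulVec_mulVec {m n R : Type*} [Fintype n] [CommSemiring R]
    (A : Matrix m n R) (x : m → R) (y z : n → R) :
    (A + vecMulVec x y) *ᵥ z = A *ᵥ z + (y ⬝ᵥ z) • x := by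
  rw [add_mulVec, vecMulVec_mulVec, op_smul_eq_smul]

section Field

variable {ι K : Type*} [Fintype ι] [DecidableEq ι] [Field K] {A : Matrix ι ι K} {x y : ι → K}

theorem det_add_vecMulVec_ne_zero {v : ι → K} (hker : LinearMap.ker (toLin' A) ≤ K ∙ v)
    (hyv : y ⬝ᵥ v ≠ 0) (hx : x ∉ LinearMap.range (toLin' A)) :
    (A + vecMulVec x y).det ≠ 0 := by
  refine ((isUnit_iff_isUnit_det _).mp (mulVec_injective_iff_isUnit.mp ?_)).ne_zero
  refine (injective_iff_map_eq_zero (toLin' (A + vecMulVec x y))).mpr fun z hz => ?_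
  rw [toLin'_apply, add_vecMulVec_mulVec] at hz
  have hyz : y ⬝ᵥ z = 0 := by
    by_contra hyz
    refine hx ⟨-(y ⬝ᵥ z)⁻¹ • z, ?_⟩
    rw [toLin'_apply, mulVec_smul, eq_neg_of_add_eq_zero_left hz, smul_neg, neg_smul, neg_neg,
      smul_smul, inv_mul_cancel₀ hyz, one_smul]
  obtain ⟨c, rfl⟩ := Submodule.mem_span_singleton.mp (hker (by simpa [hyz] using hz))
  rw [dotProduct_smul, smul_eq_mul, mul_eq_zero] at hyz
  rw [hyz.resolve_right hyv, zero_smul]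

theorem eq_dotProduct_smul_inv_add_vecMulVec_mulVec (hM : (A + vecMulVec x y).det ≠ 0)
    {w : ι → K} (hAw : A *ᵥ w = 0) : w = (y ⬝ᵥ w) • ((A + vecMulVec x y)⁻¹ *ᵥ x) :=
  calc w = (A + vecMulVec x y)⁻¹ *ᵥ ((A + vecMulVec x y) *ᵥ w) := by
        rw [mulVec_mulVec, nonsing_inv_mul _ hM.isUnit, one_mulVec]
    _ = (y ⬝ᵥ w) • ((A + vecMulVec x y)⁻¹ *ᵥ x) := by
        rw [add_vecMulVec_mulVec, hAw, zero_add, mulVec_smul]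

theorem inv_add_vecMulVec_mulVec_ne_zero_and_mulVec_eq_zero
    (hM : (A + vecMulVec x y).det ≠ 0) {w : ι → K} (hw : w ≠ 0) (hAw : A *ᵥ w = 0) :
    (A + vecMulVec x y)⁻¹ *ᵥ x ≠ 0 ∧ A *ᵥ ((A + vecMulVec x y)⁻¹ *ᵥ x) = 0 := by
  have hw_eq := eq_dotProduct_smul_inv_add_vecMulVec_mulVec hM hAw
  have hyw : y ⬝ᵥ w ≠ 0 := fun h => hw (by rw [hw_eq, h, zero_smul])
  refine ⟨right_ne_zero_of_smul (hw_eq ▸ hw), ?_⟩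
  rw [← inv_smul_smul₀ hyw ((A + vecMulVec x y)⁻¹ *ᵥ x), ← hw_eq, mulVec_smul, hAw, smul_zero]

end Field

theorem _root_.Continuous.continuousOn_matrix_inv {X ι K : Type*} [TopologicalSpace X]
    [Fintype ι] [DecidableEq ι] [Field K] [TopologicalSpace K] [IsTopologicalRing K]
    [ContinuousInv₀ K] {M : X → Matrix ι ι K} (hM : Continuous M) :
    ContinuousOn (fun p => (M p)⁻¹) {p | (M p).det ≠ 0} := by
  have h : ContinuousOn (fun p => (M p).det⁻¹ • (M p).adjugate) {p | (M p).det ≠ 0} :=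
    (hM.matrix_det.continuousOn.inv₀ fun _ hp => hp).smul hM.matrix_adjugate.continuousOn
  simpa only [inv_def, Ring.inverse_eq_inv'] using h

end Matrix

/-- A continuous family of real `n×n` matrices whose kernels are all exactly
1-dimensional admits, locally on the parameter space, a continuous nonvanishing
selection of kernel vectors. -/
theorem continuous_local_kernel_selection {n : ℕ} (B : Type*) [TopologicalSpace B]
    (P : B → Matrix (Fin n) (Fin n) ℝ)
    (hcont : ∀ i j, Continuous fun lam => P lam i j)
    (hker : ∀ lam, Module.finrank ℝ (LinearMap.ker (Matrix.toLin' (P lam))) = 1) :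
    ∀ lam₀ : B, ∃ U : Set B, IsOpen U ∧ lam₀ ∈ U ∧
      ∃ v : B → (Fin n → ℝ), ContinuousOn v U ∧
        ∀ lam ∈ U, v lam ≠ 0 ∧ P lam *ᵥ v lam = 0 := by
  intro lam₀
  have hker_ne_bot lam : LinearMap.ker (toLin' (P lam)) ≠ ⊥ :=
    Submodule.one_le_finrank_iff.mp (hker lam).ge
  have hker_vec lam : ∃ w ∈ LinearMap.ker (toLin' (P lam)), w ≠ 0 :=
    Submodule.exists_mem_ne_zero_of_ne_bot (hker_ne_bot lam)
  obtain ⟨v₀, hv₀_mem, hv₀⟩ := hker_vec lam₀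
  obtain ⟨x, hx⟩ := LinearMap.exists_notMem_range_of_ker_ne_bot (hker_ne_bot lam₀)
  set M := fun lam => P lam + vecMulVec x v₀
  have hM : Continuous M := (continuous_matrix hcont).add continuous_const
  refine ⟨{lam | (M lam).det ≠ 0}, isOpen_ne_fun hM.matrix_det continuous_const, ?_,
    fun lam => (M lam)⁻¹ *ᵥ x, ?_, fun lam hlam => ?_⟩
  · exact det_add_vecMulVec_ne_zero
      (eq_span_singleton_of_mem_of_finrank_eq_one (hker lam₀) hv₀_mem hv₀).le
      (dotProduct_self_eq_zero.not.mpr hv₀) hx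
  · exact (continuous_id.matrix_mulVec continuous_const).comp_continuousOn
      hM.continuousOn_matrix_inv
  · obtain ⟨w, hPw, hw⟩ := hker_vec lam
    exact inv_add_vecMulVec_mulVec_ne_zero_and_mulVec_eq_zero hlam hw (by simpa using hPw)
end

section
/- Let M and N be compact Hausdorff topological 2-manifolds (topological manifolds locally homeomorphic to ℝ²), let P ⊂ M and Q ⊂ N be finite subsets, and let F : M∖P → N∖Q be a continuous proper map (i.e. preimages of compact subsets of N∖Q are compact). Then F extends continuously over the punctures: there exists a continuous map G : M → N such that G(x) = F(x) for every x ∈ M∖P and G(P) ⊆ Q. -/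
/-!
Near a puncture `p`, small punctured chart balls are connected (the model space has dimension
`2 > 1`), and by properness `F` maps them into any prescribed neighbourhood of the finite set `Q`.
Separating the points of `Q` by disjoint open sets, connectedness forces `F` to converge to a
single point of `Q` at `p`; since `M ∖ P` is dense and `N` is compact Hausdorff, hence regular,
the extension by these limits is continuous.
-/

open Set Filter Topology Metric

theorem IsPreconnected.exists_subset_of_subset_biUnion {X ι : Type*} [TopologicalSpace X]
    {s : Set X} (hs : IsPreconnected s) (hne : s.Nonempty) {I : Set ι} {V : ι → Set X}
    (hV : ∀ i ∈ I, IsOpen (V i)) (hVI : I.PairwiseDisjoint V) (hsV : s ⊆ ⋃ i ∈ I, V i) :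
    ∃ i ∈ I, s ⊆ V i := by
  obtain ⟨x, hx⟩ := hne
  obtain ⟨i, hi, hxi⟩ := mem_iUnion₂.1 (hsV hx)
  refine ⟨i, hi, hs.subset_left_of_subset_union (hV i hi)
    (isOpen_biUnion fun j (hj : j ∈ I \ {i}) => hV j hj.1)
    (disjoint_iUnion₂_right.2 fun j (hj : j ∈ I \ {i}) => hVI hi hj.1 (Ne.symm hj.2)) ?_
    ⟨x, hx, hxi⟩⟩
  intro y hy
  obtain ⟨j, hj, hyj⟩ := mem_iUnion₂.1 (hsV hy)
  by_cases hji : j = i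
  · exact Or.inl (hji ▸ hyj)
  · exact Or.inr (mem_biUnion ⟨hj, hji⟩ hyj)

theorem exists_tendsto_nhds_of_tendsto_nhdsSet {X Y : Type*} [TopologicalSpace X]
    [TopologicalSpace Y] [T2Space Y] {f : X → Y} (hf : Continuous f) {l : Filter X} [l.NeBot]
    (hl : ∀ s ∈ l, ∃ t ∈ l, t ⊆ s ∧ IsPreconnected t) {Q : Set Y} (hQ : Q.Finite)
    (hfQ : Tendsto f l (𝓝ˢ Q)) : ∃ q ∈ Q, Tendsto f l (𝓝 q) := by
  obtain ⟨V, hV, hVQ⟩ := hQ.t2_separation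
  have hQV : ⋃ q ∈ Q, V q ∈ 𝓝ˢ Q :=
    (isOpen_biUnion fun q _ => (hV q).2).mem_nhdsSet.2 fun q hq => mem_biUnion hq (hV q).1
  obtain ⟨t, htl, htV, ht⟩ := hl _ (hfQ hQV)
  obtain ⟨q, hq, hftV⟩ := (ht.image f hf.continuousOn).exists_subset_of_subset_biUnion
    ((Filter.nonempty_of_mem htl).image f) (fun q _ => (hV q).2) hVQ (image_subset_iff.2 htV)
  refine ⟨q, hq, fun W hW => mem_map.2 ?_⟩
  -- near each `q' ≠ q` the neighbourhood `V q'` misses `V q`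
  have hWV : W ∪ (V q)ᶜ ∈ 𝓝ˢ Q := by
    refine mem_nhdsSet_iff_forall.2 fun q' hq' => ?_
    by_cases hq'q : q' = q
    · exact mem_of_superset (hq'q ▸ hW) subset_union_left
    · exact mem_of_superset ((hV q').2.mem_nhds (hV q').1)
        fun y hy => Or.inr (disjoint_left.1 (hVQ hq' hq hq'q) hy)
  filter_upwards [hfQ.eventually_mem hWV, htl] with x hxW hxt
  exact hxW.resolve_right (not_not.2 (hftV ⟨x, hxt, rfl⟩))

section NormedSpace

variable {E : Type*} [NormedAddCommGroup E] [NormedSpace ℝ E]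

theorem ball_diff_singleton_eq_image_univBall (c : E) {r : ℝ} (hr : 0 < r) :
    ball c r \ {c} = OpenPartialHomeomorph.univBall c r '' {0}ᶜ := by
  set e := OpenPartialHomeomorph.univBall c r
  have he : Function.Injective e :=
    injOn_univ.1 (OpenPartialHomeomorph.univBall_source c r ▸ e.injOn)
  rw [image_compl_eq_range_sdiff_image he, image_singleton,
    OpenPartialHomeomorph.univBall_apply_zero, ← image_univ,
    ← OpenPartialHomeomorph.univBall_source c r, e.image_source_eq_target,
    OpenPartialHomeomorph.univBall_target c hr]

theorem isPreconnected_ball_diff_singleton (hE : 1 < Module.rank ℝ E) (c : E) (r : ℝ) :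
    IsPreconnected (ball c r \ {c}) := by
  rcases le_or_gt r 0 with hr | hr
  · simpa [ball_eq_empty.2 hr] using isPreconnected_empty
  rw [ball_diff_singleton_eq_image_univBall c hr]
  exact (isConnected_compl_singleton_of_one_lt_rank hE 0).isPreconnected.image _
    (OpenPartialHomeomorph.continuous_univBall c r).continuousOn

end NormedSpace

theorem OpenPartialHomeomorph.map_nhdsNE_eq {X Y : Type*} [TopologicalSpace X]
    [TopologicalSpace Y] (e : OpenPartialHomeomorph X Y) {x : X} (hx : x ∈ e.source) :
    map e (𝓝[≠] x) = 𝓝[≠] (e x) := by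
  rw [e.map_nhdsWithin_eq hx, e.image_source_inter_eq', ← e.nhdsWithin_target_inter
    (e.map_source hx) {e x}ᶜ]
  congr 1
  ext y
  simp only [mem_inter_iff, mem_preimage, mem_compl_iff, mem_singleton_iff]
  refine and_congr_right fun hy => not_congr ⟨fun h => ?_, fun h => ?_⟩
  · rw [← e.right_inv hy, show e.symm y = x from h]
  · rw [h, e.left_inv hx]

theorem ChartedSpace.map_chartAt_symm_nhdsNE {H M : Type*} [TopologicalSpace H]
    [TopologicalSpace M] [ChartedSpace H M] (p : M) :
    map (chartAt H p).symm (𝓝[≠] (chartAt H p p)) = 𝓝[≠] p := by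
  rw [(chartAt H p).symm.map_nhdsNE_eq (mem_chart_target H p), (chartAt H p).left_inv
    (mem_chart_source H p)]

theorem ChartedSpace.nhdsNE_neBot (H : Type*) {M : Type*} [TopologicalSpace H]
    [∀ y : H, (𝓝[≠] y).NeBot] [TopologicalSpace M] [ChartedSpace H M] (p : M) :
    (𝓝[≠] p).NeBot :=
  ChartedSpace.map_chartAt_symm_nhdsNE (H := H) p ▸ map_neBot

theorem ChartedSpace.exists_isPreconnected_mem_nhdsNE {E M : Type*} [NormedAddCommGroup E]
    [NormedSpace ℝ E] (hE : 1 < Module.rank ℝ E) [TopologicalSpace M] [ChartedSpace E M]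
    (p : M) {s : Set M} (hs : s ∈ 𝓝[≠] p) : ∃ t ∈ 𝓝[≠] p, t ⊆ s ∧ IsPreconnected t := by
  set e := chartAt E p
  have hmap := ChartedSpace.map_chartAt_symm_nhdsNE (H := E) p
  have hbasis := nhdsWithin_hasBasis (nhds_basis_ball (x := e p)) {e p}ᶜ
  have hs' : e.symm ⁻¹' s ∈ 𝓝[≠] (e p) := by rwa [← mem_map, hmap]
  obtain ⟨r, hr, hrs⟩ := hbasis.mem_iff.1 <| inter_mem hs'
    (mem_nhdsWithin_of_mem_nhds (e.open_target.mem_nhds (mem_chart_target E p)))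
  exact ⟨e.symm '' (ball (e p) r \ {e p}), hmap ▸ image_mem_map (hbasis.mem_of_mem hr),
    image_subset_iff.2 fun y hy => (hrs hy).1,
    (isPreconnected_ball_diff_singleton hE _ _).image _
      (e.continuousOn_symm.mono fun y hy => (hrs hy).2)⟩

theorem comap_subtypeVal_nhds_eq_comap_nhdsNE {X : Type*} [TopologicalSpace X] {S : Set X}
    {p : X} (hpS : p ∉ S) : comap ((↑) : S → X) (𝓝 p) = comap (↑) (𝓝[≠] p) := by
  refine le_antisymm ?_ (comap_mono nhdsWithin_le_nhds)
  rw [← comap_nhdsWithin_range, Subtype.range_coe]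
  exact comap_mono (nhdsWithin_mono p fun x hx hxp => hpS (hxp ▸ hx))

theorem exists_isPreconnected_mem_comap_subtypeVal_nhds {X : Type*} [TopologicalSpace X]
    {S : Set X} {p : X} (hpS : p ∉ S) (hS : S ∈ 𝓝[≠] p)
    (hX : ∀ s ∈ 𝓝[≠] p, ∃ t ∈ 𝓝[≠] p, t ⊆ s ∧ IsPreconnected t) {s : Set S}
    (hs : s ∈ comap (↑) (𝓝 p)) : ∃ t ∈ comap (↑) (𝓝 p), t ⊆ s ∧ IsPreconnected t := by
  rw [comap_subtypeVal_nhds_eq_comap_nhdsNE hpS] at hs ⊢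
  obtain ⟨u, hu, hus⟩ := hs
  obtain ⟨t, ht, htu, htc⟩ := hX _ (inter_mem hu hS)
  refine ⟨(↑) ⁻¹' t, preimage_mem_comap ht, fun x hx => hus (htu hx).1, ?_⟩
  rwa [← IsInducing.subtypeVal.isPreconnected_image, Subtype.image_preimage_coe,
    inter_eq_right.2 fun x hx => (htu hx).2]

theorem comap_subtypeVal_nhds_le_cocompact {X : Type*} [TopologicalSpace X] [T2Space X]
    {S : Set X} {p : X} (hpS : p ∉ S) : comap ((↑) : S → X) (𝓝 p) ≤ cocompact S := by
  refine hasBasis_cocompact.ge_iff.2 fun K hK => ⟨(Subtype.val '' K)ᶜ, ?_, ?_⟩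
  · exact (hK.image continuous_subtype_val).isClosed.compl_mem_nhds
      fun ⟨x, _, hx⟩ => hpS (hx ▸ x.2)
  · exact fun x hx hxK => hx ⟨x, hxK, rfl⟩

theorem tendsto_subtypeVal_cocompact_nhdsSet {Y : Type*} [TopologicalSpace Y] [CompactSpace Y]
    (Q : Set Y) : Tendsto ((↑) : ↥Qᶜ → Y) (cocompact _) (𝓝ˢ Q) := by
  intro U hU
  obtain ⟨V, hVo, hQV, hVU⟩ := mem_nhdsSet_iff_exists.1 hU
  refine mem_cocompact.2 ⟨((↑) : ↥Qᶜ → Y) ⁻¹' Vᶜ, ?_, fun x hx => hVU (of_not_not hx)⟩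
  exact IsInducing.subtypeVal.isCompact_preimage' hVo.isClosed_compl.isCompact
    (by rw [Subtype.range_coe]; exact compl_subset_compl.2 hQV)

theorem proper_map_extends_over_punctures_general
    (M N : Type*) [TopologicalSpace M] [TopologicalSpace N]
    [T2Space M] [T2Space N] [CompactSpace N]
    [ChartedSpace (EuclideanSpace ℝ (Fin 2)) M]
    (P : Set M) (Q : Set N) (hP : P.Finite) (hQ : Q.Finite)
    (F : {x : M // x ∉ P} → {y : N // y ∉ Q})
    (hFc : Continuous F)
    (hFp : ∀ K : Set {y : N // y ∉ Q}, IsCompact K → IsCompact (F ⁻¹' K)) :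
    ∃ G : M → N, Continuous G ∧ (∀ x : {x : M // x ∉ P}, G ↑x = ↑(F x)) ∧
      ∀ x ∈ P, G x ∈ Q := by
  have hrank : 1 < Module.rank ℝ (EuclideanSpace ℝ (Fin 2)) := by
    rw [← Module.finrank_eq_rank, finrank_euclideanSpace_fin]
    exact_mod_cast one_lt_two
  have := ChartedSpace.nhdsNE_neBot (EuclideanSpace ℝ (Fin 2)) (M := M)
  have hPc : ∀ p : M, Pᶜ ∈ 𝓝[≠] p := fun p => by
    simpa [compl_eq_univ_sdiff] using nhdsNE_of_nhdsNE_sdiff_finite univ_mem hP.to_subtype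
  have hdense : Dense Pᶜ := by simpa [compl_eq_univ_sdiff] using dense_univ.sdiff_finite hP
  set f : ↥Pᶜ → N := fun x => F x
  have hf : Continuous f := continuous_subtype_val.comp hFc
  have hlim : ∀ p ∈ P, ∃ q ∈ Q, Tendsto f (comap (↑) (𝓝 p)) (𝓝 q) := by
    intro p hp
    have := hdense.isDenseInducing_val.comap_nhds_neBot p
    have hescape : Tendsto f (comap (↑) (𝓝 p)) (𝓝ˢ Q) :=
      (tendsto_subtypeVal_cocompact_nhdsSet Q).comp
        ((CocompactMap.tendsto_of_forall_preimage hFp).mono_left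
          (comap_subtypeVal_nhds_le_cocompact (not_not.2 hp)))
    exact exists_tendsto_nhds_of_tendsto_nhdsSet hf
      (fun _ => exists_isPreconnected_mem_comap_subtypeVal_nhds (not_not.2 hp) (hPc p)
        fun _ => ChartedSpace.exists_isPreconnected_mem_nhdsNE hrank p) hQ hescape
  choose q hqQ hq using hlim
  refine ⟨hdense.extend f, hdense.continuous_extend fun p => ?_, hdense.extend_eq hf,
    fun p hp => hdense.extend_eq_of_tendsto (hq p hp) ▸ hqQ p hp⟩
  by_cases hp : p ∈ P
  · exact ⟨q p hp, hq p hp⟩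
  · exact ⟨f ⟨p, hp⟩, IsInducing.subtypeVal.nhds_eq_comap (⟨p, hp⟩ : ↥Pᶜ) ▸ hf.tendsto _⟩

/-- A continuous proper map `F : M∖P → N∖Q` between the complements of finite sets of
points in compact Hausdorff topological 2-manifolds extends continuously over the
punctures, sending punctures to punctures. -/
theorem proper_map_extends_over_punctures
    (M N : Type*) [TopologicalSpace M] [TopologicalSpace N]
    [T2Space M] [T2Space N] [CompactSpace M] [CompactSpace N]
    [ChartedSpace (EuclideanSpace ℝ (Fin 2)) M]
    [ChartedSpace (EuclideanSpace ℝ (Fin 2)) N]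
    (P : Set M) (Q : Set N) (hP : P.Finite) (hQ : Q.Finite)
    (F : {x : M // x ∉ P} → {y : N // y ∉ Q})
    (hFc : Continuous F)
    (hFp : ∀ K : Set {y : N // y ∉ Q}, IsCompact K → IsCompact (F ⁻¹' K)) :
    ∃ G : M → N, Continuous G ∧ (∀ x : {x : M // x ∉ P}, G ↑x = ↑(F x)) ∧
      ∀ x ∈ P, G x ∈ Q :=
  proper_map_extends_over_punctures_general M N P Q hP hQ F hFc hFp
end
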